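/- arXiv:2505.12825 — 12 statements merged into one kernel-verified Lean document; each statement's English description precedes it below -/
import Mathlib

section
/- Let m ≥ 2 be an integer and x_1 < x_2 < … < x_m real numbers. Then the expected isolation depth satisfies D(1, m, m) = Σ_{j=2}^{m} (x_j − x_{j−1})/(x_m − x_{j−1}) and D(1, m, 1) = Σ_{j=2}^{m} (x_j − x_{j−1})/(x_j − x_1). (Closed form of the expected iForest depth of the rightmost and the leftmost data point.) -/
open Finset

/-- **Closed form of the expected iForest depth of the rightmost and the leftmost point.**
Given sorted reals `x 1 < x 2 < … < x m` and the expected isolation depth `D ℓ r i`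
(characterized by `D i i i = 0` and the random-split recurrence), we have
`D 1 m m = Σ_{j=2}^{m} (x j − x (j−1))/(x m − x (j−1))` and
`D 1 m 1 = Σ_{j=2}^{m} (x j − x (j−1))/(x j − x 1)`. -/
theorem expected_depth_extreme_points
    (m : ℕ) (hm : 2 ≤ m) (x : ℕ → ℝ)
    (hx : ∀ i, 1 ≤ i → i < m → x i < x (i + 1))
    (D : ℕ → ℕ → ℕ → ℝ)
    (hD0 : ∀ i, 1 ≤ i → i ≤ m → D i i i = 0)
    (hDrec : ∀ ℓ r i, 1 ≤ ℓ → ℓ ≤ i → i ≤ r → r ≤ m → ℓ < r →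
      D ℓ r i = 1 + ∑ j ∈ Icc (ℓ + 1) i, (x j - x (j - 1)) / (x r - x ℓ) * D j r i
        + ∑ j ∈ Icc i (r - 1), (x (j + 1) - x j) / (x r - x ℓ) * D ℓ j i) :
    D 1 m m = ∑ j ∈ Icc 2 m, (x j - x (j - 1)) / (x m - x (j - 1)) ∧
    D 1 m 1 = ∑ j ∈ Icc 2 m, (x j - x (j - 1)) / (x j - x 1) := by
  -- monotonicity
  have hlt : ∀ a b, 1 ≤ a → a < b → b ≤ m → x a < x b := by
    intro a b ha hab hbm
    induction b with
    | zero => omega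
    | succ n ih =>
      rcases Nat.lt_or_ge a n with h | h
      · exact lt_trans (ih (by omega) (by omega)) (hx n (by omega) (by omega))
      · have : a = n := by omega
        subst this
        exact hx a ha (by omega)
  have hne : ∀ a b, 1 ≤ a → a < b → b ≤ m → x b - x a ≠ 0 := by
    intro a b ha hab hbm
    exact ne_of_gt (sub_pos.2 (hlt a b ha hab hbm))
  -- key identity for rightmost point
  have keyA : ∀ ℓ, 1 ≤ ℓ → ℓ < m →
      ∑ j ∈ Icc (ℓ+1) m, (x j - x (j-1)) * D j m m = (x m - x ℓ) * (D ℓ m m - 1) := by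
    intro ℓ h1 h2
    have hrec := hDrec ℓ m m h1 (by omega) le_rfl le_rfl h2
    rw [show Icc m (m-1) = (∅ : Finset ℕ) from Icc_eq_empty (by omega), sum_empty,
      add_zero] at hrec
    have hc : x m - x ℓ ≠ 0 := hne ℓ m h1 h2 le_rfl
    have hsum : ∑ j ∈ Icc (ℓ+1) m, (x j - x (j-1)) / (x m - x ℓ) * D j m m
        = (∑ j ∈ Icc (ℓ+1) m, (x j - x (j-1)) * D j m m) / (x m - x ℓ) := by
      rw [sum_div]; exact sum_congr rfl (fun j _ => by ring)
    rw [hsum] at hrec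
    rw [hrec]; field_simp
    ring
  -- key identity for leftmost point
  have keyB : ∀ r, 1 < r → r ≤ m →
      ∑ j ∈ Icc 1 (r-1), (x (j+1) - x j) * D 1 j 1 = (x r - x 1) * (D 1 r 1 - 1) := by
    intro r h1 h2
    have hrec := hDrec 1 r 1 le_rfl le_rfl (by omega) h2 h1
    rw [show Icc (1+1) 1 = (∅ : Finset ℕ) from Icc_eq_empty (by omega), sum_empty,
      add_zero] at hrec
    have hc : x r - x 1 ≠ 0 := hne 1 r le_rfl h1 h2
    have hsum : ∑ j ∈ Icc 1 (r-1), (x (j+1) - x j) / (x r - x 1) * D 1 j 1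
        = (∑ j ∈ Icc 1 (r-1), (x (j+1) - x j) * D 1 j 1) / (x r - x 1) := by
      rw [sum_div]; exact sum_congr rfl (fun j _ => by ring)
    rw [hsum] at hrec
    rw [hrec]; field_simp
    ring
  -- closed form for the rightmost point, downward induction
  have claimA : ∀ k ℓ, 1 ≤ ℓ → ℓ + k = m →
      D ℓ m m = ∑ j ∈ Icc (ℓ+1) m, (x j - x (j-1)) / (x m - x (j-1)) := by
    intro k
    induction k with
    | zero =>
      intro ℓ h1 h2
      have hlm : ℓ = m := by omega
      subst hlm
      rw [hD0 ℓ h1 le_rfl, Icc_eq_empty (by omega), sum_empty]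
    | succ k ih =>
      intro ℓ h1 h2
      have hℓm : ℓ < m := by omega
      have hc : x m - x ℓ ≠ 0 := hne ℓ m h1 hℓm le_rfl
      have hA := keyA ℓ h1 hℓm
      rw [← Finset.insert_Icc_add_one_left_eq_Icc (show ℓ+1 ≤ m by omega),
        sum_insert (by simp)] at hA
      simp only [Nat.add_sub_cancel] at hA
      have htail : ∑ j ∈ Icc (ℓ+1+1) m, (x j - x (j-1)) * D j m m
          = (x m - x (ℓ+1)) * (D (ℓ+1) m m - 1) := by
        rcases eq_or_lt_of_le (show ℓ+1 ≤ m by omega) with h | h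
        · rw [← h, Icc_eq_empty (by omega), sum_empty, hD0 (ℓ+1) (by omega) (by omega)]
          ring
        · exact keyA (ℓ+1) (by omega) h
      rw [htail] at hA
      have hD' := ih (ℓ+1) (by omega) (by omega)
      rw [← Finset.insert_Icc_add_one_left_eq_Icc (show ℓ+1 ≤ m by omega),
        sum_insert (by simp)]
      simp only [Nat.add_sub_cancel]
      rw [← hD']
      field_simp
      linear_combination -hA
  -- closed form for the leftmost point, upward induction
  have claimB : ∀ r, 1 ≤ r → r ≤ m →
      D 1 r 1 = ∑ j ∈ Icc 2 r, (x j - x (j-1)) / (x j - x 1) := by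
    intro r hr
    induction r, hr using Nat.le_induction with
    | base =>
      intro h
      rw [hD0 1 le_rfl (by omega), Icc_eq_empty (by omega), sum_empty]
    | succ r hr ih =>
      intro h
      obtain ⟨t, rfl⟩ : ∃ t, r = t + 1 := ⟨r - 1, by omega⟩
      have hc : x (t+1+1) - x 1 ≠ 0 := hne 1 (t+1+1) le_rfl (by omega) (by omega)
      have hB := keyB (t+1+1) (by omega) (by omega)
      simp only [Nat.add_sub_cancel] at hB
      rw [← Finset.insert_Icc_right_eq_Icc_add_one (show 1 ≤ t+1 by omega),
        sum_insert (by simp)] at hB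
      have htail : ∑ j ∈ Icc 1 t, (x (j+1) - x j) * D 1 j 1
          = (x (t+1) - x 1) * (D 1 (t+1) 1 - 1) := by
        rcases Nat.eq_zero_or_pos t with h0 | h0
        · subst h0
          rw [Icc_eq_empty (by omega), sum_empty, hD0 1 le_rfl (by omega)]
          ring
        · have hk := keyB (t+1) (by omega) (by omega)
          simpa using hk
      rw [htail] at hB
      have hD' := ih (by omega)
      rw [← Finset.insert_Icc_right_eq_Icc_add_one (show 2 ≤ t+1+1 by omega),
        sum_insert (by simp)]
      simp only [Nat.add_sub_cancel]
      rw [← hD']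
      field_simp
      linear_combination -hB
  constructor
  · have h := claimA (m-1) 1 le_rfl (by omega)
    simpa using h
  · exact claimB m (by omega) le_rfl
end

section
/- Let n ≥ 3 be an integer, x_1 < x_2 < … < x_n real numbers, and 1 < i < n. Then the expected isolation depth decomposes as D(1, n, i) = D(1, i, i) + D(i, n, i). -/
open Finset

/-- **Decomposition of the expected iForest depth.**
Given sorted reals `x 1 < … < x n` (`n ≥ 3`) and the expected isolation depth `D ℓ r i`
(characterized by `D i i i = 0` and the random-split recurrence), for any interior index
`1 < i < n` we have `D 1 n i = D 1 i i + D i n i`. -/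
theorem expected_depth_decomposition
    (n : ℕ) (hn : 3 ≤ n) (x : ℕ → ℝ)
    (hx : ∀ i, 1 ≤ i → i < n → x i < x (i + 1))
    (D : ℕ → ℕ → ℕ → ℝ)
    (hD0 : ∀ i, 1 ≤ i → i ≤ n → D i i i = 0)
    (hDrec : ∀ ℓ r i, 1 ≤ ℓ → ℓ ≤ i → i ≤ r → r ≤ n → ℓ < r →
      D ℓ r i = 1 + ∑ j ∈ Icc (ℓ + 1) i, (x j - x (j - 1)) / (x r - x ℓ) * D j r i
        + ∑ j ∈ Icc i (r - 1), (x (j + 1) - x j) / (x r - x ℓ) * D ℓ j i)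
    (i : ℕ) (hi1 : 1 < i) (hin : i < n) :
    D 1 n i = D 1 i i + D i n i := by
  -- strict monotonicity on [1, n]
  have hmono : ∀ a b, 1 ≤ a → a < b → b ≤ n → x a < x b := by
    intro a b ha
    induction b with
    | zero => omega
    | succ b ihb =>
      intro hab hbn
      rcases Nat.lt_succ_iff_lt_or_eq.mp hab with h | rfl
      · exact lt_trans (ihb h (by omega)) (hx b (by omega) (by omega))
      · exact hx a ha (by omega)
  -- telescoping sums
  have tele1 : ∀ a b : ℕ, a ≤ b → ∑ j ∈ Icc (a + 1) b, (x j - x (j - 1)) = x b - x a := by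
    intro a b hab
    induction b, hab using Nat.le_induction with
    | base => simp
    | succ b hb ihb =>
      rw [Finset.sum_Icc_succ_top (by omega), ihb]
      simp only [Nat.add_sub_cancel]
      ring
  have tele2 : ∀ a b : ℕ, a ≤ b → ∑ j ∈ Icc a b, (x (j + 1) - x j) = x (b + 1) - x a := by
    intro a b hab
    induction b, hab using Nat.le_induction with
    | base => simp
    | succ b hb ihb =>
      rw [Finset.sum_Icc_succ_top (by omega), ihb]
      ring
  have key : ∀ m ℓ r, r - ℓ ≤ m → 1 ≤ ℓ → ℓ ≤ i → i ≤ r → r ≤ n →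
      D ℓ r i = D ℓ i i + D i r i := by
    intro m
    induction m with
    | zero =>
      intro ℓ r hm h1 hli hir hrn
      have hℓ : ℓ = i := by omega
      have hr : r = i := by omega
      rw [hℓ, hr, hD0 i (by omega) (by omega)]; ring
    | succ m ih =>
      intro ℓ r hm h1 hli hir hrn
      rcases eq_or_lt_of_le hli with rfl | hli'
      · rw [hD0 ℓ h1 (by omega)]; ring
      rcases eq_or_lt_of_le hir with rfl | hir'
      · rw [hD0 i (by omega) (by omega)]; ring
      -- now ℓ < i < r
      have hxℓi : x ℓ < x i := hmono ℓ i h1 hli' (by omega)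
      have hxir : x i < x r := hmono i r (by omega) hir' hrn
      have hxℓr : x ℓ < x r := hxℓi.trans hxir
      have hc : x r - x ℓ ≠ 0 := sub_ne_zero.mpr hxℓr.ne'
      have hci : x i - x ℓ ≠ 0 := sub_ne_zero.mpr hxℓi.ne'
      have hcr : x r - x i ≠ 0 := sub_ne_zero.mpr hxir.ne'
      -- recurrence for D ℓ i i
      have hA := hDrec ℓ i i h1 hli'.le le_rfl (by omega) hli'
      rw [Finset.Icc_eq_empty (by omega : ¬ i ≤ i - 1), Finset.sum_empty] at hA
      have hA1 : ∑ j ∈ Icc (ℓ + 1) i, (x j - x (j - 1)) / (x i - x ℓ) * D j i i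
          = (∑ j ∈ Icc (ℓ + 1) i, (x j - x (j - 1)) * D j i i) / (x i - x ℓ) := by
        rw [Finset.sum_div]; exact Finset.sum_congr rfl fun j _ => by ring
      rw [hA1] at hA
      have hT1 : ∑ j ∈ Icc (ℓ + 1) i, (x j - x (j - 1)) * D j i i
          = (x i - x ℓ) * (D ℓ i i - 1) := by
        field_simp at hA
        linear_combination -hA
      -- recurrence for D i r i
      have hB := hDrec i r i (by omega) le_rfl hir'.le hrn hir'
      rw [Finset.Icc_eq_empty (by omega : ¬ i + 1 ≤ i), Finset.sum_empty] at hB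
      have hB1 : ∑ j ∈ Icc i (r - 1), (x (j + 1) - x j) / (x r - x i) * D i j i
          = (∑ j ∈ Icc i (r - 1), (x (j + 1) - x j) * D i j i) / (x r - x i) := by
        rw [Finset.sum_div]; exact Finset.sum_congr rfl fun j _ => by ring
      rw [hB1] at hB
      have hT2 : ∑ j ∈ Icc i (r - 1), (x (j + 1) - x j) * D i j i
          = (x r - x i) * (D i r i - 1) := by
        field_simp at hB
        linear_combination -hB
      -- main recurrence
      have hM := hDrec ℓ r i h1 hli'.le hir'.le hrn (by omega)
      have hS1 : ∑ j ∈ Icc (ℓ + 1) i, (x j - x (j - 1)) / (x r - x ℓ) * D j r i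
          = ((x i - x ℓ) * (D ℓ i i - 1) + (x i - x ℓ) * D i r i) / (x r - x ℓ) := by
        have e1 : ∀ j ∈ Icc (ℓ + 1) i, (x j - x (j - 1)) / (x r - x ℓ) * D j r i
            = ((x j - x (j - 1)) * D j i i + (x j - x (j - 1)) * D i r i) / (x r - x ℓ) := by
          intro j hj
          simp only [mem_Icc] at hj
          rw [ih j r (by omega) (by omega) hj.2 hir'.le hrn]
          ring
        rw [Finset.sum_congr rfl e1, ← Finset.sum_div, Finset.sum_add_distrib,
          ← Finset.sum_mul, tele1 ℓ i hli'.le, hT1]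
      have hS2 : ∑ j ∈ Icc i (r - 1), (x (j + 1) - x j) / (x r - x ℓ) * D ℓ j i
          = ((x r - x i) * D ℓ i i + (x r - x i) * (D i r i - 1)) / (x r - x ℓ) := by
        have e2 : ∀ j ∈ Icc i (r - 1), (x (j + 1) - x j) / (x r - x ℓ) * D ℓ j i
            = ((x (j + 1) - x j) * D ℓ i i + (x (j + 1) - x j) * D i j i) / (x r - x ℓ) := by
          intro j hj
          simp only [mem_Icc] at hj
          rw [ih ℓ j (by omega) h1 hli'.le hj.1 (by omega)]
          ring
        have htel : ∑ j ∈ Icc i (r - 1), (x (j + 1) - x j) = x r - x i := by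
          have := tele2 i (r - 1) (by omega)
          rwa [show r - 1 + 1 = r by omega] at this
        rw [Finset.sum_congr rfl e2, ← Finset.sum_div, Finset.sum_add_distrib,
          ← Finset.sum_mul, htel, hT2]
      rw [hS1, hS2] at hM
      rw [hM]
      field_simp
      ring
  exact key n 1 n (by omega) le_rfl (by omega) (by omega) le_rfl
end

section
/- Let n > 2 be an integer and x_1 < x_2 < … < x_n real numbers. Then for every 1 ≤ i ≤ n, the expected isolation depth admits the closed form D(1, n, i) = Σ_{j=2}^{i} (x_j − x_{j−1})/(x_i − x_{j−1}) + Σ_{j=i+1}^{n} (x_j − x_{j−1})/(x_j − x_i). -/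
open Finset

/-- Reindexing a sum over `Icc (a+1) b` as a sum over `Ico a b`. -/
lemma shift_sum_aux (a b : ℕ) (f : ℕ → ℝ) :
    ∑ j ∈ Icc (a + 1) b, f j = ∑ j ∈ Ico a b, f (j + 1) := by
  rw [← Finset.Ico_add_one_right_eq_Icc, Finset.sum_Ico_add' f a b 1]

/-- **Closed form of the expected iForest depth of any data point.**
Given sorted reals `x 1 < … < x n` (`n > 2`) and the expected isolation depth `D ℓ r i`
(characterized by `D i i i = 0` and the random-split recurrence), for every `1 ≤ i ≤ n`,
`D 1 n i = Σ_{j=2}^{i} (x j − x (j−1))/(x i − x (j−1)) + Σ_{j=i+1}^{n} (x j − x (j−1))/(x j − x i)`. -/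
theorem expected_depth_closed_form
    (n : ℕ) (hn : 2 < n) (x : ℕ → ℝ)
    (hx : ∀ i, 1 ≤ i → i < n → x i < x (i + 1))
    (D : ℕ → ℕ → ℕ → ℝ)
    (hD0 : ∀ i, 1 ≤ i → i ≤ n → D i i i = 0)
    (hDrec : ∀ ℓ r i, 1 ≤ ℓ → ℓ ≤ i → i ≤ r → r ≤ n → ℓ < r →
      D ℓ r i = 1 + ∑ j ∈ Icc (ℓ + 1) i, (x j - x (j - 1)) / (x r - x ℓ) * D j r i
        + ∑ j ∈ Icc i (r - 1), (x (j + 1) - x j) / (x r - x ℓ) * D ℓ j i)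
    (i : ℕ) (hi1 : 1 ≤ i) (hin : i ≤ n) :
    D 1 n i = ∑ j ∈ Icc 2 i, (x j - x (j - 1)) / (x i - x (j - 1))
        + ∑ j ∈ Icc (i + 1) n, (x j - x (j - 1)) / (x j - x i) := by
  -- strict monotonicity of `x` on `[1, n]`
  have mono : ∀ a b, 1 ≤ a → a < b → b ≤ n → x a < x b := by
    intro a b ha hab hbn
    induction b, hab using Nat.le_induction with
    | base => exact hx a ha (by omega)
    | succ b hb ih =>
      exact lt_trans (ih (by omega)) (hx b (by omega) (by omega))
  -- telescoping sums
  have tele : ∀ a b : ℕ, a ≤ b → ∑ j ∈ Ico a b, (x (j + 1) - x j) = x b - x a := by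
    intro a b hab
    induction b, hab using Nat.le_induction with
    | base => simp
    | succ b hb ih =>
      rw [Finset.sum_Ico_succ_top hb, ih]
      ring
  -- main induction on the width of the interval
  have key : ∀ m ℓ r i, r ≤ ℓ + m → 1 ≤ ℓ → ℓ ≤ i → i ≤ r → r ≤ n →
      D ℓ r i = (∑ j ∈ Ico ℓ i, (x (j + 1) - x j) / (x i - x j))
        + ∑ j ∈ Ico i r, (x (j + 1) - x j) / (x (j + 1) - x i) := by
    intro m
    induction m with
    | zero =>
      intro ℓ r i hm h1 h2 h3 h4
      have hlr : ℓ = r := by omega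
      have hli : ℓ = i := by omega
      subst hli
      subst hlr
      simp [hD0 ℓ h1 h4]
    | succ m ih =>
      intro ℓ r i hm h1 h2 h3 h4
      rcases eq_or_lt_of_le (h2.trans h3) with heq | hlr
      · have hli : ℓ = i := by omega
        subst hli
        rw [← heq]
        simp [hD0 ℓ h1 (heq ▸ h4)]
      · rw [hDrec ℓ r i h1 h2 h3 h4 hlr]
        have hre1 : ∑ j ∈ Icc (ℓ + 1) i, (x j - x (j - 1)) / (x r - x ℓ) * D j r i
            = ∑ j ∈ Ico ℓ i, (x (j + 1) - x j) / (x r - x ℓ) *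
              ((∑ k ∈ Ico (j + 1) i, (x (k + 1) - x k) / (x i - x k))
                + ∑ k ∈ Ico i r, (x (k + 1) - x k) / (x (k + 1) - x i)) := by
          rw [shift_sum_aux ℓ i (fun j => (x j - x (j - 1)) / (x r - x ℓ) * D j r i)]
          refine Finset.sum_congr rfl fun j hj => ?_
          rw [Finset.mem_Ico] at hj
          simp only [Nat.add_sub_cancel]
          rw [ih (j + 1) r i (by omega) (by omega) (by omega) h3 h4]
        have hre2 : ∑ j ∈ Icc i (r - 1), (x (j + 1) - x j) / (x r - x ℓ) * D ℓ j i
            = ∑ j ∈ Ico i r, (x (j + 1) - x j) / (x r - x ℓ) *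
              ((∑ k ∈ Ico ℓ i, (x (k + 1) - x k) / (x i - x k))
                + ∑ k ∈ Ico i j, (x (k + 1) - x k) / (x (k + 1) - x i)) := by
          have hIcc : Icc i (r - 1) = Ico i r := by
            rw [← Finset.Ico_add_one_right_eq_Icc]
            congr 1
            omega
          rw [hIcc]
          refine Finset.sum_congr rfl fun j hj => ?_
          rw [Finset.mem_Ico] at hj
          rw [ih ℓ j i (by omega) h1 h2 hj.1 (by omega)]
        rw [hre1, hre2]
        have hL : (0:ℝ) < x r - x ℓ := sub_pos.mpr (mono ℓ r h1 hlr h4)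
        -- the four pieces after expanding products
        set A : ℝ := ∑ k ∈ Ico ℓ i, (x (k + 1) - x k) / (x i - x k) with hA
        set B : ℝ := ∑ k ∈ Ico i r, (x (k + 1) - x k) / (x (k + 1) - x i) with hB
        have t1 : ∑ j ∈ Ico ℓ i, (x (j + 1) - x j) *
            (∑ k ∈ Ico (j + 1) i, (x (k + 1) - x k) / (x i - x k))
            = (x i - x ℓ) * A - (x i - x ℓ) := by
          simp only [Finset.mul_sum]
          rw [Finset.sum_Ico_Ico_comm']
          have : ∀ k ∈ Ico ℓ i,
              (∑ j ∈ Ico ℓ k, (x (j + 1) - x j) * ((x (k + 1) - x k) / (x i - x k)))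
              = (x i - x ℓ) * ((x (k + 1) - x k) / (x i - x k)) - (x (k + 1) - x k) := by
            intro k hk
            rw [Finset.mem_Ico] at hk
            rw [← Finset.sum_mul, tele ℓ k hk.1]
            have hne : x i - x k ≠ 0 :=
              sub_ne_zero.mpr (ne_of_gt (mono k i (by omega) hk.2 (by omega)))
            field_simp
            ring
          rw [Finset.sum_congr rfl this, Finset.sum_sub_distrib, ← Finset.mul_sum,
            tele ℓ i h2, ← hA]
        have t2 : ∑ j ∈ Ico ℓ i, (x (j + 1) - x j) * B = (x i - x ℓ) * B := by
          rw [← Finset.sum_mul, tele ℓ i h2]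
        have t3 : ∑ j ∈ Ico i r, (x (j + 1) - x j) * A = (x r - x i) * A := by
          rw [← Finset.sum_mul, tele i r h3]
        have t4 : ∑ j ∈ Ico i r, (x (j + 1) - x j) *
            (∑ k ∈ Ico i j, (x (k + 1) - x k) / (x (k + 1) - x i))
            = (x r - x i) * B - (x r - x i) := by
          simp only [Finset.mul_sum]
          rw [← Finset.sum_Ico_Ico_comm' i r
            (fun k j => (x (j + 1) - x j) * ((x (k + 1) - x k) / (x (k + 1) - x i)))]
          have : ∀ k ∈ Ico i r,
              (∑ j ∈ Ico (k + 1) r, (x (j + 1) - x j) * ((x (k + 1) - x k) / (x (k + 1) - x i)))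
              = (x r - x i) * ((x (k + 1) - x k) / (x (k + 1) - x i)) - (x (k + 1) - x k) := by
            intro k hk
            rw [Finset.mem_Ico] at hk
            rw [← Finset.sum_mul, tele (k + 1) r hk.2]
            have hne : x (k + 1) - x i ≠ 0 :=
              sub_ne_zero.mpr (ne_of_gt (mono i (k + 1) (by omega) (by omega) (by omega)))
            field_simp
            ring
          rw [Finset.sum_congr rfl this, Finset.sum_sub_distrib, ← Finset.mul_sum,
            tele i r h3, ← hB]
        have hS : (∑ j ∈ Ico ℓ i, (x (j + 1) - x j) *
              ((∑ k ∈ Ico (j + 1) i, (x (k + 1) - x k) / (x i - x k)) + B))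
            + ∑ j ∈ Ico i r, (x (j + 1) - x j) *
              (A + ∑ k ∈ Ico i j, (x (k + 1) - x k) / (x (k + 1) - x i))
            = (A + B - 1) * (x r - x ℓ) := by
          simp only [mul_add, Finset.sum_add_distrib]
          rw [t1, t2, t3, t4]
          ring
        simp only [div_mul_eq_mul_div, ← Finset.sum_div]
        rw [add_assoc, ← add_div, hS, mul_div_cancel_right₀ _ (ne_of_gt hL)]
        ring
  have h1 : ∑ j ∈ Icc 2 i, (x j - x (j - 1)) / (x i - x (j - 1))
      = ∑ j ∈ Ico 1 i, (x (j + 1) - x j) / (x i - x j) := by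
    rw [shift_sum_aux 1 i (fun j => (x j - x (j - 1)) / (x i - x (j - 1)))]
    simp only [Nat.add_sub_cancel]
  have h2 : ∑ j ∈ Icc (i + 1) n, (x j - x (j - 1)) / (x j - x i)
      = ∑ j ∈ Ico i n, (x (j + 1) - x j) / (x (j + 1) - x i) := by
    rw [shift_sum_aux i n (fun j => (x j - x (j - 1)) / (x j - x i))]
    simp only [Nat.add_sub_cancel]
  rw [h1, h2]
  exact key n 1 n i (by omega) le_rfl hi1 hin le_rfl
end

section
/- Let n ≥ 1 be an integer and x' < x_1 < x_2 < … < x_n real numbers. Let D be the expected isolation depth associated with the points x_1, …, x_n, and let D' be the expected isolation depth associated with the n+1 sorted points y_1 = x', y_{j+1} = x_j (1 ≤ j ≤ n). Then for every 1 ≤ i ≤ n, D'(1, n+1, i+1) = (x_1 − x')/(x_i − x') + D(1, n, i); that is, prepending a point x' below the dataset increases the expected depth of x_i by exactly (x_1 − x')/(x_i − x'). -/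
open Finset

/-- **Prepending a point below the dataset increases the expected depth by `(x 1 − x')/(x i − x')`.**
Let `x'` lie strictly below the sorted points `x 1 < … < x n`, let `D` be the expected
isolation depth for `x 1, …, x n` and `D'` the expected isolation depth for the `n + 1`
sorted points `y 1 = x'`, `y (j+1) = x j`. Then for every `1 ≤ i ≤ n`,
`D' 1 (n+1) (i+1) = (x 1 − x')/(x i − x') + D 1 n i`. -/
theorem expected_depth_prepend_point
    (n : ℕ) (hn : 1 ≤ n) (x : ℕ → ℝ) (x' : ℝ)
    (hx : ∀ i, 1 ≤ i → i < n → x i < x (i + 1)) (hx' : x' < x 1)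
    (y : ℕ → ℝ) (hy1 : y 1 = x') (hy2 : ∀ j, 1 ≤ j → j ≤ n → y (j + 1) = x j)
    (D D' : ℕ → ℕ → ℕ → ℝ)
    (hD0 : ∀ i, 1 ≤ i → i ≤ n → D i i i = 0)
    (hDrec : ∀ ℓ r i, 1 ≤ ℓ → ℓ ≤ i → i ≤ r → r ≤ n → ℓ < r →
      D ℓ r i = 1 + ∑ j ∈ Icc (ℓ + 1) i, (x j - x (j - 1)) / (x r - x ℓ) * D j r i
        + ∑ j ∈ Icc i (r - 1), (x (j + 1) - x j) / (x r - x ℓ) * D ℓ j i)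
    (hD'0 : ∀ i, 1 ≤ i → i ≤ n + 1 → D' i i i = 0)
    (hD'rec : ∀ ℓ r i, 1 ≤ ℓ → ℓ ≤ i → i ≤ r → r ≤ n + 1 → ℓ < r →
      D' ℓ r i = 1 + ∑ j ∈ Icc (ℓ + 1) i, (y j - y (j - 1)) / (y r - y ℓ) * D' j r i
        + ∑ j ∈ Icc i (r - 1), (y (j + 1) - y j) / (y r - y ℓ) * D' ℓ j i) :
    ∀ i, 1 ≤ i → i ≤ n → D' 1 (n + 1) (i + 1) = (x 1 - x') / (x i - x') + D 1 n i := by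
  -- monotonicity facts
  have hxle : ∀ j k, 1 ≤ j → j ≤ k → k ≤ n → x j ≤ x k := by
    intro j k h1 hjk hkn
    induction k with
    | zero => omega
    | succ m ih =>
      rcases eq_or_lt_of_le hjk with h | h
      · rw [h]
      · exact le_trans (ih (by omega) (by omega)) (le_of_lt (hx m (by omega) (by omega)))
  have hxlt : ∀ j k, 1 ≤ j → j < k → k ≤ n → x j < x k := by
    intro j k h1 h hn'
    have h2 := hx (k - 1) (by omega) (by omega)
    have hk : k - 1 + 1 = k := by omega
    rw [hk] at h2
    exact lt_of_le_of_lt (hxle j (k - 1) h1 (by omega) (by omega)) h2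
  have hx'lt : ∀ k, 1 ≤ k → k ≤ n → x' < x k := fun k h1 hk =>
    lt_of_lt_of_le hx' (hxle 1 k le_rfl h1 hk)
  have hyval : ∀ j, 2 ≤ j → j ≤ n + 1 → y j = x (j - 1) := by
    intro j h2 hn1
    have h := hy2 (j - 1) (by omega) (by omega)
    have hj : j - 1 + 1 = j := by omega
    rwa [hj] at h
  -- reindexing helper
  have reindex : ∀ (a b : ℕ) (f : ℕ → ℝ),
      ∑ j ∈ Icc (a + 1) (b + 1), f j = ∑ j ∈ Icc a b, f (j + 1) := by
    intro a b f
    rw [← map_add_right_Icc, Finset.sum_map]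
    simp [addRightEmbedding]
  -- telescoping helper
  have tele : ∀ p a, 1 ≤ a → a + p ≤ n →
      ∑ j ∈ Icc a (a + p - 1), (x (j + 1) - x j) = x (a + p) - x a := by
    intro p
    induction p with
    | zero =>
      intro a h1 h2
      rw [Finset.Icc_eq_empty (by omega), Finset.sum_empty, Nat.add_zero, sub_self]
    | succ p ih =>
      intro a h1 h2
      have h' : a + (p + 1) - 1 = (a + p - 1) + 1 := by omega
      rw [h', Finset.sum_Icc_succ_top (by omega), ih a h1 (by omega)]
      have e1 : a + p - 1 + 1 = a + p := by omega
      have e2 : a + (p + 1) = a + p + 1 := by omega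
      rw [e1, e2]; ring
  -- sum over a constant divided
  have sumdiv : ∀ (c : ℝ) (s : Finset ℕ) (f g : ℕ → ℝ),
      ∑ j ∈ s, f j / c * g j = (∑ j ∈ s, f j * g j) / c := by
    intro c s f g
    rw [Finset.sum_div]
    exact Finset.sum_congr rfl fun j _ => by ring
  -- the shift lemma
  have shift : ∀ d ℓ r i, r - ℓ ≤ d → 1 ≤ ℓ → ℓ ≤ i → i ≤ r → r ≤ n →
      D' (ℓ + 1) (r + 1) (i + 1) = D ℓ r i := by
    intro d
    induction d with
    | zero =>
      intro ℓ r i hd h1 hli hir hrn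
      have h1' : r = ℓ := by omega
      have h2' : i = ℓ := by omega
      rw [h1', h2', hD'0 (ℓ + 1) (by omega) (by omega), hD0 ℓ h1 (by omega)]
    | succ d ih =>
      intro ℓ r i hd h1 hli hir hrn
      by_cases hlr : r = ℓ
      · have h2' : i = ℓ := by omega
        rw [hlr, h2', hD'0 (ℓ + 1) (by omega) (by omega), hD0 ℓ h1 (by omega)]
      · have hlr' : ℓ < r := by omega
        rw [hD'rec (ℓ + 1) (r + 1) (i + 1) (by omega) (by omega) (by omega) (by omega)
              (by omega),
            hDrec ℓ r i h1 hli hir hrn hlr']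
        have e1 : ∑ j ∈ Icc (ℓ + 1 + 1) (i + 1),
              (y j - y (j - 1)) / (y (r + 1) - y (ℓ + 1)) * D' j (r + 1) (i + 1)
            = ∑ j ∈ Icc (ℓ + 1) i, (x j - x (j - 1)) / (x r - x ℓ) * D j r i := by
          rw [reindex]
          refine Finset.sum_congr rfl fun j hj => ?_
          simp only [Finset.mem_Icc] at hj
          rw [Nat.add_sub_cancel, hy2 j (by omega) (by omega),
              hyval j (by omega) (by omega), hy2 r (by omega) (by omega),
              hy2 ℓ (by omega) (by omega),
              ih j r i (by omega) (by omega) (by omega) (by omega) (by omega)]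
        have e2 : ∑ j ∈ Icc (i + 1) (r + 1 - 1),
              (y (j + 1) - y j) / (y (r + 1) - y (ℓ + 1)) * D' (ℓ + 1) j (i + 1)
            = ∑ j ∈ Icc i (r - 1), (x (j + 1) - x j) / (x r - x ℓ) * D ℓ j i := by
          have hr : r + 1 - 1 = (r - 1) + 1 := by omega
          rw [hr, reindex]
          refine Finset.sum_congr rfl fun j hj => ?_
          simp only [Finset.mem_Icc] at hj
          rw [hy2 (j + 1) (by omega) (by omega), hy2 j (by omega) (by omega),
              hy2 r (by omega) (by omega), hy2 ℓ (by omega) (by omega),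
              ih ℓ j i (by omega) (by omega) (by omega) (by omega) (by omega)]
        rw [e1, e2]
  -- the main induction on r
  have main : ∀ r i, 1 ≤ i → i + 1 ≤ r → r ≤ n + 1 →
      D' 1 r (i + 1) = (x 1 - x') / (x i - x') + D 1 (r - 1) i := by
    intro r
    induction r using Nat.strong_induction_on with
    | _ r IH =>
      intro i h1 hir hrn
      by_cases hr2 : r = 2
      · subst hr2
        have hi1 : i = 1 := by omega
        subst hi1
        rw [hD'rec 1 2 2 le_rfl (by omega) le_rfl (by omega) (by omega)]
        rw [show Icc (1 + 1) 2 = {2} from rfl, Finset.sum_singleton,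
            show (2 : ℕ) - 1 = 1 from rfl, Finset.Icc_eq_empty (by omega),
            Finset.sum_empty, hD'0 2 (by omega) (by omega), hD0 1 le_rfl hn,
            div_self (ne_of_gt (sub_pos.mpr hx'))]
        ring
      · have hr3 : 3 ≤ r := by omega
        have hrn' : r - 1 ≤ n := by omega
        have ha : (0 : ℝ) < x (r - 1) - x' := sub_pos.mpr (hx'lt (r - 1) (by omega) hrn')
        have hb : (0 : ℝ) < x (r - 1) - x 1 :=
          sub_pos.mpr (hxlt 1 (r - 1) le_rfl (by omega) hrn')
        have he : (0 : ℝ) < x i - x' := sub_pos.mpr (hx'lt i h1 (by omega))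
        rw [hD'rec 1 r (i + 1) le_rfl (by omega) (by omega) hrn (by omega)]
        -- first sum
        have e1 : ∑ j ∈ Icc (1 + 1) (i + 1), (y j - y (j - 1)) / (y r - y 1) * D' j r (i + 1)
            = (x 1 - x') / (x (r - 1) - x') * D 1 (r - 1) i
              + (∑ j ∈ Icc 2 i, (x j - x (j - 1)) * D j (r - 1) i) / (x (r - 1) - x') := by
          rw [reindex]
          have hins : Icc 1 i = insert 1 (Icc 2 i) := by
            ext k; simp only [Finset.mem_Icc, Finset.mem_insert]; omega
          rw [hins, Finset.sum_insert (by simp)]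
          congr 1
          · have hsh := shift n 1 (r - 1) i (by omega) le_rfl h1 (by omega) hrn'
            rw [show r - 1 + 1 = r from by omega] at hsh
            rw [Nat.add_sub_cancel, hy2 1 le_rfl hn, hyval r (by omega) hrn, hy1, hsh]
          · rw [← sumdiv]
            refine Finset.sum_congr rfl fun j hj => ?_
            simp only [Finset.mem_Icc] at hj
            have hsh := shift n j (r - 1) i (by omega) (by omega) (by omega) (by omega) hrn'
            rw [show r - 1 + 1 = r from by omega] at hsh
            rw [Nat.add_sub_cancel, hy2 j (by omega) (by omega),
                hyval j (by omega) (by omega), hyval r (by omega) hrn, hy1, hsh]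
        -- second sum
        have e2 : ∑ j ∈ Icc (i + 1) (r - 1), (y (j + 1) - y j) / (y r - y 1) * D' 1 j (i + 1)
            = ((x 1 - x') / (x i - x') * (x (r - 1) - x i)
                + ∑ j ∈ Icc i (r - 2), (x (j + 1) - x j) * D 1 j i) / (x (r - 1) - x') := by
          have hre : ∑ j ∈ Icc (i + 1) (r - 1),
                (y (j + 1) - y j) / (y r - y 1) * D' 1 j (i + 1)
              = ∑ j ∈ Icc i (r - 2),
                (y (j + 1 + 1) - y (j + 1)) / (y r - y 1) * D' 1 (j + 1) (i + 1) := by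
            rw [show r - 1 = (r - 2) + 1 from by omega, reindex]
          rw [hre]
          have step : ∀ j ∈ Icc i (r - 2),
              (y (j + 1 + 1) - y (j + 1)) / (y r - y 1) * D' 1 (j + 1) (i + 1)
              = ((x (j + 1) - x j) * ((x 1 - x') / (x i - x'))
                  + (x (j + 1) - x j) * D 1 j i) / (x (r - 1) - x') := by
            intro j hj
            simp only [Finset.mem_Icc] at hj
            have hIH := IH (j + 1) (by omega) i h1 (by omega) (by omega)
            rw [Nat.add_sub_cancel] at hIH
            rw [hy2 (j + 1) (by omega) (by omega), hy2 j (by omega) (by omega),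
                hyval r (by omega) hrn, hy1, hIH]
            ring
          rw [Finset.sum_congr rfl step, ← Finset.sum_div, Finset.sum_add_distrib,
              ← Finset.sum_mul]
          have htel : ∑ j ∈ Icc i (r - 2), (x (j + 1) - x j) = x (r - 1) - x i := by
            have h := tele (r - 1 - i) i h1 (by omega)
            rw [show i + (r - 1 - i) - 1 = r - 2 from by omega,
                show i + (r - 1 - i) = r - 1 from by omega] at h
            exact h
          rw [htel]
          ring
        rw [e1, e2]
        -- expand D 1 (r-1) i
        have hD1 : D 1 (r - 1) i
            = 1 + (∑ j ∈ Icc 2 i, (x j - x (j - 1)) * D j (r - 1) i) / (x (r - 1) - x 1)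
              + (∑ j ∈ Icc i (r - 2), (x (j + 1) - x j) * D 1 j i) / (x (r - 1) - x 1) := by
          rw [hDrec 1 (r - 1) i le_rfl h1 (by omega) hrn' (by omega)]
          rw [show (1 : ℕ) + 1 = 2 from rfl, show r - 1 - 1 = r - 2 from by omega,
              sumdiv, sumdiv]
        rw [hD1]
        generalize (∑ j ∈ Icc 2 i, (x j - x (j - 1)) * D j (r - 1) i) = A
        generalize (∑ j ∈ Icc i (r - 2), (x (j + 1) - x j) * D 1 j i) = B
        field_simp
        ring
  intro i h1 hin
  have h := main (n + 1) i h1 (by omega) le_rfl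
  rwa [Nat.add_sub_cancel] at h
end

section
/- Let n ≥ 4 be an integer and x_1 < x_2 < … < x_n real numbers. Set U = max_{2 ≤ i ≤ n−1} (x_{i+1} − x_i), L = min_{2 ≤ i ≤ n−1} (x_{i+1} − x_i), and κ = U/L. Assume κ ≥ √(n+3) and x_2 − x_1 > U·κ. Then h̄(1) < h̄(j) for every 2 ≤ j ≤ n; that is, the marginal single anomaly x_1 has strictly the smallest expected iForest depth. -/
open Finset

/-- The closed-form expected iForest depth of the `i`-th of the sorted data points
`x 1 < … < x n`:
`h̄(i) = Σ_{j=2}^{i} (x j − x (j−1))/(x i − x (j−1)) + Σ_{j=i+1}^{n} (x j − x (j−1))/(x j − x i)`. -/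
noncomputable def hbar (x : ℕ → ℝ) (n i : ℕ) : ℝ :=
  ∑ j ∈ Finset.Icc 2 i, (x j - x (j - 1)) / (x i - x (j - 1)) +
    ∑ j ∈ Finset.Icc (i + 1) n, (x j - x (j - 1)) / (x j - x i)

lemma log_lb {p q : ℝ} (hp : 0 < p) (hpq : p < q) :
    (q - p) / q ≤ Real.log q - Real.log p := by
  have hq : 0 < q := hp.trans hpq
  have h := Real.log_le_sub_one_of_pos (show 0 < p / q by positivity)
  rw [Real.log_div hp.ne' hq.ne'] at h
  have h2 : p / q - 1 = -((q - p) / q) := by field_simp; ring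
  rw [h2] at h
  linarith

lemma log_ub {p q : ℝ} (hp : 0 < p) (hpq : p < q) :
    Real.log q - Real.log p ≤ (q - p) / p := by
  have hq : 0 < q := hp.trans hpq
  have h := Real.log_le_sub_one_of_pos (show 0 < q / p by positivity)
  rw [Real.log_div hq.ne' hp.ne'] at h
  have h2 : q / p - 1 = (q - p) / p := by field_simp
  rw [h2] at h
  linarith [h]

lemma core_cubic {r : ℝ} (hr2 : 2 < r) :
    1 / r - (1 / (2 * r) - 1 / r ^ 2) ≤ r / (r ^ 2 + r - 5) := by
  have hr0 : 0 < r := by linarith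
  have hden : 0 < r ^ 2 + r - 5 := by nlinarith
  have lhs_eq : 1 / r - (1 / (2 * r) - 1 / r ^ 2) = (r + 2) / (2 * r ^ 2) := by
    field_simp; ring
  rw [lhs_eq, div_le_div_iff₀ (by positivity) hden]
  nlinarith [mul_nonneg (sub_nonneg.mpr hr2.le) (sq_nonneg (r - 1))]

lemma core_frac {r U G W X : ℝ} (hU0 : 0 < U) (hr2 : 2 < r) (hr7 : 7 ≤ r ^ 2)
    (hG : U * r < G) (hW : W ≤ (r ^ 2 - 5) * U) (hW0 : 0 ≤ W) (hX : X = G + W) :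
    r / (r ^ 2 + r - 5) ≤ G / X := by
  have hr0 : 0 < r := by linarith
  have hden : 0 < r ^ 2 + r - 5 := by nlinarith
  have hG0 : 0 < G := by nlinarith
  have hX0 : 0 < X := by rw [hX]; linarith
  rw [div_le_div_iff₀ hden hX0, hX]
  nlinarith [mul_le_mul_of_nonneg_left hW hr0.le,
    mul_le_mul_of_nonneg_left hG.le (by nlinarith : (0:ℝ) ≤ r ^ 2 - 5)]

set_option maxHeartbeats 1600000 in
/-- **iForest detects the marginal single anomaly.**
Let `n ≥ 4`, `x 1 < … < x n`, and let `U` and `L` be the maximum and minimum adjacent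
gaps `x (i+1) − x i` over `2 ≤ i ≤ n − 1`, with density factor `κ = U / L`. If
`κ ≥ √(n + 3)` and `x 2 − x 1 > U·κ`, then `h̄(1) < h̄(j)` for every `2 ≤ j ≤ n`. -/
theorem iforest_detects_marginal_single_anomaly
    (n : ℕ) (hn : 4 ≤ n) (x : ℕ → ℝ)
    (hx : ∀ i, 1 ≤ i → i < n → x i < x (i + 1))
    (U L : ℝ)
    (hU : IsGreatest {d : ℝ | ∃ i, 2 ≤ i ∧ i ≤ n - 1 ∧ d = x (i + 1) - x i} U)
    (hL : IsLeast {d : ℝ | ∃ i, 2 ≤ i ∧ i ≤ n - 1 ∧ d = x (i + 1) - x i} L)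
    (hkappa : Real.sqrt ((n : ℝ) + 3) ≤ U / L)
    (hgap : x 2 - x 1 > U * (U / L)) :
    ∀ j, 2 ≤ j → j ≤ n → hbar x n 1 < hbar x n j := by
  have xlt : ∀ a b, 1 ≤ a → a < b → b ≤ n → x a < x b := by
    intro a b ha hab
    induction b with
    | zero => omega
    | succ m ih =>
      intro hmn
      rcases Nat.lt_or_ge a m with h | h
      · exact (ih h (by omega)).trans (hx m (by omega) (by omega))
      · have : a = m := by omega
        subst this
        exact hx a ha (by omega)
  have xle : ∀ a b, 1 ≤ a → a ≤ b → b ≤ n → x a ≤ x b := by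
    intro a b ha hab hbn
    rcases Nat.lt_or_ge a b with h | h
    · exact (xlt a b ha h hbn).le
    · have : a = b := by omega
      subst this; rfl
  have gapU : ∀ k, 2 ≤ k → k + 1 ≤ n → x (k + 1) - x k ≤ U :=
    fun k h2 hk => hU.2 ⟨k, h2, by omega, rfl⟩
  have gapL : ∀ k, 2 ≤ k → k + 1 ≤ n → L ≤ x (k + 1) - x k :=
    fun k h2 hk => hL.2 ⟨k, h2, by omega, rfl⟩
  have hL0 : 0 < L := by
    obtain ⟨i, hi2, hin, hLeq⟩ := hL.1
    have := xlt i (i + 1) (by omega) (by omega) (by omega)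
    rw [hLeq]; linarith
  have hUL : L ≤ U := hU.2 hL.1
  have hU0 : 0 < U := lt_of_lt_of_le hL0 hUL
  obtain ⟨r, hr⟩ : ∃ t : ℝ, t = U / L := ⟨_, rfl⟩
  rw [← hr] at hkappa
  have hr0 : 0 < r := by rw [hr]; positivity
  have hr2 : 2 < r := by
    have h7 : (7 : ℝ) ≤ (n : ℝ) + 3 := by
      have : (4 : ℝ) ≤ (n : ℝ) := by exact_mod_cast hn
      linarith
    have h2s : (2 : ℝ) < Real.sqrt ((n : ℝ) + 3) := by
      rw [show (2:ℝ) = Real.sqrt 4 by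
        rw [show (4:ℝ) = 2^2 by norm_num, Real.sqrt_sq (by norm_num)]]
      exact Real.sqrt_lt_sqrt (by norm_num) (by linarith)
    linarith [hkappa]
  have hrn : (n : ℝ) + 3 ≤ r ^ 2 := by
    have h0 : (0:ℝ) ≤ (n : ℝ) + 3 := by positivity
    calc (n : ℝ) + 3 = Real.sqrt ((n:ℝ)+3) ^ 2 := (Real.sq_sqrt h0).symm
      _ ≤ r ^ 2 := by
          have := Real.sqrt_nonneg ((n:ℝ)+3)
          nlinarith [hkappa]
  have hr7 : (7 : ℝ) ≤ r ^ 2 := by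
    have : (4 : ℝ) ≤ (n : ℝ) := by exact_mod_cast hn
    linarith
  obtain ⟨G, hGdef⟩ : ∃ t : ℝ, t = x 2 - x 1 := ⟨_, rfl⟩
  have hG : U * r < G := by rw [hGdef, hr]; exact hgap
  have hG0 : 0 < G := by nlinarith
  have hUG : U < G := by nlinarith
  have sumU : ∀ a b, 2 ≤ a → a ≤ b → b ≤ n → x b - x a ≤ ((b : ℝ) - (a : ℝ)) * U := by
    intro a b ha hab
    induction b with
    | zero => omega
    | succ m ih =>
      intro hmn
      rcases Nat.lt_or_ge a (m + 1) with h | h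
      · have h1 := ih (by omega) (by omega)
        have h2 := gapU m (by omega) (by omega)
        push_cast
        push_cast at h1
        nlinarith
      · have : a = m + 1 := by omega
        subst this
        simp
  -- unfold hbar at 1
  have hbar1 : hbar x n 1 = ∑ k ∈ Finset.Ioc 1 n, (x k - x (k - 1)) / (x k - x 1) := by
    rw [hbar, Finset.Icc_eq_empty (by omega), Finset.sum_empty, zero_add,
      show (1 + 1) = 2 from rfl, show Finset.Icc 2 n = Finset.Ioc 1 n from Finset.Icc_add_one_left_eq_Ioc 1 n]
  intro j hj2 hjn
  have hbarj : hbar x n j =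
      (∑ k ∈ Finset.Ioc 1 j, (x k - x (k - 1)) / (x j - x (k - 1))) +
      ∑ k ∈ Finset.Ioc j n, (x k - x (k - 1)) / (x k - x j) := by
    rw [hbar, show Finset.Icc 2 j = Finset.Ioc 1 j from Finset.Icc_add_one_left_eq_Ioc 1 j,
      show Finset.Icc (j + 1) n = Finset.Ioc j n from Finset.Icc_add_one_left_eq_Ioc j n]
  -- tail comparison
  have tail_le : ∑ k ∈ Finset.Ioc j n, (x k - x (k - 1)) / (x k - x 1)
      ≤ ∑ k ∈ Finset.Ioc j n, (x k - x (k - 1)) / (x k - x j) := by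
    apply Finset.sum_le_sum
    intro k hk
    obtain ⟨hk1, hk2⟩ := Finset.mem_Ioc.mp hk
    have hnum : 0 ≤ x k - x (k - 1) := by
      have := xlt (k - 1) k (by omega) (by omega) hk2; linarith
    have h1 : 0 < x k - x j := by
      have := xlt j k (by omega) hk1 hk2; linarith
    have h2 : x k - x j ≤ x k - x 1 := by
      have := xlt 1 j le_rfl (by omega) (by omega); linarith
    exact div_le_div_of_nonneg_left hnum h1 h2
  -- split hbar1 at j
  have split1 : ∑ k ∈ Finset.Ioc 1 n, (x k - x (k - 1)) / (x k - x 1) =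
      (∑ k ∈ Finset.Ioc 1 j, (x k - x (k - 1)) / (x k - x 1)) +
      ∑ k ∈ Finset.Ioc j n, (x k - x (k - 1)) / (x k - x 1) :=
    (Finset.sum_Ioc_consecutive _ (by omega) hjn).symm
  rw [hbar1, hbarj, split1]
  -- reduce to head comparison (strict) + tail, OR j = 2 strict-tail case
  rcases Nat.lt_or_ge j 4 with hj4 | hj4
  · interval_cases j
    · -- j = 2
      have hIoc12 : Finset.Ioc 1 2 = {2} := rfl
      rw [hIoc12, Finset.sum_singleton, Finset.sum_singleton]
      have hstrict : ∑ k ∈ Finset.Ioc 2 n, (x k - x (k - 1)) / (x k - x 1)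
          < ∑ k ∈ Finset.Ioc 2 n, (x k - x (k - 1)) / (x k - x 2) := by
        apply Finset.sum_lt_sum_of_nonempty
        · exact ⟨3, Finset.mem_Ioc.mpr ⟨by omega, by omega⟩⟩
        · intro k hk
          obtain ⟨hk1, hk2⟩ := Finset.mem_Ioc.mp hk
          have hnum : 0 < x k - x (k - 1) := by
            have := xlt (k - 1) k (by omega) (by omega) hk2; linarith
          have h1 : 0 < x k - x 2 := by
            have := xlt 2 k (by omega) hk1 hk2; linarith
          have h2 : x k - x 2 < x k - x 1 := by
            have := xlt 1 2 le_rfl (by omega) (by omega); linarith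
          exact div_lt_div_of_pos_left hnum h1 h2
      linarith
    · -- j = 3
      have hIoc13 : Finset.Ioc 1 3 = {2, 3} := rfl
      rw [hIoc13]
      rw [Finset.sum_insert (by decide), Finset.sum_singleton,
        Finset.sum_insert (by decide), Finset.sum_singleton]
      norm_num
      have e1 : x 2 - x 1 ≠ 0 := by rw [← hGdef]; exact hG0.ne'
      have h32 : 0 < x 3 - x 2 := by have := xlt 2 3 (by omega) (by omega) (by omega); linarith
      have e2 : (x 3 - x 2) / (x 3 - x 2) = 1 := div_self h32.ne'
      have h31 : 0 < x 3 - x 1 := by have := xlt 1 3 (by omega) (by omega) (by omega); linarith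
      have hU3 : x 3 - x 2 ≤ U := gapU 2 (by omega) (by omega)
      have hhead : (x 3 - x 2) / (x 3 - x 1) < (x 2 - x 1) / (x 3 - x 1) :=
        (div_lt_div_iff_of_pos_right h31).mpr (by linarith)
      have d1 : (x 2 - x 1) / (x 2 - x 1) = 1 := div_self e1
      rw [d1, e2]
      linarith
  · -- j ≥ 4
    obtain ⟨i, rfl⟩ : ∃ i, j = i + 4 := ⟨j - 4, by omega⟩
    have hin : i + 4 ≤ n := hjn
    -- positivity of the various differences
    have hx41 : 0 < x (i + 4) - x 1 := by
      have := xlt 1 (i + 4) le_rfl (by omega) hin; linarith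
    have hx42 : 0 < x (i + 4) - x 2 := by
      have := xlt 2 (i + 4) (by omega) (by omega) hin; linarith
    -- Lemma A : log upper bound for the h̄(1) head
    have lemA : ∀ m, 2 ≤ m → m ≤ n →
        ∑ k ∈ Finset.Ioc 2 m, (x k - x (k - 1)) / (x k - x 1)
          ≤ Real.log (x m - x 1) - Real.log (x 2 - x 1) := by
      intro m hm
      induction m, hm using Nat.le_induction with
      | base => intro _; simp
      | succ p hp ih =>
        intro hpn
        rw [Finset.sum_Ioc_succ_top (by omega : 2 ≤ p)]
        have h1 := ih (by omega)
        have hp0 : 0 < x p - x 1 := by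
          have := xlt 1 p le_rfl (by omega) (by omega); linarith
        have hpq : x p - x 1 < x (p + 1) - x 1 := by
          have := hx p (by omega) (by omega); linarith
        have hterm := log_lb hp0 hpq
        have e1 : p + 1 - 1 = p := by omega
        rw [e1]
        have e2 : (x (p + 1) - x 1) - (x p - x 1) = x (p + 1) - x p := by ring
        rw [e2] at hterm
        linarith
    -- Lemma B : log lower bound along the reversed partition
    have lemB : ∀ m, 2 ≤ m → m ≤ i + 4 →
        Real.log (G + (x (i + 4) - x 2)) - Real.log (G + (x (i + 4) - x m))
          ≤ ∑ k ∈ Finset.Ioc 2 m, (x k - x (k - 1)) / (G + (x (i + 4) - x k)) := by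
      intro m hm
      induction m, hm using Nat.le_induction with
      | base => intro _; simp
      | succ p hp ih =>
        intro hpn
        rw [Finset.sum_Ioc_succ_top (by omega : 2 ≤ p)]
        have h1 := ih (by omega)
        have hple : x (p + 1) ≤ x (i + 4) := xle (p + 1) (i + 4) (by omega) (by omega) hin
        have hp0 : 0 < G + (x (i + 4) - x (p + 1)) := by linarith
        have hpq : G + (x (i + 4) - x (p + 1)) < G + (x (i + 4) - x p) := by
          have := hx p (by omega) (by omega); linarith
        have hterm := log_ub hp0 hpq
        have e1 : p + 1 - 1 = p := by omega
        rw [e1]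
        have e2 : (G + (x (i + 4) - x p)) - (G + (x (i + 4) - x (p + 1)))
            = x (p + 1) - x p := by ring
        rw [e2] at hterm
        linarith
    -- combine A and B
    have hAB : ∑ k ∈ Finset.Ioc 2 (i + 4), (x k - x (k - 1)) / (x k - x 1)
        ≤ ∑ k ∈ Finset.Ioc 2 (i + 4), (x k - x (k - 1)) / (G + (x (i + 4) - x k)) := by
      have h1 := lemA (i + 4) (by omega) hin
      have h2 := lemB (i + 4) (by omega) le_rfl
      have e1 : G + (x (i + 4) - x 2) = x (i + 4) - x 1 := by rw [hGdef]; ring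
      have e2 : G + (x (i + 4) - x (i + 4)) = x 2 - x 1 := by rw [hGdef]; ring
      rw [e1, e2] at h2
      linarith
    -- split the e-sum
    have esplit : ∑ k ∈ Finset.Ioc 2 (i + 4), (x k - x (k - 1)) / (G + (x (i + 4) - x k))
        = (∑ k ∈ Finset.Ioc 2 (i + 2), (x k - x (k - 1)) / (G + (x (i + 4) - x k)))
          + (x (i + 3) - x (i + 2)) / (G + (x (i + 4) - x (i + 3)))
          + (x (i + 4) - x (i + 3)) / (G + (x (i + 4) - x (i + 4))) := by
      rw [show i + 4 = (i + 3) + 1 by omega, Finset.sum_Ioc_succ_top (by omega : 2 ≤ i + 3),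
        show i + 3 = (i + 2) + 1 by omega, Finset.sum_Ioc_succ_top (by omega : 2 ≤ i + 2)]
      norm_num [show i + 2 + 1 - 1 = i + 2 by omega, show i + 2 + 1 + 1 - 1 = i + 2 + 1 by omega,
        show i + 2 + 1 = i + 3 by omega, show i + 3 + 1 = i + 4 by omega]
    -- termwise comparison on Ioc 2 (i+2)
    have hterm2 : ∑ k ∈ Finset.Ioc 2 (i + 2), (x k - x (k - 1)) / (G + (x (i + 4) - x k))
        ≤ ∑ k ∈ Finset.Ioc 2 (i + 2), (x k - x (k - 1)) / (x (i + 4) - x (k - 1)) := by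
      apply Finset.sum_le_sum
      intro k hk
      obtain ⟨hk1, hk2⟩ := Finset.mem_Ioc.mp hk
      have hnum : 0 ≤ x k - x (k - 1) := by
        have := xlt (k - 1) k (by omega) (by omega) (by omega); linarith
      have hden1 : 0 < x (i + 4) - x (k - 1) := by
        have := xlt (k - 1) (i + 4) (by omega) (by omega) hin; linarith
      have hgk : x k - x (k - 1) ≤ U := by
        have := gapU (k - 1) (by omega) (by omega)
        rw [show k - 1 + 1 = k by omega] at this
        exact this
      have hle : x (i + 4) - x (k - 1) ≤ G + (x (i + 4) - x k) := by linarith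
      exact div_le_div_of_nonneg_left hnum hden1 hle
    -- surplus at k = i+3
    have hsurp : (x (i + 3) - x (i + 2)) / (G + (x (i + 4) - x (i + 3)))
          + (L / (2 * U) - L / (U * r))
        ≤ (x (i + 3) - x (i + 2)) / (x (i + 4) - x (i + 2)) := by
      have hg2L : L ≤ x (i + 3) - x (i + 2) := by
        have := gapL (i + 2) (by omega) (by omega)
        rw [show i + 2 + 1 = i + 3 by omega] at this; exact this
      have hg2U : x (i + 3) - x (i + 2) ≤ U := by
        have := gapU (i + 2) (by omega) (by omega)
        rw [show i + 2 + 1 = i + 3 by omega] at this; exact this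
      have hg3L : L ≤ x (i + 4) - x (i + 3) := by
        have := gapL (i + 3) (by omega) (by omega)
        rw [show i + 3 + 1 = i + 4 by omega] at this; exact this
      have hg3U : x (i + 4) - x (i + 3) ≤ U := by
        have := gapU (i + 3) (by omega) (by omega)
        rw [show i + 3 + 1 = i + 4 by omega] at this; exact this
      set g2 : ℝ := x (i + 3) - x (i + 2) with hg2
      set d1 : ℝ := x (i + 4) - x (i + 2) with hd1
      set d2 : ℝ := G + (x (i + 4) - x (i + 3)) with hd2
      have hd1eq : d1 = (x (i + 4) - x (i + 3)) + g2 := by rw [hd1, hg2]; ring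
      have hd1pos : 0 < d1 := by rw [hd1eq]; linarith
      have hd1le : d1 ≤ 2 * U := by rw [hd1eq]; linarith
      have hUr0 : 0 < U * r := mul_pos hU0 hr0
      have hd2ge : U * r ≤ d2 := by rw [hd2]; linarith
      have hd2pos : 0 < d2 := lt_of_lt_of_le hUr0 hd2ge
      have h1 : 1 / (2 * U) ≤ 1 / d1 := one_div_le_one_div_of_le hd1pos hd1le
      have h2 : 1 / d2 ≤ 1 / (U * r) := one_div_le_one_div_of_le hUr0 hd2ge
      have h3 : 0 ≤ 1 / (2 * U) - 1 / (U * r) := by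
        have : 2 * U ≤ U * r := by
          have := mul_le_mul_of_nonneg_left hr2.le hU0.le
          linarith
        have := one_div_le_one_div_of_le (by positivity : (0:ℝ) < 2 * U) this
        linarith
      have hchain : L * (1 / (2 * U) - 1 / (U * r)) ≤ g2 * (1 / d1 - 1 / d2) := by
        have s1 : L * (1 / (2 * U) - 1 / (U * r)) ≤ g2 * (1 / (2 * U) - 1 / (U * r)) :=
          mul_le_mul_of_nonneg_right hg2L h3
        have s2 : g2 * (1 / (2 * U) - 1 / (U * r)) ≤ g2 * (1 / d1 - 1 / d2) := by
          apply mul_le_mul_of_nonneg_left (by linarith) (by linarith)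
        linarith
      have e1 : g2 * (1 / d1 - 1 / d2) = g2 / d1 - g2 / d2 := by ring
      have e2 : L * (1 / (2 * U) - 1 / (U * r)) = L / (2 * U) - L / (U * r) := by ring
      rw [e1, e2] at hchain
      linarith
    -- the final small term
    have he4 : (x (i + 4) - x (i + 3)) / (G + (x (i + 4) - x (i + 4))) ≤ U / G := by
      rw [sub_self, add_zero]
      have hg3U : x (i + 4) - x (i + 3) ≤ U := by
        have := gapU (i + 3) (by omega) (by omega)
        rw [show i + 3 + 1 = i + 4 by omega] at this; exact this
      exact (div_le_div_iff_of_pos_right hG0).mpr hg3U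
    -- CORE inequality
    have hne : x 2 - x 1 ≠ 0 := by rw [← hGdef]; exact hG0.ne'
    have hLr : L * r = U := by rw [hr]; field_simp
    have hcore : U / G - (L / (2 * U) - L / (U * r)) < G / (x (i + 4) - x 1) := by
      have hW : x (i + 4) - x 2 ≤ (r ^ 2 - 5) * U := by
        have h1 := sumU 2 (i + 4) le_rfl (by omega) hin
        have h2 : ((i : ℝ) + 4) ≤ (n : ℝ) := by exact_mod_cast hin
        have h4 : ((i + 4 : ℕ) : ℝ) - ((2 : ℕ) : ℝ) ≤ r ^ 2 - 5 := by
          push_cast; linarith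
        have h5 := mul_le_mul_of_nonneg_right h4 hU0.le
        exact h1.trans h5
      have hXeq : x (i + 4) - x 1 = G + (x (i + 4) - x 2) := by rw [hGdef]; ring
      have step1 := core_frac hU0 hr2 hr7 hG hW hx42.le hXeq
      have step2 : U / G < 1 / r := by
        rw [div_lt_div_iff₀ hG0 hr0]; linarith
      have e2 : L / (2 * U) = 1 / (2 * r) := by
        rw [← hLr, div_eq_div_iff (by positivity) (by positivity)]; ring
      have e3 : L / (U * r) = 1 / r ^ 2 := by
        rw [← hLr, div_eq_div_iff (by positivity) (by positivity)]; ring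
      have step4 := core_cubic hr2
      linarith
    -- assemble the head sums
    have splitP : ∑ k ∈ Finset.Ioc 1 (i + 4), (x k - x (k - 1)) / (x k - x 1)
        = (x 2 - x 1) / (x 2 - x 1)
          + ∑ k ∈ Finset.Ioc 2 (i + 4), (x k - x (k - 1)) / (x k - x 1) := by
      rw [← Finset.sum_Ioc_consecutive _ (by omega : 1 ≤ 2) (by omega : 2 ≤ i + 4),
        show Finset.Ioc 1 2 = {2} from rfl, Finset.sum_singleton]
    have splitQ : ∑ k ∈ Finset.Ioc 1 (i + 4), (x k - x (k - 1)) / (x (i + 4) - x (k - 1))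
        = (x 2 - x 1) / (x (i + 4) - x 1)
          + ((∑ k ∈ Finset.Ioc 2 (i + 3), (x k - x (k - 1)) / (x (i + 4) - x (k - 1)))
            + (x (i + 4) - x (i + 3)) / (x (i + 4) - x (i + 3))) := by
      rw [← Finset.sum_Ioc_consecutive _ (by omega : 1 ≤ 2) (by omega : 2 ≤ i + 4),
        show Finset.Ioc 1 2 = {2} from rfl, Finset.sum_singleton,
        show i + 4 = (i + 3) + 1 by omega, Finset.sum_Ioc_succ_top (by omega : 2 ≤ i + 3)]
      norm_num [show i + 3 + 1 - 1 = i + 3 by omega, show i + 3 + 1 = i + 4 by omega]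
    have splitQ2 : ∑ k ∈ Finset.Ioc 2 (i + 3), (x k - x (k - 1)) / (x (i + 4) - x (k - 1))
        = (∑ k ∈ Finset.Ioc 2 (i + 2), (x k - x (k - 1)) / (x (i + 4) - x (k - 1)))
          + (x (i + 3) - x (i + 2)) / (x (i + 4) - x (i + 2)) := by
      rw [show i + 3 = (i + 2) + 1 by omega, Finset.sum_Ioc_succ_top (by omega : 2 ≤ i + 2)]
      norm_num [show i + 2 + 1 - 1 = i + 2 by omega, show i + 2 + 1 = i + 3 by omega]
    have hone1 : (x 2 - x 1) / (x 2 - x 1) = 1 := div_self hne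
    have hone2 : (x (i + 4) - x (i + 3)) / (x (i + 4) - x (i + 3)) = 1 := by
      have h34 : 0 < x (i + 4) - x (i + 3) := by
        have := xlt (i + 3) (i + 4) (by omega) (by omega) hin; linarith
      exact div_self h34.ne'
    rw [splitP, splitQ, splitQ2, hone1, hone2, ← hGdef]
    have hGlin : G = x 2 - x 1 := hGdef
    linarith [hAB, esplit, hterm2, hsurp, he4, hcore, tail_le]
end

section
/- For every integer n > 4, every real U > 0, and every real κ ≥ 2, there exist real numbers x_1 < x_2 < … < x_n such that: the maximum adjacent gap among x_2, …, x_n equals U, the ratio of the maximum to the minimum adjacent gap among x_2, …, x_n is at most κ, U < x_2 − x_1 ≤ U·κ, and h̄(1) ≥ h̄(j_0) for some index j_0 with 2 ≤ j_0 ≤ n. (Thus if the leading gap does not exceed U·κ, iForest may fail to detect the marginal single anomaly.) -/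
open Finset

/-- The witness family of points: `0, A, A+B, A+B+1, A+B+2, …`. -/
noncomputable def ypt (A B : ℝ) : ℕ → ℝ := fun j =>
  if j ≤ 1 then 0 else if j = 2 then A else A + B + ((j : ℝ) - 3)

lemma ypt_one (A B : ℝ) : ypt A B 1 = 0 := by simp [ypt]

lemma ypt_two (A B : ℝ) : ypt A B 2 = A := by simp [ypt]

lemma ypt_ge (A B : ℝ) {j : ℕ} (hj : 3 ≤ j) : ypt A B j = A + B + ((j : ℝ) - 3) := by
  rw [ypt]
  rw [if_neg (by omega), if_neg (by omega)]

lemma sumA (A B : ℝ) (hA : A ≠ 0) (m : ℕ) :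
    ∑ j ∈ Finset.Icc 2 (m + 3), (ypt A B j - ypt A B (j - 1)) / (ypt A B j - ypt A B 1)
      = 1 + B / (A + B) + ∑ k ∈ Finset.range m, 1 / (A + B + ((k : ℝ) + 1)) := by
  induction m with
  | zero =>
      have h23 : Finset.Icc 2 3 = {2, 3} := by decide
      rw [show (0 + 3) = 3 from rfl, h23, Finset.sum_insert (by decide), Finset.sum_singleton]
      rw [show (2:ℕ) - 1 = 1 from rfl, show (3:ℕ) - 1 = 2 from rfl,
        ypt_one, ypt_two, ypt_ge A B (le_refl 3)]
      rw [Finset.sum_range_zero]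
      norm_num
      exact hA
  | succ m ih =>
      rw [show m + 1 + 3 = (m + 3) + 1 from rfl,
        Finset.sum_Icc_succ_top (by omega : 2 ≤ (m + 3) + 1), ih, Finset.sum_range_succ]
      rw [show (m + 3 + 1) - 1 = m + 3 from rfl, ypt_ge A B (by omega : 3 ≤ m + 3 + 1),
        ypt_ge A B (by omega : 3 ≤ m + 3), ypt_one]
      push_cast
      ring

lemma sumB (A B v : ℝ) (m : ℕ) :
    ∑ j ∈ Finset.Icc 2 (m + 3), (ypt A B j - ypt A B (j - 1)) / (v - ypt A B (j - 1))
      = A / v + B / (v - A) + ∑ k ∈ Finset.range m, 1 / (v - (A + B + (k : ℝ))) := by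
  induction m with
  | zero =>
      have h23 : Finset.Icc 2 3 = {2, 3} := by decide
      rw [show (0 + 3) = 3 from rfl, h23, Finset.sum_insert (by decide), Finset.sum_singleton]
      rw [show (2:ℕ) - 1 = 1 from rfl, show (3:ℕ) - 1 = 2 from rfl,
        ypt_one, ypt_two, ypt_ge A B (le_refl 3)]
      rw [Finset.sum_range_zero]
      push_cast
      ring
  | succ m ih =>
      rw [show m + 1 + 3 = (m + 3) + 1 from rfl,
        Finset.sum_Icc_succ_top (by omega : 2 ≤ (m + 3) + 1), ih, Finset.sum_range_succ]
      rw [show (m + 3 + 1) - 1 = m + 3 from rfl, ypt_ge A B (by omega : 3 ≤ m + 3 + 1),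
        ypt_ge A B (by omega : 3 ≤ m + 3)]
      push_cast
      ring

lemma reflect_sum (m : ℕ) :
    ∑ k ∈ Finset.range m, 1 / ((m : ℝ) - (k : ℝ)) = ∑ k ∈ Finset.range m, 1 / ((k : ℝ) + 1) := by
  rw [← Finset.sum_range_reflect (fun k => 1 / ((k : ℝ) + 1)) m]
  refine Finset.sum_congr rfl fun j hj => ?_
  have hj' : j < m := Finset.mem_range.mp hj
  congr 1
  rw [Nat.cast_sub (by omega : j ≤ m - 1), Nat.cast_sub (by omega : 1 ≤ m)]
  push_cast
  ring

lemma step_ineq (b m : ℝ) (hb : 0 < b) (hb2 : b ≤ 1/2) (hm : 2 ≤ m) :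
    (1 + b/20) / ((1 + b/20) + b + (m + 1)) - (1 + b/20) / ((1 + b/20) + b + m)
      + (b / (b + (m + 1)) - b / (b + m)) + 1 / (m + 1)
        ≤ 1 / ((1 + b/20) + b + (m + 1)) := by
  have h1 : (0:ℝ) < 1 + b/20 + b + m := by linarith
  have h2 : (0:ℝ) < 1 + b/20 + b + m + 1 := by linarith
  have h3 : (0:ℝ) < b + m := by linarith
  have h4 : (0:ℝ) < b + m + 1 := by linarith
  have h5 : (0:ℝ) < m + 1 := by linarith
  have hm0 : (0:ℝ) ≤ m := by linarith
  have hb' : (0:ℝ) ≤ 1/2 - b := by linarith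
  have hb'' : (0:ℝ) ≤ 1/4 - b^2 := by nlinarith
  have k1 : (0:ℝ) ≤ b*((1/2-b)*m^2) := mul_nonneg hb.le (mul_nonneg hb' (sq_nonneg m))
  have k2 : (0:ℝ) ≤ b*((1/2-b)*m) := mul_nonneg hb.le (mul_nonneg hb' hm0)
  have k3 : (0:ℝ) ≤ b*((1/4-b^2)*m) := mul_nonneg hb.le (mul_nonneg hb'' hm0)
  have k4 : (0:ℝ) ≤ b*((1/4-b^2)*b) := mul_nonneg hb.le (mul_nonneg hb'' hb.le)
  have k5 : (0:ℝ) ≤ b*(1/4-b^2) := mul_nonneg hb.le hb''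
  have k6 : (0:ℝ) ≤ b*m := mul_nonneg hb.le hm0
  have k7 : (0:ℝ) ≤ b*m^2 := mul_nonneg hb.le (sq_nonneg m)
  rw [← sub_nonneg]
  field_simp
  nlinarith [k1, k2, k3, k4, k5, k6, k7, hb.le, sq_nonneg m]

lemma base_ineq (b : ℝ) (hb : 0 < b) (hb2 : b ≤ 1/2) :
    (1 + b/20) / ((1 + b/20) + b + 2) + b / (b + 2) + (1 + 1/2)
      ≤ 1 + b / ((1 + b/20) + b) + (1 / ((1 + b/20) + b + 1) + 1 / ((1 + b/20) + b + 2)) := by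
  have h1 : (0:ℝ) < 1 + b/20 + b := by linarith
  rw [← sub_nonneg]
  field_simp
  nlinarith [sq_nonneg b, mul_pos hb hb, mul_pos (mul_pos hb hb) hb,
    mul_pos (mul_pos (mul_pos hb hb) hb) hb]

lemma key_ineq (b : ℝ) (hb : 0 < b) (hb2 : b ≤ 1/2) :
    ∀ m : ℕ, 2 ≤ m →
    (1 + b/20) / ((1 + b/20) + b + (m : ℝ)) + b / (b + (m : ℝ))
        + ∑ k ∈ Finset.range m, 1 / ((k : ℝ) + 1)
      ≤ 1 + b / ((1 + b/20) + b)
        + ∑ k ∈ Finset.range m, 1 / ((1 + b/20) + b + ((k : ℝ) + 1)) := by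
  intro m
  induction m with
  | zero => omega
  | succ m ih =>
      intro hm
      rcases Nat.lt_or_ge m 2 with h | h
      · obtain rfl : m = 1 := by omega
        simp only [Finset.sum_range_succ, Finset.sum_range_zero]
        norm_num
        have := base_ineq b hb hb2
        convert this using 2 <;> push_cast <;> ring_nf
      · have IH := ih h
        rw [Finset.sum_range_succ, Finset.sum_range_succ]
        have hstep := step_ineq b (m : ℝ) hb hb2 (by exact_mod_cast h)
        push_cast
        push_cast at IH
        linarith

/-- **Necessity of the `U·κ` gap for iForest to detect the marginal single anomaly.**
For every `n > 4`, `U > 0` and `κ ≥ 2`, there are sorted reals `x 1 < … < x n` whose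
maximum adjacent gap among `x 2, …, x n` equals `U`, whose adjacent gaps among
`x 2, …, x n` are all at least `U/κ` (so the gap ratio is at most `κ`), with
`U < x 2 − x 1 ≤ U·κ`, and yet `h̄(1) ≥ h̄(j₀)` for some index `2 ≤ j₀ ≤ n`. -/
theorem iforest_may_miss_marginal_single_anomaly
    (n : ℕ) (hn : 4 < n) (U : ℝ) (hU : 0 < U) (κ : ℝ) (hκ : 2 ≤ κ) :
    ∃ x : ℕ → ℝ,
      (∀ i, 1 ≤ i → i < n → x i < x (i + 1)) ∧
      IsGreatest {d : ℝ | ∃ i, 2 ≤ i ∧ i ≤ n - 1 ∧ d = x (i + 1) - x i} U ∧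
      (∀ i, 2 ≤ i → i ≤ n - 1 → U / κ ≤ x (i + 1) - x i) ∧
      U < x 2 - x 1 ∧ x 2 - x 1 ≤ U * κ ∧
      ∃ j₀, 2 ≤ j₀ ∧ j₀ ≤ n ∧ hbar x n j₀ ≤ hbar x n 1 := by
  obtain ⟨m, hm2, rfl⟩ : ∃ m, 2 ≤ m ∧ n = m + 3 := ⟨n - 3, by omega, by omega⟩
  have hκ0 : (0:ℝ) < κ := by linarith
  set b : ℝ := 1 / κ with hbdef
  have hb : 0 < b := by rw [hbdef]; positivity
  have hb2 : b ≤ 1 / 2 := by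
    rw [hbdef]
    rw [div_le_div_iff₀ hκ0 (by norm_num)]
    linarith
  set A : ℝ := 1 + b / 20 with hAdef
  clear_value b
  have hA : 0 < A := by rw [hAdef]; positivity
  clear_value A
  refine ⟨fun j => U * ypt A b j, ?_, ?_, ?_, ?_, ?_, ?_⟩
  · -- monotone
    intro i hi1 hin
    show U * ypt A b i < U * ypt A b (i + 1)
    rcases Nat.lt_or_ge i 3 with h3 | h3
    · interval_cases i
      · rw [ypt_one, ypt_two]
        simpa using mul_pos hU hA
      · rw [ypt_two, ypt_ge A b (le_refl 3)]
        have : A + b + ((3:ℕ) - 3 : ℝ) - A = b := by push_cast; ring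
        nlinarith [mul_pos hU hb]
    · rw [ypt_ge A b (by omega : 3 ≤ i + 1), ypt_ge A b h3]
      have : U * (A + b + ((i+1 : ℕ) - 3 : ℝ)) - U * (A + b + ((i : ℕ) - 3 : ℝ)) = U := by
        push_cast; ring
      linarith
  · constructor
    · -- U is attained at i = 3
      refine ⟨3, by omega, by omega, ?_⟩
      show U = U * ypt A b (3 + 1) - U * ypt A b 3
      rw [ypt_ge A b (by omega : 3 ≤ 4), ypt_ge A b (le_refl 3)]
      push_cast; ring
    · -- U is an upper bound
      rintro d ⟨i, hi2, hin, rfl⟩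
      show U * ypt A b (i + 1) - U * ypt A b i ≤ U
      rcases Nat.lt_or_ge i 3 with h3 | h3
      · obtain rfl : i = 2 := by omega
        rw [ypt_ge A b (le_refl 3), ypt_two]
        have : U * (A + b + ((3:ℕ) - 3 : ℝ)) - U * A = U * b := by push_cast; ring
        rw [this]
        nlinarith
      · rw [ypt_ge A b (by omega : 3 ≤ i + 1), ypt_ge A b h3]
        have : U * (A + b + ((i+1 : ℕ) - 3 : ℝ)) - U * (A + b + ((i : ℕ) - 3 : ℝ)) = U := by
          push_cast; ring
        linarith
  · -- lower bound U/κ on gaps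
    intro i hi2 hin
    show U / κ ≤ U * ypt A b (i + 1) - U * ypt A b i
    rcases Nat.lt_or_ge i 3 with h3 | h3
    · obtain rfl : i = 2 := by omega
      rw [ypt_ge A b (le_refl 3), ypt_two]
      have : U * (A + b + ((3:ℕ) - 3 : ℝ)) - U * A = U * (1/κ) := by
        rw [hbdef] at *; push_cast; ring
      rw [this, mul_one_div]
    · rw [ypt_ge A b (by omega : 3 ≤ i + 1), ypt_ge A b h3]
      have he : U * (A + b + ((i+1 : ℕ) - 3 : ℝ)) - U * (A + b + ((i : ℕ) - 3 : ℝ)) = U := by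
        push_cast; ring
      rw [he]
      exact div_le_self hU.le (by linarith)
  · -- U < x 2 - x 1
    show U < U * ypt A b 2 - U * ypt A b 1
    rw [ypt_two, ypt_one]
    have : U * A - U * 0 = U + U * (b/20) := by rw [hAdef]; ring
    nlinarith [mul_pos hU (by positivity : (0:ℝ) < b/20)]
  · -- x 2 - x 1 ≤ U * κ
    show U * ypt A b 2 - U * ypt A b 1 ≤ U * κ
    rw [ypt_two, ypt_one]
    have hAκ : A ≤ κ := by rw [hAdef]; linarith
    nlinarith
  · -- the main inequality with j₀ = m + 3
    refine ⟨m + 3, by omega, le_refl _, ?_⟩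
    have hxy : ∀ i, hbar (fun j => U * ypt A b j) (m+3) i = hbar (ypt A b) (m+3) i := by
      intro i
      unfold hbar
      congr 1
      · refine Finset.sum_congr rfl fun j _ => ?_
        rw [← mul_sub, ← mul_sub, mul_div_mul_left _ _ hU.ne']
      · refine Finset.sum_congr rfl fun j _ => ?_
        rw [← mul_sub, ← mul_sub, mul_div_mul_left _ _ hU.ne']
    rw [hxy, hxy]
    -- evaluate hbar at 1
    have e1 : hbar (ypt A b) (m+3) 1
        = 1 + b / (A + b) + ∑ k ∈ Finset.range m, 1 / (A + b + ((k : ℝ) + 1)) := by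
      unfold hbar
      rw [Finset.Icc_eq_empty (by omega : ¬ (2:ℕ) ≤ 1), Finset.sum_empty, zero_add]
      rw [show (1 + 1 : ℕ) = 2 from rfl]
      rw [← sumA A b hA.ne' m]
    -- evaluate hbar at m+3
    have e2 : hbar (ypt A b) (m+3) (m+3)
        = A / (A + b + (m:ℝ)) + b / (b + (m:ℝ)) + ∑ k ∈ Finset.range m, 1 / ((k:ℝ) + 1) := by
      unfold hbar
      rw [Finset.Icc_eq_empty (by omega : ¬ (m + 3 + 1 ≤ m + 3)), Finset.sum_empty, add_zero]
      have hv : ypt A b (m+3) = A + b + (m : ℝ) := by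
        rw [ypt_ge A b (by omega : 3 ≤ m + 3)]; push_cast; ring
      have : ∀ j ∈ Finset.Icc 2 (m+3),
          (ypt A b j - ypt A b (j-1)) / (ypt A b (m+3) - ypt A b (j-1))
            = (ypt A b j - ypt A b (j-1)) / ((A + b + (m:ℝ)) - ypt A b (j-1)) := by
        intro j _; rw [hv]
      rw [Finset.sum_congr rfl this, sumB A b (A + b + (m:ℝ)) m]
      have h1 : A + b + (m:ℝ) - A = b + (m:ℝ) := by ring
      have h2 : ∑ k ∈ Finset.range m, 1 / ((A + b + (m:ℝ)) - (A + b + (k:ℝ)))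
          = ∑ k ∈ Finset.range m, 1 / ((m:ℝ) - (k:ℝ)) := by
        refine Finset.sum_congr rfl fun k _ => ?_
        congr 1; ring
      rw [h1, h2, reflect_sum m]
    rw [e1, e2]
    have := key_ineq b hb hb2 m hm2
    rw [← hAdef] at this
    linarith
end

section
/- Let k and n be integers with 1 ≤ k ≤ n − 2, and let x_1 < x_2 < … < x_n be real numbers whose adjacent gaps x_{i+1} − x_i for 2 ≤ i ≤ n − 1 all lie in [L, U], where 0 < L ≤ U and δ = U − L. If x_2 − x_1 > U + (k − 1)·δ/2, then h_knn(1) > h_knn(j) for every 2 ≤ j ≤ n; that is, the k-NN anomaly detector assigns the marginal single anomaly x_1 strictly the largest score. -/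
open Finset

/-- `S` is a set of `k` nearest neighbors of the `i`-th point among the points
`x 1, …, x n` (excluding the point itself): `S` has `k` elements, consists of indices in
`{1, …, n} \ {i}`, and every point of `S` is at least as close to `x i` as every
excluded point. -/
def IsKNN (x : ℕ → ℝ) (n k i : ℕ) (S : Finset ℕ) : Prop :=
  S ⊆ (Finset.Icc 1 n).erase i ∧ S.card = k ∧
    ∀ a ∈ S, ∀ b ∈ (Finset.Icc 1 n).erase i, b ∉ S → |x i - x a| ≤ |x i - x b|

/-- The `k`-NN anomaly score of the `i`-th point with neighbor set `S`: the average
distance from `x i` to its `k` nearest neighbors. -/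
noncomputable def knnScore (x : ℕ → ℝ) (k i : ℕ) (S : Finset ℕ) : ℝ :=
  (1 / (k : ℝ)) * ∑ a ∈ S, |x i - x a|

/-- A `k`-set of naturals all `≥ 2` has `∑ (a - 2) ≥ k(k-1)/2`. -/
lemma sum_sub_two_ge : ∀ (c : ℕ) (S : Finset ℕ), S.card = c → (∀ a ∈ S, 2 ≤ a) →
    (c : ℝ) * ((c : ℝ) - 1) / 2 ≤ ∑ a ∈ S, ((a : ℝ) - 2) := by
  intro c
  induction c with
  | zero =>
    intro S hS _
    rw [Finset.card_eq_zero] at hS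
    simp [hS]
  | succ c ih =>
    intro S hS h2
    have hne : S.Nonempty := Finset.card_pos.mp (by omega)
    set M := S.max' hne with hM
    have hMmem : M ∈ S := S.max'_mem hne
    have hsub : S ⊆ Finset.Icc 2 M := fun a ha =>
      Finset.mem_Icc.mpr ⟨h2 a ha, S.le_max' a ha⟩
    have hcard : S.card ≤ (Finset.Icc 2 M).card := Finset.card_le_card hsub
    rw [Nat.card_Icc] at hcard
    have hMge : c + 2 ≤ M := by omega
    have hrest : (S.erase M).card = c := by
      rw [Finset.card_erase_of_mem hMmem]; omega
    have h2' : ∀ a ∈ S.erase M, 2 ≤ a := fun a ha => h2 a (Finset.mem_of_mem_erase ha)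
    have hih := ih (S.erase M) hrest h2'
    have hsum : ∑ a ∈ S, ((a : ℝ) - 2) = ((M : ℝ) - 2) + ∑ a ∈ S.erase M, ((a : ℝ) - 2) :=
      (Finset.add_sum_erase S _ hMmem).symm
    have hMc : ((c : ℝ) + 2) ≤ (M : ℝ) := by exact_mod_cast hMge
    rw [hsum]
    push_cast
    nlinarith [hih, hMc]

/-- If `S` is a `k`-NN set for point `i` and `T` is any other admissible `k`-set,
then the total distance from `x i` to `S` is at most that to `T`. -/
lemma knn_sum_le (x : ℕ → ℝ) (n k i : ℕ) (S T : Finset ℕ)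
    (hS : IsKNN x n k i S) (hT : T ⊆ (Finset.Icc 1 n).erase i) (hTc : T.card = k) :
    ∑ a ∈ S, |x i - x a| ≤ ∑ a ∈ T, |x i - x a| := by
  obtain ⟨hSsub, hSc, hmin⟩ := hS
  have h1 : ∑ a ∈ S \ T, |x i - x a| + ∑ a ∈ S ∩ T, |x i - x a| = ∑ a ∈ S, |x i - x a| := by
    rw [← Finset.sdiff_inter_self_left S T]
    exact Finset.sum_sdiff (Finset.inter_subset_left)
  have h2 : ∑ a ∈ T \ S, |x i - x a| + ∑ a ∈ S ∩ T, |x i - x a| = ∑ a ∈ T, |x i - x a| := by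
    rw [Finset.inter_comm, ← Finset.sdiff_inter_self_left T S]
    exact Finset.sum_sdiff (Finset.inter_subset_left)
  have hcard : (S \ T).card = (T \ S).card := by
    have e1 := Finset.card_sdiff_add_card_inter S T
    have e2 := Finset.card_sdiff_add_card_inter T S
    rw [Finset.inter_comm] at e2
    omega
  suffices h : ∑ a ∈ S \ T, |x i - x a| ≤ ∑ a ∈ T \ S, |x i - x a| by linarith
  rcases Finset.eq_empty_or_nonempty (T \ S) with he | hne
  · have heS : (S \ T) = ∅ := Finset.card_eq_zero.mp (by rw [hcard, he]; simp)
    simp [heS, he]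
  · set c := (T \ S).inf' hne (fun a => |x i - x a|) with hc
    have hca : ∀ a ∈ S \ T, |x i - x a| ≤ c := by
      intro a ha
      obtain ⟨b, hb, hbe⟩ := Finset.exists_mem_eq_inf' hne (fun a => |x i - x a|)
      rw [hc, hbe]
      have hbT := Finset.mem_sdiff.mp hb
      exact hmin a (Finset.mem_sdiff.mp ha).1 b (hT hbT.1) hbT.2
    have h3 : ∑ a ∈ S \ T, |x i - x a| ≤ (S \ T).card • c :=
      Finset.sum_le_card_nsmul _ _ _ hca
    have h4 : (T \ S).card • c ≤ ∑ a ∈ T \ S, |x i - x a| :=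
      Finset.card_nsmul_le_sum _ _ _ (fun b hb => Finset.inf'_le _ hb)
    rw [hcard] at h3
    linarith

/-- **`k`-NN detects the marginal single anomaly (sufficiency).**
Let `1 ≤ k ≤ n − 2` and `x 1 < … < x n` with all adjacent gaps `x (i+1) − x i` for
`2 ≤ i ≤ n − 1` lying in `[L, U]`, `0 < L ≤ U`, `δ = U − L`. If
`x 2 − x 1 > U + (k − 1)·δ/2`, then the `k`-NN score of `x 1` strictly exceeds the
`k`-NN score of every other point. -/
theorem knn_detects_marginal_single_anomaly
    (n k : ℕ) (hk1 : 1 ≤ k) (hkn : k ≤ n - 2) (x : ℕ → ℝ)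
    (hx : ∀ i, 1 ≤ i → i < n → x i < x (i + 1))
    (L U : ℝ) (hL : 0 < L) (hLU : L ≤ U)
    (hgaps : ∀ i, 2 ≤ i → i ≤ n - 1 → L ≤ x (i + 1) - x i ∧ x (i + 1) - x i ≤ U)
    (hgap1 : x 2 - x 1 > U + ((k : ℝ) - 1) * (U - L) / 2) :
    ∀ j, 2 ≤ j → j ≤ n → ∀ S1 Sj : Finset ℕ,
      IsKNN x n k 1 S1 → IsKNN x n k j Sj →
      knnScore x k j Sj < knnScore x k 1 S1 := by
  have hn : k + 2 ≤ n := by omega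
  have hU : (0 : ℝ) < U := lt_of_lt_of_le hL hLU
  -- monotonicity
  have hmono : ∀ d a, 1 ≤ a → a + d ≤ n → x a ≤ x (a + d) := by
    intro d
    induction d with
    | zero => intro a _ _; exact le_refl _
    | succ d ih =>
      intro a h1 h2
      have hstep := hx (a + d) (by omega) (by omega)
      have := ih a h1 (by omega)
      have he : a + (d + 1) = a + d + 1 := rfl
      rw [he]
      linarith
  have hmono' : ∀ a b, 1 ≤ a → a ≤ b → b ≤ n → x a ≤ x b := by
    intro a b h1 h2 h3
    have := hmono (b - a) a h1 (by omega)
    rwa [show a + (b - a) = b by omega] at this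
  -- upper bound on distances between bulk points
  have hub : ∀ d a, 2 ≤ a → a + d ≤ n → x (a + d) - x a ≤ (d : ℝ) * U := by
    intro d
    induction d with
    | zero => simp
    | succ d ih =>
      intro a h1 h2
      have hg := (hgaps (a + d) (by omega) (by omega)).2
      have hi := ih a h1 (by omega)
      have he : a + (d + 1) = a + d + 1 := rfl
      rw [he]
      push_cast
      linarith
  -- lower bound on distances between bulk points
  have hlb : ∀ d a, 2 ≤ a → a + d ≤ n → (d : ℝ) * L ≤ x (a + d) - x a := by
    intro d
    induction d with
    | zero => simp
    | succ d ih =>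
      intro a h1 h2
      have hg := (hgaps (a + d) (by omega) (by omega)).1
      have hi := ih a h1 (by omega)
      have he : a + (d + 1) = a + d + 1 := rfl
      rw [he]
      push_cast
      linarith
  have hlb1 : ∀ a, 2 ≤ a → a ≤ n → x 2 - x 1 + ((a : ℝ) - 2) * L ≤ x a - x 1 := by
    intro a h2a han
    have h := hlb (a - 2) 2 (le_refl 2) (by omega)
    rw [show 2 + (a - 2) = a by omega] at h
    have hc : ((a - 2 : ℕ) : ℝ) = (a : ℝ) - 2 := by
      push_cast [Nat.cast_sub h2a]
      ring
    rw [hc] at h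
    linarith
  -- left window sums
  have hB : ∀ p jj, p + 2 ≤ jj → jj ≤ n →
      ∑ a ∈ Finset.Icc (jj - p) (jj - 1), (x jj - x a) ≤ (p : ℝ) * ((p : ℝ) + 1) / 2 * U := by
    intro p
    induction p with
    | zero =>
      intro jj h1 h2
      have h0 : Finset.Icc (jj - 0) (jj - 1) = ∅ := by
        rw [Finset.Icc_eq_empty]; omega
      rw [h0, Finset.sum_empty]
      positivity
    | succ p ih =>
      intro jj h1 h2
      have hset : Finset.Icc (jj - (p + 1)) (jj - 1) =
          insert (jj - (p + 1)) (Finset.Icc (jj - p) (jj - 1)) := by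
        ext a; simp only [Finset.mem_Icc, Finset.mem_insert]; omega
      have hnm : jj - (p + 1) ∉ Finset.Icc (jj - p) (jj - 1) := by
        simp only [Finset.mem_Icc]; omega
      rw [hset, Finset.sum_insert hnm]
      have hterm : x jj - x (jj - (p + 1)) ≤ ((p : ℝ) + 1) * U := by
        have h := hub (p + 1) (jj - (p + 1)) (by omega) (by omega)
        rw [show jj - (p + 1) + (p + 1) = jj by omega] at h
        push_cast at h
        linarith
      have hih := ih jj (by omega) h2
      push_cast
      linarith
  -- right window sums
  have hC : ∀ q jj, 2 ≤ jj → jj + q ≤ n →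
      ∑ a ∈ Finset.Icc (jj + 1) (jj + q), (x a - x jj) ≤ (q : ℝ) * ((q : ℝ) + 1) / 2 * U := by
    intro q
    induction q with
    | zero =>
      intro jj _ _
      have : Finset.Icc (jj + 1) (jj + 0) = ∅ := by
        rw [Finset.Icc_eq_empty]; omega
      simp [this]
    | succ q ih =>
      intro jj h1 h2
      have hset : Finset.Icc (jj + 1) (jj + (q + 1)) =
          insert (jj + q + 1) (Finset.Icc (jj + 1) (jj + q)) := by
        ext a; simp only [Finset.mem_Icc, Finset.mem_insert]; omega
      have hnm : jj + q + 1 ∉ Finset.Icc (jj + 1) (jj + q) := by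
        simp only [Finset.mem_Icc]; omega
      rw [hset, Finset.sum_insert hnm]
      have hterm : x (jj + q + 1) - x jj ≤ ((q : ℝ) + 1) * U := by
        have h := hub (q + 1) jj (by omega) (by omega)
        rw [show jj + (q + 1) = jj + q + 1 from rfl] at h
        push_cast at h
        linarith
      have hih := ih jj h1 (by omega)
      push_cast
      linarith
  intro j hj2 hjn S1 Sj hK1 hKj
  obtain ⟨hS1sub, hS1card, _⟩ := hK1
  have hS1mem : ∀ a ∈ S1, 2 ≤ a ∧ a ≤ n := by
    intro a ha
    have h := hS1sub ha
    rw [Finset.mem_erase, Finset.mem_Icc] at h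
    omega
  -- lower bound for the score of point 1
  have hS1lb : (k : ℝ) * (x 2 - x 1) + L * ((k : ℝ) * ((k : ℝ) - 1) / 2)
      ≤ ∑ a ∈ S1, |x 1 - x a| := by
    have hterm : ∀ a ∈ S1, (x 2 - x 1) + ((a : ℝ) - 2) * L ≤ |x 1 - x a| := by
      intro a ha
      obtain ⟨h2a, han⟩ := hS1mem a ha
      have h := hlb1 a h2a han
      have hx12 : x 1 < x 2 := hx 1 (le_refl 1) (by omega)
      have ha2 : (2 : ℝ) ≤ (a : ℝ) := by exact_mod_cast h2a
      have hpos : 0 ≤ x a - x 1 := by nlinarith [hL.le]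
      rw [abs_sub_comm, abs_of_nonneg hpos]
      linarith
    have hsum := Finset.sum_le_sum hterm
    have heq : ∑ a ∈ S1, ((x 2 - x 1) + ((a : ℝ) - 2) * L)
        = (k : ℝ) * (x 2 - x 1) + (∑ a ∈ S1, ((a : ℝ) - 2)) * L := by
      rw [Finset.sum_add_distrib, Finset.sum_const, hS1card, ← Finset.sum_mul]
      simp [nsmul_eq_mul]
    rw [heq] at hsum
    have hnat := sum_sub_two_ge k S1 hS1card (fun a ha => (hS1mem a ha).1)
    nlinarith [hL.le]
  -- the comparison set for point j
  set m := min j (n - k) with hm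
  have hm2 : 2 ≤ m := by omega
  have hmj : m ≤ j := by omega
  have hjm : j ≤ m + k := by omega
  have hmkn : m + k ≤ n := by omega
  set T : Finset ℕ := (Finset.Icc m (m + k)).erase j with hTdef
  have hjmem : j ∈ Finset.Icc m (m + k) := Finset.mem_Icc.mpr ⟨hmj, hjm⟩
  have hTcard : T.card = k := by
    rw [hTdef, Finset.card_erase_of_mem hjmem, Nat.card_Icc]; omega
  have hTsub : T ⊆ (Finset.Icc 1 n).erase j := by
    intro a ha
    rw [hTdef, Finset.mem_erase, Finset.mem_Icc] at ha
    rw [Finset.mem_erase, Finset.mem_Icc]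
    omega
  have hsplit : T = Finset.Icc m (j - 1) ∪ Finset.Icc (j + 1) (m + k) := by
    ext a
    simp only [hTdef, Finset.mem_erase, Finset.mem_Icc, Finset.mem_union]
    omega
  have hdisj : Disjoint (Finset.Icc m (j - 1)) (Finset.Icc (j + 1) (m + k)) := by
    rw [Finset.disjoint_left]
    intro a h1 h2
    rw [Finset.mem_Icc] at h1 h2
    omega
  set p := j - m with hp
  set q := m + k - j with hq
  have hTsum : ∑ a ∈ T, |x j - x a| ≤ (k : ℝ) * ((k : ℝ) + 1) / 2 * U := by
    rw [hsplit, Finset.sum_union hdisj]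
    have hleft : ∑ a ∈ Finset.Icc m (j - 1), |x j - x a|
        = ∑ a ∈ Finset.Icc m (j - 1), (x j - x a) := by
      apply Finset.sum_congr rfl
      intro a ha
      rw [Finset.mem_Icc] at ha
      have : x a ≤ x j := hmono' a j (by omega) (by omega) (by omega)
      rw [abs_of_nonneg (by linarith)]
    have hright : ∑ a ∈ Finset.Icc (j + 1) (m + k), |x j - x a|
        = ∑ a ∈ Finset.Icc (j + 1) (m + k), (x a - x j) := by
      apply Finset.sum_congr rfl
      intro a ha
      rw [Finset.mem_Icc] at ha
      have : x j ≤ x a := hmono' j a (by omega) (by omega) (by omega)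
      rw [abs_sub_comm, abs_of_nonneg (by linarith)]
    have he1 : Finset.Icc m (j - 1) = Finset.Icc (j - p) (j - 1) := by
      congr 1; omega
    have he2 : Finset.Icc (j + 1) (m + k) = Finset.Icc (j + 1) (j + q) := by
      congr 1; omega
    have hBb := hB p j (by omega) (by omega)
    have hCb := hC q j (by omega) (by omega)
    have hpq : ((p : ℝ)) + (q : ℝ) = (k : ℝ) := by
      have : p + q = k := by omega
      exact_mod_cast this
    rw [hleft, hright, he1, he2]
    have hpqn : (0 : ℝ) ≤ (p : ℝ) * (q : ℝ) :=
      mul_nonneg (Nat.cast_nonneg p) (Nat.cast_nonneg q)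
    have hkey : (k : ℝ) * ((k : ℝ) + 1) / 2 * U
        = (p : ℝ) * ((p : ℝ) + 1) / 2 * U + (q : ℝ) * ((q : ℝ) + 1) / 2 * U
          + (p : ℝ) * (q : ℝ) * U := by
      rw [← hpq]; ring
    rw [hkey]
    have := mul_nonneg hpqn hU.le
    linarith [hBb, hCb]
  have hSjle := knn_sum_le x n k j Sj T hKj hTsub hTcard
  -- strict middle inequality
  have hk' : (1 : ℝ) ≤ (k : ℝ) := by exact_mod_cast hk1
  have hmid : (k : ℝ) * ((k : ℝ) + 1) / 2 * U
      < (k : ℝ) * (x 2 - x 1) + L * ((k : ℝ) * ((k : ℝ) - 1) / 2) := by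
    have hkpos : (0 : ℝ) < (k : ℝ) := by linarith
    have := mul_lt_mul_of_pos_left hgap1 hkpos
    nlinarith [this]
  have hfin : ∑ a ∈ Sj, |x j - x a| < ∑ a ∈ S1, |x 1 - x a| := by linarith
  unfold knnScore
  have hkpos : (0 : ℝ) < 1 / (k : ℝ) := by
    apply div_pos one_pos
    exact_mod_cast Nat.pos_of_ne_zero (by omega)
  exact mul_lt_mul_of_pos_left hfin hkpos
end

section
/- For every integer k ≥ 2 and all reals 0 < L ≤ U, set n = 2k + 1 and define x_1 < x_2 < … < x_n by the gaps x_2 − x_1 = U + (k − 1)(U − L)/2, x_{i+1} − x_i = L for 2 ≤ i ≤ k, and x_{i+1} − x_i = U for k + 1 ≤ i ≤ 2k. Then the adjacent gaps among x_2, …, x_n all lie in [L, U] with maximum U and minimum L, and h_knn(1) ≤ h_knn(n). (Hence the threshold U + (k − 1)δ/2 for k-NN detection of the marginal single anomaly is necessary: at the threshold, x_1 is not strictly the highest-scoring point.) -/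
open Finset

lemma gauss_sum_real (n : ℕ) : ∑ i ∈ Finset.range n, (i : ℝ) = n * (n - 1) / 2 := by
  induction n with
  | zero => simp
  | succ m ih => rw [Finset.sum_range_succ, ih]; push_cast; ring

/-- **Necessity of the threshold `U + (k − 1)δ/2` for `k`-NN detection of the marginal
single anomaly.** For every `k ≥ 2` and `0 < L ≤ U`, with `n = 2k + 1` points whose gaps
are `x 2 − x 1 = U + (k − 1)(U − L)/2`, `x (i+1) − x i = L` for `2 ≤ i ≤ k` and
`x (i+1) − x i = U` for `k + 1 ≤ i ≤ 2k`, the adjacent gaps among `x 2, …, x n` all lie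
in `[L, U]` with maximum `U` and minimum `L`, and the `k`-NN score of `x 1` does not
exceed that of `x n`. -/
theorem knn_marginal_single_anomaly_threshold_necessary
    (k : ℕ) (hk : 2 ≤ k) (L U : ℝ) (hL : 0 < L) (hLU : L ≤ U)
    (x : ℕ → ℝ)
    (hgap1 : x 2 - x 1 = U + ((k : ℝ) - 1) * (U - L) / 2)
    (hgapL : ∀ i, 2 ≤ i → i ≤ k → x (i + 1) - x i = L)
    (hgapU : ∀ i, k + 1 ≤ i → i ≤ 2 * k → x (i + 1) - x i = U) :
    (∀ i, 2 ≤ i → i ≤ 2 * k → L ≤ x (i + 1) - x i ∧ x (i + 1) - x i ≤ U) ∧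
    (∃ i, 2 ≤ i ∧ i ≤ 2 * k ∧ x (i + 1) - x i = U) ∧
    (∃ i, 2 ≤ i ∧ i ≤ 2 * k ∧ x (i + 1) - x i = L) ∧
    ∀ S1 Sn : Finset ℕ,
      IsKNN x (2 * k + 1) k 1 S1 → IsKNN x (2 * k + 1) k (2 * k + 1) Sn →
      knnScore x k 1 S1 ≤ knnScore x k (2 * k + 1) Sn := by
  have hU : 0 < U := lt_of_lt_of_le hL hLU
  have hkR : (1:ℝ) ≤ (k:ℝ) := by exact_mod_cast Nat.one_le_of_lt hk
  refine ⟨?_, ⟨2*k, by omega, le_refl _, hgapU (2*k) (by omega) (le_refl _)⟩,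
    ⟨2, le_refl _, by omega, hgapL 2 (le_refl _) hk⟩, ?_⟩
  · intro i h2 h2k
    by_cases hik : i ≤ k
    · rw [hgapL i h2 hik]; exact ⟨le_refl _, hLU⟩
    · rw [hgapU i (by omega) h2k]; exact ⟨hLU, le_refl _⟩
  -- strict monotonicity of x on [1, 2k+1]
  have hstep : ∀ i, 1 ≤ i → i ≤ 2*k → x i < x (i+1) := by
    intro i h1 h2
    rcases Nat.lt_or_ge i 2 with h | h
    · interval_cases i
      nlinarith [hgap1]
    · by_cases hik : i ≤ k
      · have := hgapL i h hik; linarith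
      · have := hgapU i (by omega) h2; linarith
  have mono : ∀ i j, 1 ≤ i → i < j → j ≤ 2*k+1 → x i < x j := by
    intro i j h1 hij hj
    induction j with
    | zero => omega
    | succ m ih =>
      rcases Nat.lt_or_ge i m with h | h
      · exact lt_trans (ih h (by omega)) (hstep m (by omega) (by omega))
      · have : i = m := by omega
        subst this
        exact hstep i h1 (by omega)
  -- explicit positions
  have hxa : ∀ j, j ≤ k - 1 → x (2 + j) = x 2 + j * L := by
    intro j hj
    induction j with
    | zero => simp
    | succ m ih =>
      have h1 : x (2 + m + 1) - x (2 + m) = L := hgapL (2 + m) (by omega) (by omega)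
      have h2 : x (2 + m) = x 2 + m * L := ih (by omega)
      have : (2 + (m + 1)) = (2 + m) + 1 := by omega
      rw [this]
      push_cast
      linarith
  have hxb : ∀ j, j ≤ k → x (k + 1 + j) = x (k + 1) + j * U := by
    intro j hj
    induction j with
    | zero => simp
    | succ m ih =>
      have h1 : x (k + 1 + m + 1) - x (k + 1 + m) = U := hgapU (k + 1 + m) (by omega) (by omega)
      have h2 : x (k + 1 + m) = x (k + 1) + m * U := ih (by omega)
      have : (k + 1 + (m + 1)) = (k + 1 + m) + 1 := by omega
      rw [this]
      push_cast
      linarith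
  intro S1 Sn hS1 hSn
  obtain ⟨hS1sub, hS1card, hS1near⟩ := hS1
  obtain ⟨hSnsub, hSncard, hSnnear⟩ := hSn
  -- forced neighbor sets
  have hcard1 : (Finset.Icc 2 (k+1)).card = k := by simp [Nat.card_Icc]
  have hcardn : (Finset.Icc (k+1) (2*k)).card = k := by rw [Nat.card_Icc]; omega
  have hS1eq : S1 = Finset.Icc 2 (k+1) := by
    have hsub : S1 ⊆ Finset.Icc 2 (k+1) := by
      intro a ha
      by_contra haI
      have hamem := hS1sub ha
      rw [Finset.mem_erase, Finset.mem_Icc] at hamem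
      rw [Finset.mem_Icc] at haI
      -- a ≥ k+2
      have ha2 : k + 2 ≤ a := by omega
      -- there is b in Icc 2 (k+1) not in S1
      have hnsub : ¬ (Finset.Icc 2 (k+1) ⊆ S1) := by
        intro hss
        have := Finset.eq_of_subset_of_card_le hss (by rw [hS1card, hcard1])
        rw [← this, Finset.mem_Icc] at ha
        exact haI ha
      rw [Finset.not_subset] at hnsub
      obtain ⟨b, hb, hbS⟩ := hnsub
      rw [Finset.mem_Icc] at hb
      have hble := hS1near a ha b (by rw [Finset.mem_erase, Finset.mem_Icc]; omega) hbS
      have h1b : x 1 < x b := mono 1 b (le_refl _) (by omega) (by omega)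
      have hba : x b < x a := mono b a (by omega) (by omega) (by omega)
      rw [abs_of_nonpos (by linarith), abs_of_nonpos (by linarith)] at hble
      linarith
    exact Finset.eq_of_subset_of_card_le hsub (by rw [hS1card, hcard1])
  have hSneq : Sn = Finset.Icc (k+1) (2*k) := by
    have hsub : Sn ⊆ Finset.Icc (k+1) (2*k) := by
      intro a ha
      by_contra haI
      have hamem := hSnsub ha
      rw [Finset.mem_erase, Finset.mem_Icc] at hamem
      rw [Finset.mem_Icc] at haI
      have ha2 : a ≤ k := by omega
      have hnsub : ¬ (Finset.Icc (k+1) (2*k) ⊆ Sn) := by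
        intro hss
        have := Finset.eq_of_subset_of_card_le hss (by rw [hSncard, hcardn])
        rw [← this, Finset.mem_Icc] at ha
        exact haI ha
      rw [Finset.not_subset] at hnsub
      obtain ⟨b, hb, hbS⟩ := hnsub
      rw [Finset.mem_Icc] at hb
      have hble := hSnnear a ha b (by rw [Finset.mem_erase, Finset.mem_Icc]; omega) hbS
      have hab : x a < x b := mono a b (by omega) (by omega) (by omega)
      have hbn : x b < x (2*k+1) := mono b (2*k+1) (by omega) (by omega) (le_refl _)
      rw [abs_of_nonneg (by linarith), abs_of_nonneg (by linarith)] at hble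
      linarith
    exact Finset.eq_of_subset_of_card_le hsub (by rw [hSncard, hcardn])
  -- compute the two sums
  have hsum1 : ∑ a ∈ Finset.Icc 2 (k+1), |x 1 - x a|
      = (k:ℝ) * (x 2 - x 1) + L * ((k:ℝ) * ((k:ℝ) - 1) / 2) := by
    rw [← Finset.Ico_add_one_right_eq_Icc, Finset.sum_Ico_eq_sum_range]
    have hidx : k + 1 + 1 - 2 = k := by omega
    rw [hidx]
    have : ∀ i ∈ Finset.range k, |x 1 - x (2 + i)| = (x 2 - x 1) + (i:ℝ) * L := by
      intro i hi
      rw [Finset.mem_range] at hi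
      rw [hxa i (by omega)]
      have h12 : x 1 < x 2 := mono 1 2 (le_refl _) (by omega) (by omega)
      have hiL : (0:ℝ) ≤ (i:ℝ) * L := by positivity
      rw [abs_of_nonpos (by linarith)]
      ring
    rw [Finset.sum_congr rfl this, Finset.sum_add_distrib, Finset.sum_const,
      Finset.card_range, ← Finset.sum_mul, gauss_sum_real]
    ring
  have hsumn : ∑ a ∈ Finset.Icc (k+1) (2*k), |x (2*k+1) - x a|
      = U * ((k:ℝ) * ((k:ℝ) + 1) / 2) := by
    rw [← Finset.Ico_add_one_right_eq_Icc, Finset.sum_Ico_eq_sum_range]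
    have hidx : 2*k + 1 - (k + 1) = k := by omega
    rw [hidx]
    have hn : x (2*k+1) = x (k+1) + (k:ℝ) * U := by
      have := hxb k (le_refl _)
      have h : k + 1 + k = 2*k + 1 := by omega
      rwa [h] at this
    have : ∀ i ∈ Finset.range k, |x (2*k+1) - x (k + 1 + i)| = ((k:ℝ) - (i:ℝ)) * U := by
      intro i hi
      rw [Finset.mem_range] at hi
      rw [hxb i (by omega), hn]
      have hik : (i:ℝ) < (k:ℝ) := by exact_mod_cast hi
      rw [abs_of_nonneg (by nlinarith)]
      ring
    rw [Finset.sum_congr rfl this, ← Finset.sum_mul, Finset.sum_sub_distrib,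
      Finset.sum_const, Finset.card_range, gauss_sum_real]
    ring
  rw [hS1eq, hSneq]
  unfold knnScore
  rw [hsum1, hsumn, hgap1]
  apply le_of_eq
  ring
end

section
/- There exist constants c > 0 and N ∈ ℕ such that for every even integer n_0 ≥ N and every real θ with 1 ≤ θ ≤ c·√(n_0), the n = n_0 + 1 points defined by x_i = i for 1 ≤ i ≤ n_0/2, x_{n_0/2+1} = n_0/2 + θ, and x_{n_0/2+1+j} = n_0/2 + 2θ + (j − 1) for 1 ≤ j ≤ n_0/2 satisfy h̄(n_0/2 + 1) > h̄(1); that is, iForest assigns the central anomaly a strictly larger expected depth than the leftmost normal point, so a separation of order √(n_0) is necessary for iForest to detect a central single anomaly. -/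
open Finset

lemma Nat_Icc_succ_left' (a b : ℕ) : Icc a.succ b = Ioc a b :=
  Finset.Icc_add_one_left_eq_Ioc a b

lemma aux_log_le {a : ℝ} (ha : 0 < a) : Real.log (a+1) - Real.log a ≤ 1/a := by
  rw [← Real.log_div (by positivity) ha.ne']
  have h := Real.log_le_sub_one_of_pos (show (0:ℝ) < (a+1)/a by positivity)
  have : (a+1)/a - 1 = 1/a := by field_simp; ring
  linarith

lemma aux_le_log {a : ℝ} (ha : 0 < a) : 1/(a+1) ≤ Real.log (a+1) - Real.log a := by
  have h := Real.log_le_sub_one_of_pos (show (0:ℝ) < a/(a+1) by positivity)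
  rw [Real.log_div ha.ne' (by positivity)] at h
  have : a/(a+1) - 1 = -(1/(a+1)) := by field_simp; ring
  linarith

lemma sum_inv_ge (a : ℝ) (ha : 0 < a) (n : ℕ) :
    Real.log (a + n) - Real.log a ≤ ∑ k ∈ Finset.range n, 1/(a + k) := by
  induction n with
  | zero => simp
  | succ n ih =>
      rw [Finset.sum_range_succ]
      have h1 : Real.log (a + n + 1) - Real.log (a + n) ≤ 1/(a + n) :=
        aux_log_le (by positivity)
      push_cast
      rw [show a + ((n:ℝ) + 1) = a + n + 1 by ring]
      linarith

lemma harmonic_le (n : ℕ) : ∑ k ∈ Finset.range n, 1/((k:ℝ)+1) ≤ 1 + Real.log n := by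
  induction n with
  | zero => simp
  | succ n ih =>
      rcases Nat.eq_zero_or_pos n with rfl | hn
      · simp
      · rw [Finset.sum_range_succ]
        have h1 : 1/((n:ℝ)+1) ≤ Real.log ((n:ℝ)+1) - Real.log n :=
          aux_le_log (by positivity)
        push_cast
        linarith

/-- **Necessity of a `√n₀` separation for iForest to detect a central single anomaly.**
There are constants `c > 0` and `N` such that for every even `n₀ ≥ N` and every
`1 ≤ θ ≤ c·√n₀`, the `n = n₀ + 1` points given by `x i = i` for `i ≤ n₀/2`,
`x (n₀/2 + 1) = n₀/2 + θ`, and `x (n₀/2 + 1 + j) = n₀/2 + 2θ + (j − 1)` for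
`1 ≤ j ≤ n₀/2` satisfy `h̄(n₀/2 + 1) > h̄(1)`. -/
theorem iforest_central_anomaly_separation_necessary :
    ∃ c : ℝ, ∃ N : ℕ, 0 < c ∧
      ∀ n₀ : ℕ, Even n₀ → N ≤ n₀ →
      ∀ θ : ℝ, 1 ≤ θ → θ ≤ c * Real.sqrt (n₀ : ℝ) →
      hbar
          (fun i => if i ≤ n₀ / 2 then (i : ℝ)
            else if i = n₀ / 2 + 1 then ((n₀ / 2 : ℕ) : ℝ) + θ
            else ((n₀ / 2 : ℕ) : ℝ) + 2 * θ + ((i : ℝ) - ((n₀ / 2 : ℕ) : ℝ) - 2))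
          (n₀ + 1) 1
        < hbar
          (fun i => if i ≤ n₀ / 2 then (i : ℝ)
            else if i = n₀ / 2 + 1 then ((n₀ / 2 : ℕ) : ℝ) + θ
            else ((n₀ / 2 : ℕ) : ℝ) + 2 * θ + ((i : ℝ) - ((n₀ / 2 : ℕ) : ℝ) - 2))
          (n₀ + 1) (n₀ / 2 + 1) := by
  refine ⟨1/10, 100, by norm_num, ?_⟩
  intro n₀ hev hN θ hθ1 hθ2
  obtain ⟨m, rfl⟩ := hev
  have h2 : (m + m) / 2 = m := by omega
  have hm : 50 ≤ m := by omega
  simp only [h2]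
  set X : ℕ → ℝ := fun i => if i ≤ m then (i : ℝ)
      else if i = m + 1 then ((m : ℕ) : ℝ) + θ
      else ((m : ℕ) : ℝ) + 2 * θ + ((i : ℝ) - ((m : ℕ) : ℝ) - 2) with hX
  show hbar X (m + m + 1) 1 < hbar X (m + m + 1) (m + 1)
  -- basic values
  have hθ0 : (0:ℝ) < θ := by linarith
  have hm0 : (0:ℝ) < m := by positivity
  have hm50 : (50:ℝ) ≤ m := by exact_mod_cast hm
  have hXle : ∀ i, i ≤ m → X i = i := fun i hi => if_pos hi
  have hXmid : X (m+1) = (m:ℝ) + θ := by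
    simp only [hX]
    rw [if_neg (by omega)]
    simp
  have hXhigh : ∀ i, m + 2 ≤ i → X i = (m:ℝ) + 2*θ + ((i:ℝ) - (m:ℝ) - 2) := by
    intro i hi
    simp only [hX]
    rw [if_neg (by omega), if_neg (by omega)]
  -- squared bound on θ
  have hθsq : θ^2 ≤ (m:ℝ)/50 := by
    have h0 : (0:ℝ) ≤ ((m+m : ℕ) : ℝ) := by positivity
    have hs := Real.sq_sqrt h0
    have hs0 := Real.sqrt_nonneg ((m+m : ℕ) : ℝ)
    have hcast : ((m+m : ℕ) : ℝ) = 2*(m:ℝ) := by push_cast; ring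
    nlinarith [hθ2, hθ1]
  -- ====== upper bound for hbar at 1 ======
  have hL : hbar X (m+m+1) 1 ≤ 4 + Real.log m := by
    unfold hbar
    rw [Finset.Icc_eq_empty (by omega), Finset.sum_empty, zero_add]
    rw [Nat_Icc_succ_left']
    rw [← Finset.sum_Ioc_consecutive _ (show 1 ≤ m by omega) (show m ≤ m+m+1 by omega)]
    rw [← Finset.sum_Ioc_consecutive _ (show m ≤ m+2 by omega) (show m+2 ≤ m+m+1 by omega)]
    rw [show m+2 = (m+1)+1 from rfl,
        Finset.sum_Ioc_succ_top (show m ≤ m+1 by omega),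
        Nat.Ioc_succ_singleton, Finset.sum_singleton]
    have hP1 : ∑ j ∈ Ioc 1 m, (X j - X (j-1)) / (X j - X 1) ≤ 1 + Real.log m := by
      have e1 : ∑ j ∈ Ioc 1 m, (X j - X (j-1)) / (X j - X 1)
          = ∑ i ∈ range (m-1), 1/((i:ℝ)+1) := by
        rw [← Nat_Icc_succ_left', ← Finset.Ico_add_one_right_eq_Icc, Finset.sum_Ico_eq_sum_range]
        refine Finset.sum_congr (by rw [show m+1-2 = m-1 from by omega]) ?_
        intro i hi
        simp only [Finset.mem_range] at hi
        rw [hXle (2+i) (by omega), hXle (2+i-1) (by omega), hXle 1 (by omega),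
            show 2+i-1 = i+1 from by omega]
        push_cast
        rw [show (2:ℝ)+i - (i+1) = 1 by ring, show (2:ℝ)+i - 1 = i+1 by ring]
      rw [e1]
      calc ∑ i ∈ range (m-1), 1/((i:ℝ)+1) ≤ 1 + Real.log (m-1 : ℕ) := harmonic_le (m-1)
        _ ≤ 1 + Real.log m := by
            have : ((m-1 : ℕ) : ℝ) ≤ (m:ℝ) := by
              have : m - 1 ≤ m := by omega
              exact_mod_cast this
            have h1 : (0:ℝ) < ((m-1:ℕ):ℝ) := by
              have : 1 ≤ m - 1 := by omega
              exact_mod_cast Nat.lt_of_lt_of_le Nat.zero_lt_one this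
            linarith [Real.log_le_log h1 this]
    have hF1 : (X (m+1) - X (m+1-1)) / (X (m+1) - X 1) ≤ 1 := by
      rw [show m+1-1 = m from rfl, hXmid, hXle m le_rfl, hXle 1 (by omega)]
      rw [div_le_one (by push_cast; linarith)]
      push_cast; linarith
    have hF2 : (X (m+1+1) - X (m+1+1-1)) / (X (m+1+1) - X 1) ≤ 1 := by
      rw [show m+1+1-1 = m+1 from rfl, hXmid,
          hXhigh (m+1+1) (by omega), hXle 1 (by omega)]
      push_cast
      rw [div_le_one (by linarith)]
      linarith
    have hP4 : ∑ j ∈ Ioc (m+2) (m+m+1), (X j - X (j-1)) / (X j - X 1) ≤ 1 := by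
      have hb : ∀ j ∈ Ioc (m+2) (m+m+1),
          (X j - X (j-1)) / (X j - X 1) ≤ 1/((m:ℝ)+2) := by
        intro j hj
        simp only [Finset.mem_Ioc] at hj
        rw [hXhigh j (by omega), hXhigh (j-1) (by omega), hXle 1 (by omega)]
        rw [Nat.cast_sub (show 1 ≤ j by omega)]
        have hj3 : (m:ℝ) + 3 ≤ (j:ℝ) := by exact_mod_cast (show m+3 ≤ j by omega)
        rw [div_le_div_iff₀ (by push_cast; linarith) (by positivity)]
        push_cast
        ring_nf
        nlinarith
      calc ∑ j ∈ Ioc (m+2) (m+m+1), (X j - X (j-1)) / (X j - X 1)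
          ≤ (Ioc (m+2) (m+m+1)).card • (1/((m:ℝ)+2)) := Finset.sum_le_card_nsmul _ _ _ hb
        _ = ((m-1 : ℕ) : ℝ) * (1/((m:ℝ)+2)) := by
            rw [Nat.card_Ioc, nsmul_eq_mul]
            congr 1
            norm_cast
            omega
        _ ≤ 1 := by
            rw [mul_one_div, div_le_one (by linarith)]
            have : ((m-1:ℕ):ℝ) ≤ (m:ℝ) := by exact_mod_cast (show m-1 ≤ m by omega)
            linarith
    linarith
  -- ====== lower bound for hbar at m+1 ======
  have hR : 2 + 2*(Real.log (θ + m) - Real.log (θ + 1)) ≤ hbar X (m+m+1) (m+1) := by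
    unfold hbar
    have hA : 1 + (Real.log (θ + m) - Real.log (θ + 1))
        ≤ ∑ j ∈ Icc 2 (m+1), (X j - X (j-1)) / (X (m+1) - X (j-1)) := by
      rw [Nat_Icc_succ_left', Finset.sum_Ioc_succ_top (show 1 ≤ m by omega)]
      have hend : (X (m+1) - X (m+1-1)) / (X (m+1) - X (m+1-1)) = 1 := by
        rw [show m+1-1 = m from rfl, hXmid, hXle m le_rfl]
        rw [div_self (by push_cast; linarith)]
      rw [hend]
      have hsum : Real.log (θ + m) - Real.log (θ + 1)
          ≤ ∑ j ∈ Ioc 1 m, (X j - X (j-1)) / (X (m+1) - X (j-1)) := by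
        rw [← Nat_Icc_succ_left', ← Finset.Ico_add_one_right_eq_Icc, Finset.sum_Ico_eq_sum_range,
            show m+1-2 = m-1 from by omega]
        have htel : ∑ i ∈ range (m-1),
            (Real.log (θ + m - i) - Real.log (θ + m - (i+1 : ℕ)))
            = Real.log (θ + m) - Real.log (θ + 1) := by
          rw [Finset.sum_range_sub' (fun i => Real.log (θ + m - i)),
              Nat.cast_sub (show 1 ≤ m by omega), Nat.cast_zero, Nat.cast_one,
              show θ + (m:ℝ) - 0 = θ + m by ring,
              show θ + (m:ℝ) - ((m:ℝ) - 1) = θ + 1 by ring]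
        rw [← htel]
        apply Finset.sum_le_sum
        intro i hi
        simp only [Finset.mem_range] at hi
        rw [hXle (2+i) (by omega), hXle (2+i-1) (by omega), hXmid,
            show 2+i-1 = i+1 from by omega]
        have hi2 : (i:ℝ) ≤ (m:ℝ) - 2 := by
          have : i ≤ m - 2 := by omega
          have h' : (i:ℝ) ≤ ((m-2:ℕ):ℝ) := by exact_mod_cast this
          have h'' : ((m-2:ℕ):ℝ) = (m:ℝ) - 2 := by
            rw [Nat.cast_sub (by omega)]; norm_num
          linarith [h''.symm ▸ h']
        have key := aux_log_le (show (0:ℝ) < θ + (m:ℝ) - (i:ℝ) - 1 by linarith)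
        push_cast
        rw [show θ + (m:ℝ) - ((i:ℝ)+1) = θ + m - i - 1 by ring,
            show (2:ℝ) + i - (i+1) = 1 by ring,
            show (m:ℝ) + θ - (i+1) = θ + m - i - 1 by ring]
        calc Real.log (θ + (m:ℝ) - i) - Real.log (θ + m - i - 1)
            = Real.log ((θ + m - i - 1) + 1) - Real.log (θ + m - i - 1) := by ring_nf
          _ ≤ 1/(θ + m - i - 1) := key
      linarith
    have hB : 1 + (Real.log (θ + m) - Real.log (θ + 1))
        ≤ ∑ j ∈ Icc (m+1+1) (m+m+1), (X j - X (j-1)) / (X j - X (m+1)) := by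
      rw [Nat_Icc_succ_left']
      rw [← Finset.sum_Ioc_consecutive _ (show m+1 ≤ m+2 by omega) (show m+2 ≤ m+m+1 by omega)]
      rw [show m+2 = (m+1)+1 from rfl, Nat.Ioc_succ_singleton, Finset.sum_singleton]
      have hfirst : (X (m+1+1) - X (m+1+1-1)) / (X (m+1+1) - X (m+1)) = 1 := by
        rw [show m+1+1-1 = m+1 from rfl, hXmid, hXhigh (m+1+1) (by omega)]
        push_cast
        rw [div_self (by linarith)]
      rw [hfirst]
      have hsum : Real.log (θ + m) - Real.log (θ + 1)
          ≤ ∑ j ∈ Ioc ((m+1)+1) (m+m+1), (X j - X (j-1)) / (X j - X (m+1)) := by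
        rw [← Nat_Icc_succ_left', ← Finset.Ico_add_one_right_eq_Icc, Finset.sum_Ico_eq_sum_range,
            show m+m+1+1-(m+1+1+1) = m-1 from by omega]
        have e2 : ∑ i ∈ range (m-1),
            (X (m+1+1+1+i) - X (m+1+1+1+i-1)) / (X (m+1+1+1+i) - X (m+1))
            = ∑ i ∈ range (m-1), 1/((θ+1) + (i:ℕ)) := by
          refine Finset.sum_congr rfl ?_
          intro i hi
          simp only [Finset.mem_range] at hi
          rw [hXhigh (m+1+1+1+i) (by omega), hXhigh (m+1+1+1+i-1) (by omega), hXmid,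
              show m+1+1+1+i-1 = m+2+i from by omega]
          push_cast
          rw [show (m:ℝ)+2*θ+((m:ℝ)+1+1+1+(i:ℝ)-(m:ℝ)-2) - ((m:ℝ)+2*θ+((m:ℝ)+2+(i:ℝ)-(m:ℝ)-2)) = 1 by ring,
              show (m:ℝ)+2*θ+((m:ℝ)+1+1+1+(i:ℝ)-(m:ℝ)-2) - ((m:ℝ)+θ) = θ+1+(i:ℝ) by ring]
        rw [e2]
        have := sum_inv_ge (θ+1) (by linarith) (m-1)
        have hc : ((m-1:ℕ):ℝ) = (m:ℝ) - 1 := by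
          rw [Nat.cast_sub (by omega)]; norm_num
        rw [hc] at this
        rw [show θ+1+((m:ℝ)-1) = θ+(m:ℝ) by ring] at this
        exact this
      linarith
    linarith
  -- ====== final arithmetic ======
  have hexp : Real.exp 2 * (4*θ^2) < (m:ℝ) := by
    have h1 : Real.exp 2 < 7.39 := by
      have := Real.exp_one_lt_d9
      calc Real.exp 2 = Real.exp 1 * Real.exp 1 := by
            rw [← Real.exp_add]; norm_num
        _ < 2.7182818286 * 2.7182818286 := by
            apply mul_lt_mul' (le_of_lt this) this (le_of_lt (Real.exp_pos 1))
            norm_num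
        _ < 7.39 := by norm_num
    nlinarith [Real.exp_pos (2:ℝ)]
  have hlogm : 2 + 2*Real.log (2*θ) < Real.log m := by
    have h1 : 2 + Real.log (4*θ^2) < Real.log m := by
      have := Real.log_lt_log (show (0:ℝ) < Real.exp 2 * (4*θ^2) by positivity) hexp
      rw [Real.log_mul (Real.exp_ne_zero 2) (by positivity), Real.log_exp] at this
      linarith
    have h2 : Real.log (4*θ^2) = 2*Real.log (2*θ) := by
      rw [show (4:ℝ)*θ^2 = (2*θ)^2 by ring, Real.log_pow]
      push_cast; ring
    linarith
  have hmono1 : Real.log (m:ℝ) ≤ Real.log (θ + m) :=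
    Real.log_le_log hm0 (by linarith)
  have hmono2 : Real.log (θ + 1) ≤ Real.log (2*θ) :=
    Real.log_le_log (by linarith) (by linarith)
  linarith
end

section
/- Let n_0 ≥ 4 be even, m = n_0/2, n = n_0 + 1, and let k be an even integer with 2 ≤ k ≤ m − 1. Let x_1 < … < x_n be real numbers whose adjacent gaps x_{i+1} − x_i with i ∉ {m, m+1} all lie in [L, U] (0 < L ≤ U), and set θ = min(x_{m+1} − x_m, x_{m+2} − x_{m+1}). If θ + (k/2 − 1)·L/2 > (k + 1)·U/2, then h_knn(m+1) > h_knn(j) for every j ≠ m+1; that is, the k-NN detector detects the central single anomaly. -/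
open Finset

lemma aux_sum_range_card_le (S : Finset ℕ) : ∑ i ∈ Finset.range S.card, i ≤ ∑ i ∈ S, i := by
  induction S using Finset.strongInduction with
  | _ S ih =>
    rcases S.eq_empty_or_nonempty with rfl | hne
    · simp
    · have hM : S.max' hne ∈ S := S.max'_mem hne
      have h1 : S.card ≤ S.max' hne + 1 := by
        have hsub : S ⊆ Finset.range (S.max' hne + 1) :=
          fun a ha => Finset.mem_range.2 (Nat.lt_succ_of_le (S.le_max' a ha))
        simpa using Finset.card_le_card hsub
      have ih' := ih (S.erase (S.max' hne)) (Finset.erase_ssubset hM)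
      have hc : (S.erase (S.max' hne)).card = S.card - 1 := Finset.card_erase_of_mem hM
      have hS : ∑ i ∈ S, i = S.max' hne + ∑ i ∈ S.erase (S.max' hne), i :=
        (Finset.add_sum_erase S id hM).symm
      have hcard : S.card = (S.card - 1) + 1 := by
        have := Finset.card_pos.2 hne; omega
      rw [hS, hcard, Finset.sum_range_succ]
      rw [hc] at ih'
      omega

lemma aux_cast_sum_ge (S : Finset ℕ) :
    (S.card : ℝ) * ((S.card : ℝ) - 1) / 2 ≤ ∑ i ∈ S, (i : ℝ) := by
  have h := aux_sum_range_card_le S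
  have h2 : (∑ i ∈ Finset.range S.card, i) * 2 = S.card * (S.card - 1) :=
    Finset.sum_range_id_mul_two S.card
  have : (S.card * (S.card - 1) : ℕ) ≤ (∑ i ∈ S, i) * 2 := by omega
  have hcast : ((S.card * (S.card - 1) : ℕ) : ℝ) ≤ (((∑ i ∈ S, i) * 2 : ℕ) : ℝ) :=
    Nat.cast_le.2 this
  push_cast at hcast
  rcases Nat.eq_zero_or_pos S.card with h0 | h0
  · simp [h0]
    positivity
  · have : ((S.card - 1 : ℕ) : ℝ) = (S.card : ℝ) - 1 := by
      have : 1 ≤ S.card := h0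
      push_cast [this]
      ring
    rw [this] at hcast
    linarith

lemma aux_sum_abs_range (K s : ℕ) (hs : s ≤ K) :
    ∑ i ∈ Finset.range (K + 1), |(s : ℝ) - (i : ℝ)| ≤ (K : ℝ) * ((K : ℝ) + 1) / 2 := by
  induction K with
  | zero => interval_cases s <;> simp
  | succ K ihK =>
    rw [Finset.sum_range_succ]
    rcases Nat.lt_or_ge s (K + 1) with h | h
    · have h1 := ihK (Nat.lt_succ_iff.mp h)
      have h2 : |(s : ℝ) - ((K+1 : ℕ) : ℝ)| ≤ (K : ℝ) + 1 := by
        rw [abs_sub_comm, abs_of_nonneg]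
        · have : (s:ℝ) ≥ 0 := Nat.cast_nonneg s
          push_cast; linarith
        · have : (s:ℝ) ≤ K + 1 := by exact_mod_cast Nat.le_of_lt_succ (Nat.lt_succ_of_lt h)
          push_cast; linarith
      push_cast at h1 h2 ⊢
      nlinarith
    · have hsK : s = K + 1 := le_antisymm hs h
      subst hsK
      have hterm : ∀ i ∈ Finset.range (K + 1), |((K+1 : ℕ) : ℝ) - (i : ℝ)| = ((K+1 : ℕ) : ℝ) - i := by
        intro i hi
        rw [abs_of_nonneg]
        have : (i:ℝ) ≤ K := by exact_mod_cast Nat.le_of_lt_succ (Finset.mem_range.1 hi)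
        push_cast; linarith
      rw [Finset.sum_congr rfl hterm, Finset.sum_sub_distrib, Finset.sum_const]
      have hid : ((∑ i ∈ Finset.range (K+1), i : ℕ) : ℝ) = (K:ℝ) * (K+1) / 2 := by
        have := Finset.sum_range_id_mul_two (K+1)
        have h2 : ((∑ i ∈ Finset.range (K+1), i : ℕ) : ℝ) * 2 = ((K+1 : ℕ) : ℝ) * ((K+1-1 : ℕ):ℝ) := by
          exact_mod_cast congrArg (Nat.cast : ℕ → ℝ) this
        simp at h2
        push_cast at h2 ⊢
        linarith
      rw [← Nat.cast_sum] at *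
      push_cast at hid ⊢
      simp [abs_sub_comm]
      rw [hid]
      push_cast
      ring_nf
      nlinarith [sq_nonneg ((K:ℝ))]



lemma aux_seg_lb (x : ℕ → ℝ) (L : ℝ) :
    ∀ (d a : ℕ), (∀ i, a ≤ i → i < a + d → L ≤ x (i + 1) - x i) →
      (d : ℝ) * L ≤ x (a + d) - x a := by
  intro d
  induction d with
  | zero => intro a _; simp
  | succ d ih =>
    intro a h
    have h1 := ih a (fun i hi hi2 => h i hi (by omega))
    have h2 := h (a + d) (by omega) (by omega)
    have : a + (d + 1) = (a + d) + 1 := by omega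
    rw [this]
    push_cast
    linarith

lemma aux_seg_ub (x : ℕ → ℝ) (U : ℝ) :
    ∀ (d a : ℕ), (∀ i, a ≤ i → i < a + d → x (i + 1) - x i ≤ U) →
      x (a + d) - x a ≤ (d : ℝ) * U := by
  intro d
  induction d with
  | zero => intro a _; simp
  | succ d ih =>
    intro a h
    have h1 := ih a (fun i hi hi2 => h i hi (by omega))
    have h2 := h (a + d) (by omega) (by omega)
    have : a + (d + 1) = (a + d) + 1 := by omega
    rw [this]
    push_cast
    linarith

lemma aux_knn_sum_le {x : ℕ → ℝ} {n k i : ℕ} {S T : Finset ℕ}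
    (hS : IsKNN x n k i S) (hT : T ⊆ (Finset.Icc 1 n).erase i) (hTc : T.card = k) :
    ∑ a ∈ S, |x i - x a| ≤ ∑ a ∈ T, |x i - x a| := by
  obtain ⟨hSsub, hScard, hmin⟩ := hS
  have hcards : (S \ T).card = (T \ S).card := by
    have h1 := Finset.card_sdiff_add_card_inter S T
    have h2 := Finset.card_sdiff_add_card_inter T S
    rw [Finset.inter_comm] at h2
    omega
  have key : ∑ a ∈ S \ T, |x i - x a| ≤ ∑ a ∈ T \ S, |x i - x a| := by
    rcases (T \ S).eq_empty_or_nonempty with he | hne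
    · have h0 : (S \ T).card = 0 := by rw [hcards, he]; simp
      rw [Finset.card_eq_zero] at h0
      simp [h0, he]
    · obtain ⟨b₀, hb₀mem, hb₀min⟩ := Finset.exists_min_image (T \ S) (fun b => |x i - x b|) hne
      have hble : ∀ a ∈ S \ T, |x i - x a| ≤ |x i - x b₀| := by
        intro a ha
        exact hmin a (Finset.mem_sdiff.1 ha).1 b₀ (hT (Finset.mem_sdiff.1 hb₀mem).1)
          (Finset.mem_sdiff.1 hb₀mem).2
      calc ∑ a ∈ S \ T, |x i - x a| ≤ (S \ T).card • |x i - x b₀| :=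
            Finset.sum_le_card_nsmul _ _ _ hble
        _ = (T \ S).card • |x i - x b₀| := by rw [hcards]
        _ ≤ ∑ a ∈ T \ S, |x i - x a| := Finset.card_nsmul_le_sum _ _ _ hb₀min
  have hSdec : ∑ a ∈ S \ T, |x i - x a| + ∑ a ∈ S ∩ T, |x i - x a| = ∑ a ∈ S, |x i - x a| := by
    have := Finset.sum_sdiff (f := fun a => |x i - x a|) (Finset.inter_subset_left (s₁ := S) (s₂ := T))
    rwa [Finset.sdiff_inter_self_left] at this
  have hTdec : ∑ a ∈ T \ S, |x i - x a| + ∑ a ∈ T ∩ S, |x i - x a| = ∑ a ∈ T, |x i - x a| := by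
    have := Finset.sum_sdiff (f := fun a => |x i - x a|) (Finset.inter_subset_left (s₁ := T) (s₂ := S))
    rwa [Finset.sdiff_inter_self_left] at this
  rw [Finset.inter_comm] at hTdec
  linarith

lemma aux_block_ub (x : ℕ → ℝ) (U : ℝ) (hU : 0 ≤ U) (lo hi j k : ℕ)
    (hlo : lo ≤ j) (hj : j ≤ hi) (hk : lo + k ≤ hi)
    (hdist : ∀ a b, lo ≤ a → a ≤ b → b ≤ hi → |x b - x a| ≤ ((b - a : ℕ) : ℝ) * U) :
    ∃ T : Finset ℕ, T ⊆ (Finset.Icc lo hi).erase j ∧ T.card = k ∧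
      ∑ a ∈ T, |x j - x a| ≤ U * ((k : ℝ) * ((k : ℝ) + 1) / 2) := by
  set a0 := min j (hi - k) with ha0
  have h1 : lo ≤ a0 := by omega
  have h2 : a0 ≤ j := by omega
  have h3 : j ≤ a0 + k := by omega
  have h4 : a0 + k ≤ hi := by omega
  refine ⟨(Finset.Icc a0 (a0 + k)).erase j, ?_, ?_, ?_⟩
  · intro t ht
    rw [Finset.mem_erase] at ht ⊢
    refine ⟨ht.1, ?_⟩
    rw [Finset.mem_Icc] at ht ⊢
    omega
  · rw [Finset.card_erase_of_mem (Finset.mem_Icc.2 ⟨h2, h3⟩), Nat.card_Icc]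
    omega
  · have step1 : ∑ a ∈ (Finset.Icc a0 (a0 + k)).erase j, |x j - x a|
        ≤ ∑ a ∈ Finset.Icc a0 (a0 + k), |x j - x a| :=
      Finset.sum_le_sum_of_subset_of_nonneg (Finset.erase_subset _ _)
        (fun a _ _ => abs_nonneg _)
    have hIcc : Finset.Icc a0 (a0 + k) = Finset.Ico a0 (a0 + k + 1) :=
      (Finset.Ico_add_one_right_eq_Icc ..).symm
    have step2 : ∑ a ∈ Finset.Icc a0 (a0 + k), |x j - x a|
        = ∑ i ∈ Finset.range (k + 1), |x j - x (a0 + i)| := by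
      have hrange : a0 + k + 1 - a0 = k + 1 := by omega
      rw [hIcc, Finset.sum_Ico_eq_sum_range, hrange]
    have step3 : ∑ i ∈ Finset.range (k + 1), |x j - x (a0 + i)|
        ≤ ∑ i ∈ Finset.range (k + 1), U * |((j - a0 : ℕ) : ℝ) - (i : ℝ)| := by
      apply Finset.sum_le_sum
      intro i hi
      rw [Finset.mem_range] at hi
      rcases Nat.le_total (a0 + i) j with hc | hc
      · have := hdist (a0 + i) j (by omega) hc hj
        have he : ((j - (a0 + i) : ℕ) : ℝ) = ((j - a0 : ℕ) : ℝ) - (i : ℝ) := by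
          have : (i:ℕ) ≤ j - a0 := by omega
          push_cast [Nat.cast_sub (by omega : a0 + i ≤ j), Nat.cast_sub (by omega : a0 ≤ j)]
          ring
        rw [he] at this
        calc |x j - x (a0 + i)| ≤ (((j - a0 : ℕ) : ℝ) - (i:ℝ)) * U := this
          _ ≤ U * |((j - a0 : ℕ) : ℝ) - (i : ℝ)| := by
              rw [mul_comm]
              exact mul_le_mul_of_nonneg_left (le_abs_self _) hU
      · have := hdist j (a0 + i) hlo hc (by omega)
        rw [abs_sub_comm] at this
        have he : (((a0 + i) - j : ℕ) : ℝ) = (i : ℝ) - ((j - a0 : ℕ) : ℝ) := by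
          push_cast [Nat.cast_sub (by omega : j ≤ a0 + i), Nat.cast_sub (by omega : a0 ≤ j)]
          ring
        rw [he] at this
        calc |x j - x (a0 + i)| ≤ ((i:ℝ) - ((j - a0 : ℕ) : ℝ)) * U := this
          _ ≤ U * |((j - a0 : ℕ) : ℝ) - (i : ℝ)| := by
              rw [mul_comm, abs_sub_comm]
              exact mul_le_mul_of_nonneg_left (le_abs_self _) hU
    have step4 : ∑ i ∈ Finset.range (k + 1), U * |((j - a0 : ℕ) : ℝ) - (i : ℝ)|
        ≤ U * ((k : ℝ) * ((k : ℝ) + 1) / 2) := by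
      rw [← Finset.mul_sum]
      exact mul_le_mul_of_nonneg_left (aux_sum_abs_range k (j - a0) (by omega)) hU
    linarith

/-- **`k`-NN detects the central single anomaly (sufficiency).**
Let `n₀ ≥ 4` be even, `m = n₀/2`, `n = n₀ + 1`, `k` even with `2 ≤ k ≤ m − 1`, and let
`x 1 < … < x n` have all adjacent gaps with index `i ∉ {m, m+1}` in `[L, U]`
(`0 < L ≤ U`), with `θ = min(x (m+1) − x m, x (m+2) − x (m+1))`. If
`θ + (k/2 − 1)·L/2 > (k + 1)·U/2` then the `k`-NN score of `x (m+1)` strictly exceeds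
the score of every other point. -/
theorem knn_detects_central_single_anomaly
    (n₀ : ℕ) (hn₀even : Even n₀) (hn₀ : 4 ≤ n₀)
    (k : ℕ) (hkeven : Even k) (hk2 : 2 ≤ k) (hkm : k ≤ n₀ / 2 - 1)
    (x : ℕ → ℝ) (hx : ∀ i, 1 ≤ i → i < n₀ + 1 → x i < x (i + 1))
    (L U : ℝ) (hL : 0 < L) (hLU : L ≤ U)
    (hgaps : ∀ i, 1 ≤ i → i ≤ n₀ → i ≠ n₀ / 2 → i ≠ n₀ / 2 + 1 →
      L ≤ x (i + 1) - x i ∧ x (i + 1) - x i ≤ U)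
    (hθ : min (x (n₀ / 2 + 1) - x (n₀ / 2)) (x (n₀ / 2 + 2) - x (n₀ / 2 + 1))
        + ((k : ℝ) / 2 - 1) * L / 2 > ((k : ℝ) + 1) * U / 2) :
    ∀ j, 1 ≤ j → j ≤ n₀ + 1 → j ≠ n₀ / 2 + 1 →
      ∀ Sc Sj : Finset ℕ,
        IsKNN x (n₀ + 1) k (n₀ / 2 + 1) Sc → IsKNN x (n₀ + 1) k j Sj →
        knnScore x k j Sj < knnScore x k (n₀ / 2 + 1) Sc := by
  intro j hj1 hjn hjc Sc Sj hSc hSj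
  classical
  set m := n₀ / 2 with hmdef
  have hn₀m : n₀ = 2 * m := by
    have := Nat.even_iff.mp hn₀even
    omega
  have hm2 : 2 ≤ m := by omega
  obtain ⟨t, ht⟩ := hkeven
  have ht1 : 1 ≤ t := by omega
  have hkm1 : k ≤ m - 1 := hkm
  set θ := min (x (m + 1) - x m) (x (m + 2) - x (m + 1)) with hθdef
  -- monotonicity
  have mono0 : ∀ (d a : ℕ), 1 ≤ a → a + d ≤ n₀ + 1 → x a ≤ x (a + d) := by
    intro d
    induction d with
    | zero => intro a _ _; simp
    | succ d ih =>
      intro a ha hd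
      have h1 := ih a ha (by omega)
      have h2 := hx (a + d) (by omega) (by omega)
      have : a + (d + 1) = (a + d) + 1 := by omega
      rw [this]
      linarith
  have mono : ∀ a b, 1 ≤ a → a ≤ b → b ≤ n₀ + 1 → x a ≤ x b := by
    intro a b ha hab hb
    have := mono0 (b - a) a ha (by omega)
    rwa [Nat.add_sub_cancel' hab] at this
  -- segment bounds
  have hsegL_left : ∀ a b, 1 ≤ a → a ≤ b → b ≤ m → ((b - a : ℕ) : ℝ) * L ≤ x b - x a := by
    intro a b ha hab hb
    have := aux_seg_lb x L (b - a) a (by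
      intro i hi1 hi2
      exact (hgaps i (by omega) (by omega) (by omega) (by omega)).1)
    rwa [Nat.add_sub_cancel' hab] at this
  have hsegU_left : ∀ a b, 1 ≤ a → a ≤ b → b ≤ m → x b - x a ≤ ((b - a : ℕ) : ℝ) * U := by
    intro a b ha hab hb
    have := aux_seg_ub x U (b - a) a (by
      intro i hi1 hi2
      exact (hgaps i (by omega) (by omega) (by omega) (by omega)).2)
    rwa [Nat.add_sub_cancel' hab] at this
  have hsegL_right : ∀ a b, m + 2 ≤ a → a ≤ b → b ≤ n₀ + 1 →
      ((b - a : ℕ) : ℝ) * L ≤ x b - x a := by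
    intro a b ha hab hb
    have := aux_seg_lb x L (b - a) a (by
      intro i hi1 hi2
      exact (hgaps i (by omega) (by omega) (by omega) (by omega)).1)
    rwa [Nat.add_sub_cancel' hab] at this
  have hsegU_right : ∀ a b, m + 2 ≤ a → a ≤ b → b ≤ n₀ + 1 →
      x b - x a ≤ ((b - a : ℕ) : ℝ) * U := by
    intro a b ha hab hb
    have := aux_seg_ub x U (b - a) a (by
      intro i hi1 hi2
      exact (hgaps i (by omega) (by omega) (by omega) (by omega)).2)
    rwa [Nat.add_sub_cancel' hab] at this
  obtain ⟨hScsub, hSccard, -⟩ := hSc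
  -- lower bound for the anomaly score
  have hdistlow : ∀ a ∈ Sc,
      θ + (((if a ≤ m then m - a else a - (m + 2)) : ℕ) : ℝ) * L ≤ |x (m + 1) - x a| := by
    intro a haSc
    have hamem := hScsub haSc
    rw [Finset.mem_erase, Finset.mem_Icc] at hamem
    obtain ⟨hane, ha1, ha2⟩ := hamem
    by_cases ham : a ≤ m
    · rw [if_pos ham]
      have h1 : x a ≤ x (m + 1) := mono a (m + 1) ha1 (by omega) (by omega)
      rw [abs_of_nonneg (by linarith)]
      have h2 : θ ≤ x (m + 1) - x m := min_le_left _ _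
      have h3 : ((m - a : ℕ) : ℝ) * L ≤ x m - x a := hsegL_left a m ha1 ham le_rfl
      linarith
    · rw [if_neg ham]
      have ham2 : m + 2 ≤ a := by omega
      have h1 : x (m + 1) ≤ x a := mono (m + 1) a (by omega) (by omega) ha2
      rw [abs_sub_comm, abs_of_nonneg (by linarith)]
      have h2 : θ ≤ x (m + 2) - x (m + 1) := min_le_right _ _
      have h3 : ((a - (m + 2) : ℕ) : ℝ) * L ≤ x a - x (m + 2) :=
        hsegL_right (m + 2) a le_rfl ham2 ha2
      linarith
  have hlowsum : (k : ℝ) * θ + L * ((t : ℝ) * ((t : ℝ) - 1)) ≤ ∑ a ∈ Sc, |x (m + 1) - x a| := by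
    have e1 : ∑ a ∈ Sc, (θ + (((if a ≤ m then m - a else a - (m + 2)) : ℕ) : ℝ) * L)
        = (k : ℝ) * θ + L * ∑ a ∈ Sc, (((if a ≤ m then m - a else a - (m + 2)) : ℕ) : ℝ) := by
      rw [Finset.sum_add_distrib, Finset.sum_const, hSccard, nsmul_eq_mul, Finset.mul_sum]
      congr 1
      apply Finset.sum_congr rfl
      intro a _
      ring
    have e2 : ∑ a ∈ Sc, (θ + (((if a ≤ m then m - a else a - (m + 2)) : ℕ) : ℝ) * L)
        ≤ ∑ a ∈ Sc, |x (m + 1) - x a| := Finset.sum_le_sum hdistlow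
    have hranks : (t : ℝ) * ((t : ℝ) - 1)
        ≤ ∑ a ∈ Sc, (((if a ≤ m then m - a else a - (m + 2)) : ℕ) : ℝ) := by
      set A := Sc.filter (fun a => a ≤ m) with hA
      set B := Sc.filter (fun a => ¬ a ≤ m) with hB
      have hsplit : ∑ a ∈ A, (((if a ≤ m then m - a else a - (m + 2)) : ℕ) : ℝ)
            + ∑ a ∈ B, (((if a ≤ m then m - a else a - (m + 2)) : ℕ) : ℝ)
          = ∑ a ∈ Sc, (((if a ≤ m then m - a else a - (m + 2)) : ℕ) : ℝ) :=
        Finset.sum_filter_add_sum_filter_not Sc _ _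
      have hAeq : ∑ a ∈ A, (((if a ≤ m then m - a else a - (m + 2)) : ℕ) : ℝ)
          = ∑ a ∈ A, ((m - a : ℕ) : ℝ) := by
        apply Finset.sum_congr rfl
        intro a haA
        rw [if_pos (Finset.mem_filter.1 haA).2]
      have hBeq : ∑ a ∈ B, (((if a ≤ m then m - a else a - (m + 2)) : ℕ) : ℝ)
          = ∑ a ∈ B, ((a - (m + 2) : ℕ) : ℝ) := by
        apply Finset.sum_congr rfl
        intro a haB
        rw [if_neg (Finset.mem_filter.1 haB).2]
      have hAmem : ∀ a ∈ A, 1 ≤ a ∧ a ≤ m := by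
        intro a haA
        have h1 := Finset.mem_filter.1 haA
        have h2 := hScsub h1.1
        rw [Finset.mem_erase, Finset.mem_Icc] at h2
        exact ⟨h2.2.1, h1.2⟩
      have hBmem : ∀ a ∈ B, m + 2 ≤ a := by
        intro a haB
        have h1 := Finset.mem_filter.1 haB
        have h2 := hScsub h1.1
        rw [Finset.mem_erase, Finset.mem_Icc] at h2
        omega
      have hinjA : Set.InjOn (fun a => m - a) A := by
        intro a haA b hbA hab
        have h1 := hAmem a haA
        have h2 := hAmem b hbA
        simp only at hab
        omega
      have hinjB : Set.InjOn (fun a => a - (m + 2)) B := by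
        intro a haA b hbA hab
        have h1 := hBmem a haA
        have h2 := hBmem b hbA
        simp only at hab
        omega
      have hAsum : (A.card : ℝ) * ((A.card : ℝ) - 1) / 2 ≤ ∑ a ∈ A, ((m - a : ℕ) : ℝ) := by
        have h1 : ∑ a ∈ A, ((m - a : ℕ) : ℝ)
            = ∑ i ∈ A.image (fun a => m - a), (i : ℝ) :=
          (Finset.sum_image (fun a ha b hb hab => hinjA ha hb hab)).symm
        have h2 := aux_cast_sum_ge (A.image (fun a => m - a))
        rw [Finset.card_image_of_injOn hinjA] at h2
        linarith
      have hBsum : (B.card : ℝ) * ((B.card : ℝ) - 1) / 2 ≤ ∑ a ∈ B, ((a - (m + 2) : ℕ) : ℝ) := by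
        have h1 : ∑ a ∈ B, ((a - (m + 2) : ℕ) : ℝ)
            = ∑ i ∈ B.image (fun a => a - (m + 2)), (i : ℝ) :=
          (Finset.sum_image (fun a ha b hb hab => hinjB ha hb hab)).symm
        have h2 := aux_cast_sum_ge (B.image (fun a => a - (m + 2)))
        rw [Finset.card_image_of_injOn hinjB] at h2
        linarith
      have hcards : A.card + B.card = k := by
        rw [hA, hB, Finset.card_filter_add_card_filter_not, hSccard]
      have hcardsR : (A.card : ℝ) + (B.card : ℝ) = 2 * (t : ℝ) := by
        have hn : A.card + B.card = 2 * t := by omega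
        have h' : ((A.card + B.card : ℕ) : ℝ) = ((2 * t : ℕ) : ℝ) := by rw [hn]
        push_cast at h'
        linarith
      rw [← hsplit, hAeq, hBeq]
      nlinarith [sq_nonneg ((A.card : ℝ) - (B.card : ℝ)), hAsum, hBsum]
    have h3 := mul_le_mul_of_nonneg_left hranks (le_of_lt hL)
    linarith
  -- upper bound for normal point score
  have hup : ∑ a ∈ Sj, |x j - x a| ≤ U * ((k : ℝ) * ((k : ℝ) + 1) / 2) := by
    have hU0 : (0 : ℝ) ≤ U := le_of_lt (lt_of_lt_of_le hL hLU)
    by_cases hjm : j ≤ m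
    · obtain ⟨T, hTsub, hTcard, hTsum⟩ := aux_block_ub x U hU0 1 m j k hj1 hjm (by omega)
        (by
          intro a b ha hab hb
          have h1 : x a ≤ x b := mono a b ha hab (by omega)
          rw [abs_of_nonneg (by linarith)]
          exact hsegU_left a b ha hab hb)
      have hTsub' : T ⊆ (Finset.Icc 1 (n₀ + 1)).erase j := by
        intro a haT
        have := hTsub haT
        rw [Finset.mem_erase, Finset.mem_Icc] at this ⊢
        omega
      exact le_trans (aux_knn_sum_le hSj hTsub' hTcard) hTsum
    · have hjm2 : m + 2 ≤ j := by omega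
      obtain ⟨T, hTsub, hTcard, hTsum⟩ :=
        aux_block_ub x U hU0 (m + 2) (n₀ + 1) j k hjm2 hjn (by omega)
        (by
          intro a b ha hab hb
          have h1 : x a ≤ x b := mono a b (by omega) hab hb
          rw [abs_of_nonneg (by linarith)]
          exact hsegU_right a b ha hab hb)
      have hTsub' : T ⊆ (Finset.Icc 1 (n₀ + 1)).erase j := by
        intro a haT
        have := hTsub haT
        rw [Finset.mem_erase, Finset.mem_Icc] at this ⊢
        omega
      exact le_trans (aux_knn_sum_le hSj hTsub' hTcard) hTsum
  -- final arithmetic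
  have hkR : (k : ℝ) = 2 * (t : ℝ) := by rw [ht]; push_cast; ring
  have hkpos : (0 : ℝ) < (k : ℝ) := by
    have : 0 < k := by omega
    exact_mod_cast this
  have htR : (1 : ℝ) ≤ (t : ℝ) := by exact_mod_cast ht1
  unfold knnScore
  have hinv : (0 : ℝ) < 1 / (k : ℝ) := by positivity
  have hC : θ + ((t : ℝ) - 1) * L / 2 ≤ (1 / (k : ℝ)) * ∑ a ∈ Sc, |x (m + 1) - x a| := by
    have h1 : (1 / (k : ℝ)) * ((k : ℝ) * θ + L * ((t : ℝ) * ((t : ℝ) - 1)))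
        ≤ (1 / (k : ℝ)) * ∑ a ∈ Sc, |x (m + 1) - x a| :=
      mul_le_mul_of_nonneg_left hlowsum (le_of_lt hinv)
    have h2 : (1 / (k : ℝ)) * ((k : ℝ) * θ + L * ((t : ℝ) * ((t : ℝ) - 1)))
        = θ + ((t : ℝ) - 1) * L / 2 := by
      rw [hkR]
      have htne : (t : ℝ) ≠ 0 := by linarith
      field_simp
    linarith
  have hJ : (1 / (k : ℝ)) * ∑ a ∈ Sj, |x j - x a| ≤ ((k : ℝ) + 1) * U / 2 := by
    have h1 : (1 / (k : ℝ)) * ∑ a ∈ Sj, |x j - x a|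
        ≤ (1 / (k : ℝ)) * (U * ((k : ℝ) * ((k : ℝ) + 1) / 2)) :=
      mul_le_mul_of_nonneg_left hup (le_of_lt hinv)
    have h2 : (1 / (k : ℝ)) * (U * ((k : ℝ) * ((k : ℝ) + 1) / 2)) = ((k : ℝ) + 1) * U / 2 := by
      have : (k : ℝ) ≠ 0 := ne_of_gt hkpos
      field_simp
    linarith
  have hθ' : ((k : ℝ) + 1) * U / 2 < θ + ((t : ℝ) - 1) * L / 2 := by
    have : ((k : ℝ) / 2 - 1) = (t : ℝ) - 1 := by rw [hkR]; ring
    rw [this] at hθ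
    linarith
  linarith
end

section
/- For every even integer k ≥ 2, every even integer n_0 with n_0/2 ≥ k + 1, and every real θ with 1 ≤ θ ≤ k/4 + 1, the n = n_0 + 1 points defined by x_i = i for 1 ≤ i ≤ n_0/2, x_{n_0/2+1} = n_0/2 + θ, and x_{n_0/2+1+j} = n_0/2 + 2θ + (j − 1) for 1 ≤ j ≤ n_0/2 satisfy h_knn(n_0/2 + 1) ≤ h_knn(1); that is, the k-NN score of the central anomaly does not exceed that of the leftmost normal point, so a separation of order Θ(k) is necessary for k-NN to detect a central single anomaly. -/
open Finset

/-- Exchange lemma: the sum of distances over a KNN set is minimal among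
subsets of the same cardinality. -/
lemma knn_sum_min {d : ℕ → ℝ} {U S T : Finset ℕ}
    (hT : T ⊆ U) (hcard : T.card = S.card)
    (hmin : ∀ a ∈ S, ∀ b ∈ U, b ∉ S → d a ≤ d b) :
    ∑ a ∈ S, d a ≤ ∑ b ∈ T, d b := by
  have h1 : ∑ a ∈ S ∩ T, d a + ∑ a ∈ S \ T, d a = ∑ a ∈ S, d a :=
    Finset.sum_inter_add_sum_sdiff S T d
  have h2 : ∑ a ∈ T ∩ S, d a + ∑ a ∈ T \ S, d a = ∑ a ∈ T, d a :=
    Finset.sum_inter_add_sum_sdiff T S d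
  rw [Finset.inter_comm] at h2
  have hcd : (S \ T).card = (T \ S).card := by
    have := Finset.card_inter_add_card_sdiff S T
    have := Finset.card_inter_add_card_sdiff T S
    rw [Finset.inter_comm T S] at this
    omega
  rcases (T \ S).eq_empty_or_nonempty with he | hne
  · have hSe : (S \ T) = ∅ := Finset.card_eq_zero.mp (by rw [hcd, he]; simp)
    rw [he, Finset.sum_empty] at h2
    rw [hSe, Finset.sum_empty] at h1
    linarith
  · obtain ⟨b₀, hb₀, hb₀min⟩ := Finset.exists_min_image (T \ S) d hne
    have hb₀U : b₀ ∈ U := hT (Finset.mem_sdiff.mp hb₀).1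
    have hb₀S : b₀ ∉ S := (Finset.mem_sdiff.mp hb₀).2
    have hS' : ∑ a ∈ S \ T, d a ≤ (S \ T).card • d b₀ :=
      Finset.sum_le_card_nsmul _ _ _ (fun a ha =>
        hmin a (Finset.mem_sdiff.mp ha).1 b₀ hb₀U hb₀S)
    have hT' : (T \ S).card • d b₀ ≤ ∑ b ∈ T \ S, d b :=
      Finset.card_nsmul_le_sum _ _ _ (fun b hb => hb₀min b hb)
    rw [hcd] at hS'
    linarith

/-- The sum of a finset of naturals is at least the sum of the first `card` naturals. -/
lemma sum_range_card_le (T : Finset ℕ) : ∑ i ∈ Finset.range T.card, i ≤ ∑ a ∈ T, a := by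
  induction T using Finset.strongInductionOn with
  | _ T ih =>
    rcases T.eq_empty_or_nonempty with rfl | hne
    · simp
    · set M := T.max' hne with hMdef
      have hM : M ∈ T := T.max'_mem hne
      have hpos : 1 ≤ T.card := Finset.card_pos.mpr hne
      have hcard : (T.erase M).card = T.card - 1 := Finset.card_erase_of_mem hM
      have hle : T.card - 1 ≤ M := by
        have hsub : T ⊆ Finset.range (M + 1) :=
          fun x hx => Finset.mem_range.mpr (Nat.lt_succ_of_le (Finset.le_max' T x hx))
        have := Finset.card_le_card hsub
        simp only [Finset.card_range] at this
        omega
      have h1 : T.card = (T.card - 1) + 1 := by omega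
      calc ∑ i ∈ Finset.range T.card, i
          = ∑ i ∈ Finset.range (T.card - 1), i + (T.card - 1) := by
            conv_lhs => rw [h1]
            rw [Finset.sum_range_succ]
        _ ≤ ∑ a ∈ T.erase M, a + M := by
            refine Nat.add_le_add ?_ hle
            rw [← hcard]
            exact ih _ (Finset.erase_ssubset hM)
        _ = ∑ a ∈ T, a := Finset.sum_erase_add T _ hM

/-- **Necessity of a `Θ(k)` separation for `k`-NN to detect a central single anomaly.**
For every even `k ≥ 2`, every even `n₀` with `n₀/2 ≥ k + 1`, and every
`1 ≤ θ ≤ k/4 + 1`, the `n = n₀ + 1` points given by `x i = i` for `i ≤ n₀/2`,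
`x (n₀/2 + 1) = n₀/2 + θ`, and `x (n₀/2 + 1 + j) = n₀/2 + 2θ + (j − 1)` for
`1 ≤ j ≤ n₀/2` satisfy `h_knn(n₀/2 + 1) ≤ h_knn(1)`. -/
theorem knn_central_anomaly_separation_necessary
    (k : ℕ) (hkeven : Even k) (hk2 : 2 ≤ k)
    (n₀ : ℕ) (hn₀even : Even n₀) (hn₀ : k + 1 ≤ n₀ / 2)
    (θ : ℝ) (hθ1 : 1 ≤ θ) (hθ2 : θ ≤ (k : ℝ) / 4 + 1) :
    ∀ S1 Sc : Finset ℕ,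
      IsKNN
        (fun i => if i ≤ n₀ / 2 then (i : ℝ)
          else if i = n₀ / 2 + 1 then ((n₀ / 2 : ℕ) : ℝ) + θ
          else ((n₀ / 2 : ℕ) : ℝ) + 2 * θ + ((i : ℝ) - ((n₀ / 2 : ℕ) : ℝ) - 2))
        (n₀ + 1) k 1 S1 →
      IsKNN
        (fun i => if i ≤ n₀ / 2 then (i : ℝ)
          else if i = n₀ / 2 + 1 then ((n₀ / 2 : ℕ) : ℝ) + θ
          else ((n₀ / 2 : ℕ) : ℝ) + 2 * θ + ((i : ℝ) - ((n₀ / 2 : ℕ) : ℝ) - 2))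
        (n₀ + 1) k (n₀ / 2 + 1) Sc →
      knnScore
          (fun i => if i ≤ n₀ / 2 then (i : ℝ)
            else if i = n₀ / 2 + 1 then ((n₀ / 2 : ℕ) : ℝ) + θ
            else ((n₀ / 2 : ℕ) : ℝ) + 2 * θ + ((i : ℝ) - ((n₀ / 2 : ℕ) : ℝ) - 2))
          k (n₀ / 2 + 1) Sc
        ≤ knnScore
          (fun i => if i ≤ n₀ / 2 then (i : ℝ)
            else if i = n₀ / 2 + 1 then ((n₀ / 2 : ℕ) : ℝ) + θ
            else ((n₀ / 2 : ℕ) : ℝ) + 2 * θ + ((i : ℝ) - ((n₀ / 2 : ℕ) : ℝ) - 2))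
          k 1 S1 := by
  intro S1 Sc hS1 hSc
  obtain ⟨q, hqk⟩ := hkeven
  obtain ⟨r, hrn⟩ := hn₀even
  set m := n₀ / 2 with hm
  have hmr : n₀ = m + m := by omega
  have hq1 : 1 ≤ q := by omega
  have hmk : k + 1 ≤ m := hn₀
  set x : ℕ → ℝ := fun i => if i ≤ m then (i : ℝ)
          else if i = m + 1 then ((m : ℕ) : ℝ) + θ
          else ((m : ℕ) : ℝ) + 2 * θ + ((i : ℝ) - ((m : ℕ) : ℝ) - 2) with hxdef
  -- basic values
  have hxle : ∀ i : ℕ, i ≤ m → x i = (i : ℝ) := by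
    intro i hi; simp [hxdef, hi]
  have hxc : x (m + 1) = (m : ℝ) + θ := by
    simp [hxdef]
  have hxr : ∀ i : ℕ, m + 1 < i → x i = (m : ℝ) + 2 * θ + ((i : ℝ) - (m : ℝ) - 2) := by
    intro i hi
    have h1 : ¬ (i ≤ m) := by omega
    have h2 : i ≠ m + 1 := by omega
    simp [hxdef, h1, h2]
  obtain ⟨hS1sub, hS1card, hS1min⟩ := hS1
  obtain ⟨hScsub, hSccard, hScmin⟩ := hSc
  -- Gauss sums
  have gaussq : (∑ t ∈ Finset.range q, (t : ℝ)) * 2 = (q : ℝ) * ((q : ℝ) - 1) := by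
    have h := congrArg (Nat.cast : ℕ → ℝ) (Finset.sum_range_id_mul_two q)
    push_cast [Nat.cast_sub hq1] at h
    exact h
  have gaussk : (∑ t ∈ Finset.range k, (t : ℝ)) * 2 = (k : ℝ) * ((k : ℝ) - 1) := by
    have h := congrArg (Nat.cast : ℕ → ℝ) (Finset.sum_range_id_mul_two k)
    push_cast [Nat.cast_sub (by omega : 1 ≤ k)] at h
    exact h
  ------------------------------------------------------------------
  -- Upper bound for the score of the central point
  ------------------------------------------------------------------
  set Tl := (Finset.range q).image (fun t => m - t) with hTl
  set Tr := (Finset.range q).image (fun t => m + 2 + t) with hTr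
  have hinjl : Set.InjOn (fun t => m - t) (Finset.range q) := by
    intro a ha b hb hab
    simp only [Finset.coe_range, Set.mem_Iio] at ha hb
    simp only at hab
    omega
  have hinjr : Set.InjOn (fun t => m + 2 + t) (Finset.range q) := by
    intro a ha b hb hab
    simp only at hab
    omega
  have hcardl : Tl.card = q := by
    rw [hTl, Finset.card_image_of_injOn hinjl, Finset.card_range]
  have hcardr : Tr.card = q := by
    rw [hTr, Finset.card_image_of_injOn hinjr, Finset.card_range]
  have hmeml : ∀ a ∈ Tl, m + 1 - q ≤ a ∧ a ≤ m := by
    intro a ha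
    rw [hTl, Finset.mem_image] at ha
    obtain ⟨t, ht, rfl⟩ := ha
    rw [Finset.mem_range] at ht
    omega
  have hmemr : ∀ a ∈ Tr, m + 2 ≤ a ∧ a ≤ m + 1 + q := by
    intro a ha
    rw [hTr, Finset.mem_image] at ha
    obtain ⟨t, ht, rfl⟩ := ha
    rw [Finset.mem_range] at ht
    omega
  have hdisj : Disjoint Tl Tr := by
    rw [Finset.disjoint_left]
    intro a hal har
    have := hmeml a hal
    have := hmemr a har
    omega
  have hcardT : (Tl ∪ Tr).card = k := by
    rw [Finset.card_union_of_disjoint hdisj, hcardl, hcardr]; omega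
  have hTsub : Tl ∪ Tr ⊆ (Finset.Icc 1 (n₀ + 1)).erase (m + 1) := by
    intro a ha
    rw [Finset.mem_union] at ha
    rw [Finset.mem_erase, Finset.mem_Icc]
    rcases ha with h | h
    · have := hmeml a h; omega
    · have := hmemr a h; omega
  -- distances on the union
  have hdl : ∀ t ∈ Finset.range q, |x (m + 1) - x (m - t)| = θ + (t : ℝ) := by
    intro t ht
    rw [Finset.mem_range] at ht
    have htm : t ≤ m := by omega
    rw [hxc, hxle (m - t) (by omega)]
    have hcast : ((m - t : ℕ) : ℝ) = (m : ℝ) - (t : ℝ) := by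
      push_cast [Nat.cast_sub htm]; ring
    rw [hcast]
    rw [show (m : ℝ) + θ - ((m : ℝ) - (t : ℝ)) = θ + t by ring]
    exact abs_of_nonneg (by positivity)
  have hdr : ∀ t ∈ Finset.range q, |x (m + 1) - x (m + 2 + t)| = θ + (t : ℝ) := by
    intro t ht
    rw [hxc, hxr (m + 2 + t) (by omega)]
    have : (m : ℝ) + θ - ((m : ℝ) + 2 * θ + (((m + 2 + t : ℕ) : ℝ) - (m : ℝ) - 2))
        = -(θ + t) := by push_cast; ring
    rw [this, abs_neg]
    exact abs_of_nonneg (by positivity)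
  have hsumT : ∑ b ∈ Tl ∪ Tr, |x (m + 1) - x b| = 2 * ((q : ℝ) * θ + (q : ℝ) * ((q : ℝ) - 1) / 2) := by
    rw [Finset.sum_union hdisj, hTl, hTr, Finset.sum_image hinjl, Finset.sum_image hinjr]
    rw [Finset.sum_congr rfl hdl, Finset.sum_congr rfl hdr]
    rw [Finset.sum_add_distrib, Finset.sum_const, Finset.card_range, nsmul_eq_mul]
    linarith [gaussq]
  have hB : ∑ a ∈ Sc, |x (m + 1) - x a| ≤ 2 * ((q : ℝ) * θ + (q : ℝ) * ((q : ℝ) - 1) / 2) := by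
    rw [← hsumT]
    exact knn_sum_min hTsub (by rw [hcardT, hSccard]) hScmin
  ------------------------------------------------------------------
  -- Lower bound for the score of the leftmost point
  ------------------------------------------------------------------
  have hx1 : x 1 = 1 := by
    rw [hxle 1 (by omega)]; norm_num
  have hxge : ∀ a : ℕ, a ≤ n₀ + 1 → (a : ℝ) ≤ x a := by
    intro a ha
    by_cases h1 : a ≤ m
    · rw [hxle a h1]
    · by_cases h2 : a = m + 1
      · subst h2; rw [hxc]; push_cast; linarith
      · rw [hxr a (by omega)]
        nlinarith [hθ1]
  have hS1mem : ∀ a ∈ S1, 2 ≤ a ∧ a ≤ n₀ + 1 := by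
    intro a ha
    have := hS1sub ha
    rw [Finset.mem_erase, Finset.mem_Icc] at this
    omega
  have hAterm : ∀ a ∈ S1, (a : ℝ) - 1 ≤ |x 1 - x a| := by
    intro a ha
    obtain ⟨ha2, han⟩ := hS1mem a ha
    have hxa := hxge a han
    have h2a : (2 : ℝ) ≤ (a : ℝ) := by exact_mod_cast ha2
    rw [hx1, abs_sub_comm, abs_of_nonneg (by linarith)]
    linarith
  have hA1 : ∑ a ∈ S1, ((a : ℝ) - 1) ≤ ∑ a ∈ S1, |x 1 - x a| :=
    Finset.sum_le_sum hAterm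
  -- shift down by 2 and compare against range k
  set T' := S1.image (fun a => a - 2) with hT'
  have hinj' : Set.InjOn (fun a => a - 2) (S1 : Set ℕ) := by
    intro a ha b hb hab
    simp only at hab
    have := hS1mem a ha
    have := hS1mem b hb
    omega
  have hcardT' : T'.card = k := by
    rw [hT', Finset.card_image_of_injOn hinj', hS1card]
  have hsum2 : ∑ a ∈ S1, ((a : ℝ) - 1) = ∑ t ∈ T', ((t : ℝ) + 1) := by
    rw [hT', Finset.sum_image hinj']
    refine Finset.sum_congr rfl fun a ha => ?_
    have h2a := (hS1mem a ha).1
    push_cast [Nat.cast_sub h2a]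
    ring
  have hrange : (∑ t ∈ Finset.range k, (t : ℝ)) ≤ ∑ t ∈ T', (t : ℝ) := by
    have h := sum_range_card_le T'
    rw [hcardT'] at h
    have h2 : ((∑ i ∈ Finset.range k, i : ℕ) : ℝ) ≤ ((∑ a ∈ T', a : ℕ) : ℝ) :=
      Nat.cast_le.mpr h
    push_cast at h2
    exact h2
  have hA2 : (k : ℝ) * ((k : ℝ) - 1) / 2 + (k : ℝ) ≤ ∑ a ∈ S1, |x 1 - x a| := by
    have h1 : ∑ t ∈ T', ((t : ℝ) + 1) = (∑ t ∈ T', (t : ℝ)) + (k : ℝ) := by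
      rw [Finset.sum_add_distrib, Finset.sum_const, hcardT', nsmul_eq_mul, mul_one]
    have := hA1
    rw [hsum2, h1] at this
    linarith [hrange, gaussk]
  ------------------------------------------------------------------
  -- Put everything together
  ------------------------------------------------------------------
  rw [knnScore, knnScore]
  apply mul_le_mul_of_nonneg_left _ (by positivity : (0 : ℝ) ≤ 1 / (k : ℝ))
  have hkq : (k : ℝ) = 2 * (q : ℝ) := by
    rw [hqk]; push_cast; ring
  have hqR : (1 : ℝ) ≤ (q : ℝ) := by exact_mod_cast hq1
  calc ∑ a ∈ Sc, |x (m + 1) - x a|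
      ≤ 2 * ((q : ℝ) * θ + (q : ℝ) * ((q : ℝ) - 1) / 2) := hB
    _ ≤ (k : ℝ) * ((k : ℝ) - 1) / 2 + (k : ℝ) := by
        rw [hkq]
        nlinarith [mul_le_mul_of_nonneg_left hθ2 (by positivity : (0:ℝ) ≤ (q:ℝ))]
    _ ≤ ∑ a ∈ S1, |x 1 - x a| := hA2
end

section
/- For every real κ ≥ 1 there exist constants c > 0 and N > 0 such that the following holds. Let n_1 ≥ 1 be odd, let n_0 ≥ N·n_1²·κ², set n = n_1 + n_0, and let x_1 < … < x_n be real numbers whose adjacent gaps within x_1, …, x_{n_1} and within x_{n_1+1}, …, x_n all lie in [L, U] for some reals 0 < L ≤ U with U/L ≤ κ. If x_{n_1+1} − x_{n_1} ≥ c·n_1²·U, then max_{1 ≤ j ≤ n_1} h̄(j) < min_{n_1+1 ≤ j ≤ n} h̄(j); that is, iForest detects all the marginal clustered anomalies x_1, …, x_{n_1}. -/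
open Finset

lemma ratio_le_log_sub {a b : ℝ} (ha : 0 < a) (hab : a ≤ b) :
    (b - a) / b ≤ Real.log b - Real.log a := by
  have hb : 0 < b := lt_of_lt_of_le ha hab
  have h := Real.log_le_sub_one_of_pos (div_pos ha hb)
  rw [Real.log_div (ne_of_gt ha) (ne_of_gt hb)] at h
  have h2 : a / b - 1 = -((b - a) / b) := by field_simp; ring
  rw [h2] at h
  linarith

lemma log_sub_le_ratio {a b : ℝ} (ha : 0 < a) (hab : a ≤ b) :
    Real.log b - Real.log a ≤ (b - a) / a := by
  have hb : 0 < b := lt_of_lt_of_le ha hab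
  have h := Real.log_le_sub_one_of_pos (div_pos hb ha)
  rw [Real.log_div (ne_of_gt hb) (ne_of_gt ha)] at h
  have h2 : b / a - 1 = (b - a) / a := by field_simp
  linarith [h2 ▸ h]

lemma sum_up (d : ℕ → ℝ) (a : ℕ) :
    ∀ b, a ≤ b → (∀ m, a ≤ m → m < b → 0 < d m ∧ d m ≤ d (m + 1)) →
    ∑ m ∈ Ioc a b, (d m - d (m - 1)) / d m ≤ Real.log (d b) - Real.log (d a) := by
  intro b hab
  induction b, hab using Nat.le_induction with
  | base => intro _; simp
  | succ b hb ih =>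
    intro h
    rw [Finset.sum_Ioc_succ_top hb]
    have hdb := h b hb (Nat.lt_succ_self b)
    have hterm : (d (b + 1) - d (b + 1 - 1)) / d (b + 1) ≤
        Real.log (d (b + 1)) - Real.log (d b) := by
      simpa using ratio_le_log_sub hdb.1 hdb.2
    have hrest := ih (fun m hm hmb => h m hm (hmb.trans (Nat.lt_succ_self b)))
    linarith

lemma sum_low (d : ℕ → ℝ) (U : ℝ) (hU : 0 < U) (a : ℕ) :
    ∀ b, a ≤ b → (∀ m, a ≤ m → m < b → 0 ≤ d m ∧ d m < d (m + 1) ∧ d (m + 1) ≤ d m + U) →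
    Real.log (d b + U) - Real.log (d a + U) ≤ ∑ m ∈ Ioc a b, (d m - d (m - 1)) / d m := by
  intro b hab
  induction b, hab using Nat.le_induction with
  | base => intro _; simp
  | succ b hb ih =>
    intro h
    rw [Finset.sum_Ioc_succ_top hb]
    obtain ⟨h0, hlt, hle⟩ := h b hb (Nat.lt_succ_self b)
    have hdb1 : 0 < d (b + 1) := h0.trans_lt hlt
    have hbU : 0 < d b + U := by linarith
    have h1 : Real.log (d (b + 1) + U) - Real.log (d b + U) ≤
        (d (b + 1) - d b) / (d b + U) := by
      have := log_sub_le_ratio hbU (by linarith : d b + U ≤ d (b + 1) + U)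
      simpa using this
    have h2 : (d (b + 1) - d b) / (d b + U) ≤ (d (b + 1) - d b) / d (b + 1) := by
      apply div_le_div_of_nonneg_left (by linarith) hdb1 (by linarith)
    have hterm : Real.log (d (b + 1) + U) - Real.log (d b + U) ≤
        (d (b + 1) - d (b + 1 - 1)) / d (b + 1) := by
      simpa using h1.trans h2
    have hrest := ih (fun m hm hmb => h m hm (hmb.trans (Nat.lt_succ_self b)))
    linarith

lemma sum_up_left (e : ℕ → ℝ) (a : ℕ) :
    ∀ b, a ≤ b → (∀ m, a ≤ m → m < b → 0 < e (m + 1) ∧ e (m + 1) ≤ e m) →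
    ∑ m ∈ Ioc a b, (e (m - 1) - e m) / e (m - 1) ≤ Real.log (e a) - Real.log (e b) := by
  intro b hab
  induction b, hab using Nat.le_induction with
  | base => intro _; simp
  | succ b hb ih =>
    intro h
    rw [Finset.sum_Ioc_succ_top hb]
    obtain ⟨h1, h2⟩ := h b hb (Nat.lt_succ_self b)
    have hterm : (e (b + 1 - 1) - e (b + 1)) / e (b + 1 - 1) ≤
        Real.log (e b) - Real.log (e (b + 1)) := by
      simpa using ratio_le_log_sub h1 h2
    have hrest := ih (fun m hm hmb => h m hm (hmb.trans (Nat.lt_succ_self b)))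
    linarith

lemma sum_low_left (e : ℕ → ℝ) (U : ℝ) (hU : 0 < U) (a : ℕ) :
    ∀ b, a ≤ b → (∀ m, a ≤ m → m < b → 0 ≤ e (m + 1) ∧ e (m + 1) < e m ∧ e m ≤ e (m + 1) + U) →
    Real.log (e a + U) - Real.log (e b + U) ≤
      ∑ m ∈ Ioc a b, (e (m - 1) - e m) / e (m - 1) := by
  intro b hab
  induction b, hab using Nat.le_induction with
  | base => intro _; simp
  | succ b hb ih =>
    intro h
    rw [Finset.sum_Ioc_succ_top hb]
    obtain ⟨h0, hlt, hle⟩ := h b hb (Nat.lt_succ_self b)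
    have heb : 0 < e b := h0.trans_lt hlt
    have hb1U : 0 < e (b + 1) + U := by linarith
    have h1 : Real.log (e b + U) - Real.log (e (b + 1) + U) ≤
        (e b - e (b + 1)) / (e (b + 1) + U) := by
      have := log_sub_le_ratio hb1U (by linarith : e (b + 1) + U ≤ e b + U)
      simpa using this
    have h2 : (e b - e (b + 1)) / (e (b + 1) + U) ≤ (e b - e (b + 1)) / e b := by
      apply div_le_div_of_nonneg_left (by linarith) heb (by linarith)
    have hterm : Real.log (e b + U) - Real.log (e (b + 1) + U) ≤
        (e (b + 1 - 1) - e (b + 1)) / e (b + 1 - 1) := by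
      simpa using h1.trans h2
    have hrest := ih (fun m hm hmb => h m hm (hmb.trans (Nat.lt_succ_self b)))
    linarith

lemma lin_up (x : ℕ → ℝ) (U : ℝ) (a : ℕ) :
    ∀ b, a ≤ b → (∀ i, a ≤ i → i < b → x (i + 1) - x i ≤ U) →
    x b - x a ≤ ((b : ℝ) - (a : ℝ)) * U := by
  intro b hab
  induction b, hab using Nat.le_induction with
  | base => intro _; simp
  | succ b hb ih =>
    intro h
    have hrest := ih (fun i hi hib => h i hi (hib.trans (Nat.lt_succ_self b)))
    have hlast := h b hb (Nat.lt_succ_self b)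
    push_cast
    push_cast at hrest
    linarith

lemma lin_low (x : ℕ → ℝ) (L : ℝ) (a : ℕ) :
    ∀ b, a ≤ b → (∀ i, a ≤ i → i < b → L ≤ x (i + 1) - x i) →
    ((b : ℝ) - (a : ℝ)) * L ≤ x b - x a := by
  intro b hab
  induction b, hab using Nat.le_induction with
  | base => intro _; simp
  | succ b hb ih =>
    intro h
    have hrest := ih (fun i hi hib => h i hi (hib.trans (Nat.lt_succ_self b)))
    have hlast := h b hb (Nat.lt_succ_self b)
    push_cast
    push_cast at hrest
    linarith

lemma three_lt_log21 : (3 : ℝ) < Real.log 21 := by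
  have h1 : Real.exp 1 < 2.7182818286 := Real.exp_one_lt_d9
  have h3 : Real.exp 3 < 21 := by
    have : Real.exp 3 = Real.exp 1 * Real.exp 1 * Real.exp 1 := by
      rw [← Real.exp_add, ← Real.exp_add]; norm_num
    rw [this]
    nlinarith [Real.exp_pos 1]
  calc (3 : ℝ) = Real.log (Real.exp 3) := (Real.log_exp 3).symm
    _ < Real.log 21 := Real.log_lt_log (Real.exp_pos 3) h3


set_option maxHeartbeats 4000000 in
/-- **iForest detects all marginal clustered anomalies (sufficiency).**
For every `κ ≥ 1` there are constants `c > 0` and `N > 0` such that: for every odd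
`n₁ ≥ 1` and every `n₀ ≥ N·n₁²·κ²`, with `n = n₁ + n₀` sorted points whose adjacent
gaps within `x 1, …, x n₁` and within `x (n₁+1), …, x n` all lie in `[L, U]`
(`0 < L ≤ U`, `U/L ≤ κ`), if `x (n₁+1) − x n₁ ≥ c·n₁²·U` then every anomaly
`x j` (`1 ≤ j ≤ n₁`) has strictly smaller expected depth than every normal point
`x j'` (`n₁ + 1 ≤ j' ≤ n`). -/
theorem iforest_detects_marginal_clustered_anomalies :
    ∀ κ : ℝ, 1 ≤ κ →
    ∃ c N : ℝ, 0 < c ∧ 0 < N ∧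
      ∀ n₁ : ℕ, Odd n₁ → 1 ≤ n₁ →
      ∀ n₀ : ℕ, N * (n₁ : ℝ) ^ 2 * κ ^ 2 ≤ (n₀ : ℝ) →
      ∀ x : ℕ → ℝ, (∀ i, 1 ≤ i → i < n₁ + n₀ → x i < x (i + 1)) →
      ∀ L U : ℝ, 0 < L → L ≤ U → U / L ≤ κ →
      (∀ i, 1 ≤ i → i ≤ n₁ - 1 → L ≤ x (i + 1) - x i ∧ x (i + 1) - x i ≤ U) →
      (∀ i, n₁ + 1 ≤ i → i ≤ n₁ + n₀ - 1 → L ≤ x (i + 1) - x i ∧ x (i + 1) - x i ≤ U) →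
      c * (n₁ : ℝ) ^ 2 * U ≤ x (n₁ + 1) - x n₁ →
      ∀ j j', 1 ≤ j → j ≤ n₁ → n₁ + 1 ≤ j' → j' ≤ n₁ + n₀ →
        hbar x (n₁ + n₀) j < hbar x (n₁ + n₀) j' := by
  intro κ hκ
  have hκ0 : (0:ℝ) < κ := by linarith
  refine ⟨42 * κ ^ 2, 43 * κ, by positivity, by positivity, ?_⟩
  intro n₁ _hodd hn₁ n₀ hn₀ x hx L U hL hLU hULκ hgap1 hgap2 hbig j j' hj1 hjn₁ hj'1 hj'n
  set n := n₁ + n₀ with hndef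
  -- basic facts
  have hU : 0 < U := hL.trans_le hLU
  have hUκL : U ≤ κ * L := by
    rw [div_le_iff₀ hL] at hULκ; linarith
  have hn₁R : (1:ℝ) ≤ (n₁:ℝ) := by exact_mod_cast hn₁
  have hκn₁ : (1:ℝ) ≤ κ * (n₁:ℝ) := by
    nlinarith [mul_nonneg (by linarith : (0:ℝ) ≤ κ - 1) (show (0:ℝ) ≤ (n₁:ℝ) by positivity)]
  have hn₀R : 43 * κ ^ 3 * (n₁:ℝ) ^ 2 ≤ (n₀:ℝ) := by
    have h : 43 * κ ^ 3 * (n₁:ℝ) ^ 2 = 43 * κ * (n₁:ℝ) ^ 2 * κ ^ 2 := by ring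
    linarith [hn₀, h.le, h.ge]
  have hκ3 : (1:ℝ) ≤ κ ^ 3 := by nlinarith [sq_nonneg κ, sq_nonneg (κ - 1)]
  have hn₁sq : (1:ℝ) ≤ (n₁:ℝ) ^ 2 := by nlinarith
  have hK1 : (1:ℝ) ≤ κ ^ 3 * (n₁:ℝ) ^ 2 := by
    nlinarith [mul_nonneg (by linarith : (0:ℝ) ≤ κ ^ 3 - 1) (by linarith : (0:ℝ) ≤ (n₁:ℝ) ^ 2 - 1)]
  have hn₀2 : 2 ≤ n₀ := by
    have h43 : (43:ℝ) ≤ (n₀:ℝ) := by nlinarith [hK1, hn₀R]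
    exact_mod_cast (by linarith : (2:ℝ) ≤ (n₀:ℝ))
  have hgap1' : ∀ i, 1 ≤ i → i < n₁ → L ≤ x (i+1) - x i ∧ x (i+1) - x i ≤ U :=
    fun i h1 h2 => hgap1 i h1 (by omega)
  have hgap2' : ∀ i, n₁ + 1 ≤ i → i < n → L ≤ x (i+1) - x i ∧ x (i+1) - x i ≤ U :=
    fun i h1 h2 => hgap2 i h1 (by omega)
  have hmono : ∀ a b : ℕ, 1 ≤ a → a ≤ b → b ≤ n → x a ≤ x b := by
    intro a b h1 hab hbn
    have h := lin_low x 0 a b hab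
      (fun i hi hib => by have := hx i (h1.trans hi) (by omega); linarith)
    simpa using h
  have hsmono : ∀ a b : ℕ, 1 ≤ a → a < b → b ≤ n → x a < x b := by
    intro a b h1 hab hbn
    have h2 : x a < x (a+1) := hx a h1 (by omega)
    have h3 : x (a+1) ≤ x b := hmono (a+1) b (by omega) (by omega) hbn
    linarith
  have hxjn₁ : x j ≤ x n₁ := hmono j n₁ hj1 hjn₁ (by omega)
  have hGj : 42 * κ ^ 2 * (n₁:ℝ) ^ 2 * U ≤ x (n₁+1) - x j := by linarith [hbig]
  have hGpos : (0:ℝ) < 42 * κ ^ 2 * (n₁:ℝ) ^ 2 * U := by positivity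
  have hGjpos : 0 < x (n₁+1) - x j := lt_of_lt_of_le hGpos hGj
  have hDlow : ((n₀:ℝ) - 1) * L ≤ x n - x (n₁+1) := by
    have h := lin_low x L (n₁+1) n (by omega) (fun i hi hin => (hgap2' i hi hin).1)
    have hcast : ((n:ℕ):ℝ) - ((n₁+1:ℕ):ℝ) = (n₀:ℝ) - 1 := by
      rw [hndef]; push_cast; ring
    rw [hcast] at h
    exact h
  have hn₀R2 : (2:ℝ) ≤ (n₀:ℝ) := by exact_mod_cast hn₀2
  have hDpos : 0 < x n - x (n₁+1) := by
    have h := mul_pos (show (0:ℝ) < (n₀:ℝ) - 1 by linarith) hL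
    linarith
  have hD42 : 42 * κ ^ 2 * (n₁:ℝ) ^ 2 * U ≤ x n - x (n₁+1) := by
    have h1 : 42 * κ ^ 2 * (n₁:ℝ) ^ 2 * U ≤ 42 * κ ^ 2 * (n₁:ℝ) ^ 2 * (κ * L) := by
      apply mul_le_mul_of_nonneg_left hUκL (by positivity)
    have h1' : 42 * κ ^ 2 * (n₁:ℝ) ^ 2 * (κ * L) = 42 * κ ^ 3 * (n₁:ℝ) ^ 2 * L := by ring
    have h2 : 42 * κ ^ 3 * (n₁:ℝ) ^ 2 ≤ (n₀:ℝ) - 1 := by linarith [hK1, hn₀R]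
    have h3 : 42 * κ ^ 3 * (n₁:ℝ) ^ 2 * L ≤ ((n₀:ℝ) - 1) * L :=
      mul_le_mul_of_nonneg_right h2 hL.le
    linarith
  have hlogκn₁ : 0 ≤ Real.log (κ * (n₁:ℝ)) := Real.log_nonneg hκn₁
  have hIcc : ∀ a b : ℕ, Finset.Icc (a+1) b = Finset.Ioc a b := by
    intro a b; ext m; simp
  -- log(n₁ U) - log L ≤ log(κ n₁)
  have hlogstep : Real.log ((n₁:ℝ) * U) - Real.log L ≤ Real.log (κ * (n₁:ℝ)) := by
    have hpos : (0:ℝ) < (n₁:ℝ) * U := by positivity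
    rw [← Real.log_div (ne_of_gt hpos) (ne_of_gt hL)]
    apply Real.log_le_log (by positivity)
    rw [div_le_iff₀ hL]
    have h := mul_le_mul_of_nonneg_left hUκL (show (0:ℝ) ≤ (n₁:ℝ) by positivity)
    nlinarith [h]
  have hIcc2 : ∀ b : ℕ, Finset.Icc 2 b = Finset.Ioc 1 b := by
    intro b; ext m; simp; omega
  -- ===== anomaly upper bound =====
  have hS1 : ∑ m ∈ Finset.Ioc 1 j, (x m - x (m - 1)) / (x j - x (m - 1)) ≤
      1 + Real.log (κ * (n₁:ℝ)) := by
    rcases eq_or_lt_of_le hj1 with h | h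
    · rw [← h]; simp; linarith
    · obtain ⟨k, rfl⟩ : ∃ k, j = k + 1 := ⟨j - 1, by omega⟩
      have hk : 1 ≤ k := by omega
      rw [Finset.sum_Ioc_succ_top hk]
      have hgapk := hgap1' k hk (by omega)
      have hposk : 0 < x (k+1) - x k := lt_of_lt_of_le hL hgapk.1
      have hlast : (x (k+1) - x (k+1-1)) / (x (k+1) - x (k+1-1)) = 1 := by
        simp only [Nat.add_sub_cancel]
        exact div_self (ne_of_gt hposk)
      have hyp : ∀ m, 1 ≤ m → m < k →
          0 < x (k+1) - x (m+1) ∧ x (k+1) - x (m+1) ≤ x (k+1) - x m := by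
        intro m hm hmk
        constructor
        · have := hsmono (m+1) (k+1) (by omega) (by omega) (by omega)
          linarith
        · have := hmono m (m+1) (by omega) (by omega) (by omega)
          linarith
      have hsum := sum_up_left (fun m => x (k+1) - x m) 1 k hk hyp
      have heq : ∀ m ∈ Finset.Ioc 1 k,
          (x m - x (m - 1)) / (x (k+1) - x (m - 1)) =
          ((x (k+1) - x (m - 1)) - (x (k+1) - x m)) / (x (k+1) - x (m - 1)) := by
        intro m hm; ring_nf
      rw [Finset.sum_congr rfl heq]
      have hub : x (k+1) - x 1 ≤ (n₁:ℝ) * U := by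
        have h2 := lin_up x U 1 (k+1) (by omega)
          (fun i hi hik => (hgap1' i hi (by omega)).2)
        have h3 : ((k+1:ℕ):ℝ) - ((1:ℕ):ℝ) ≤ (n₁:ℝ) := by
          push_cast
          have : (k:ℝ) ≤ (n₁:ℝ) := by exact_mod_cast (by omega : k ≤ n₁)
          linarith
        nlinarith [h2, h3, hU]
      have hposk1 : 0 < x (k+1) - x 1 := by
        have := hsmono 1 (k+1) le_rfl (by omega) (by omega); linarith
      have hlog1 : Real.log (x (k+1) - x 1) ≤ Real.log ((n₁:ℝ)*U) :=
        Real.log_le_log hposk1 hub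
      have hlog2 : Real.log L ≤ Real.log (x (k+1) - x k) := Real.log_le_log hL hgapk.1
      linarith [hsum, hlogstep]
  have hPA : ∑ m ∈ Finset.Ioc j n₁, (x m - x (m - 1)) / (x m - x j) ≤
      1 + Real.log (κ * (n₁:ℝ)) := by
    rcases eq_or_lt_of_le hjn₁ with h | h
    · rw [h]; simp; linarith
    · have e1 := Finset.sum_Ioc_consecutive (fun m => (x m - x (m - 1)) / (x m - x j))
        (show j ≤ j+1 by omega) (show j+1 ≤ n₁ by omega)
      have e2 : ∑ m ∈ Finset.Ioc j (j+1), (x m - x (m - 1)) / (x m - x j) =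
          (x (j+1) - x j) / (x (j+1) - x j) := by
        rw [Finset.sum_Ioc_succ_top le_rfl]
        simp
      have hgapj := hgap1' j hj1 h
      have hposj : 0 < x (j+1) - x j := lt_of_lt_of_le hL hgapj.1
      have e3 : (x (j+1) - x j) / (x (j+1) - x j) = 1 := div_self (ne_of_gt hposj)
      have hyp : ∀ m, j+1 ≤ m → m < n₁ →
          0 < x m - x j ∧ x m - x j ≤ x (m+1) - x j := by
        intro m hm hmn
        constructor
        · have := hsmono j m hj1 (by omega) (by omega); linarith
        · have := hmono m (m+1) (by omega) (by omega) (by omega); linarith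
      have hsum := sum_up (fun m => x m - x j) (j+1) n₁ h hyp
      have heq : ∀ m ∈ Finset.Ioc (j+1) n₁,
          (x m - x j - (x (m - 1) - x j)) / (x m - x j) =
          (x m - x (m - 1)) / (x m - x j) := by
        intro m hm; ring_nf
      rw [Finset.sum_congr rfl heq] at hsum
      have hub : x n₁ - x j ≤ (n₁:ℝ) * U := by
        have h2 := lin_up x U j n₁ hjn₁
          (fun i hi hik => (hgap1' i (hj1.trans hi) hik).2)
        have h3 : ((n₁:ℕ):ℝ) - ((j:ℕ):ℝ) ≤ (n₁:ℝ) := by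
          have : (0:ℝ) ≤ (j:ℝ) := by positivity
          linarith
        nlinarith [h2, h3, hU]
      have hposn₁ : 0 < x n₁ - x j := by
        have := hsmono j n₁ hj1 h (by omega); linarith
      have hlog1 : Real.log (x n₁ - x j) ≤ Real.log ((n₁:ℝ)*U) :=
        Real.log_le_log hposn₁ hub
      have hlog2 : Real.log L ≤ Real.log (x (j+1) - x j) := Real.log_le_log hL hgapj.1
      linarith [hsum, hlogstep, e1, e2, e3]
  have hPm : ∑ m ∈ Finset.Ioc n₁ (n₁+1), (x m - x (m - 1)) / (x m - x j) ≤ 1 := by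
    rw [Finset.sum_Ioc_succ_top le_rfl]
    simp only [Finset.Ioc_self, Finset.sum_empty, Nat.add_sub_cancel, zero_add]
    rw [div_le_one hGjpos]
    linarith [hxjn₁]
  have hPB : ∑ m ∈ Finset.Ioc (n₁+1) n, (x m - x (m - 1)) / (x m - x j) ≤
      Real.log (x n - x j) - Real.log (x (n₁+1) - x j) := by
    have hyp : ∀ m, n₁+1 ≤ m → m < n →
        0 < x m - x j ∧ x m - x j ≤ x (m+1) - x j := by
      intro m hm hmn
      constructor
      · have := hsmono j m hj1 (by omega) (by omega); linarith
      · have := hmono m (m+1) (by omega) (by omega) (by omega); linarith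
    have hsum := sum_up (fun m => x m - x j) (n₁+1) n (by omega) hyp
    have heq : ∀ m ∈ Finset.Ioc (n₁+1) n,
        (x m - x j - (x (m - 1) - x j)) / (x m - x j) =
        (x m - x (m - 1)) / (x m - x j) := by
      intro m hm; ring_nf
    rw [Finset.sum_congr rfl heq] at hsum
    exact hsum
  have hanom : hbar x n j ≤ 3 + 2 * Real.log (κ * (n₁:ℝ)) +
      (Real.log (x n - x j) - Real.log (x (n₁+1) - x j)) := by
    simp only [hbar]
    rw [hIcc2 j, hIcc j n]
    have e1 := Finset.sum_Ioc_consecutive (fun m => (x m - x (m - 1)) / (x m - x j))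
      (show j ≤ n₁ from hjn₁) (show n₁ ≤ n by omega)
    have e2 := Finset.sum_Ioc_consecutive (fun m => (x m - x (m - 1)) / (x m - x j))
      (show n₁ ≤ n₁+1 by omega) (show n₁+1 ≤ n by omega)
    linarith [hS1, hPA, hPm, hPB, e1, e2]
  -- ===== normal lower bound =====
  have hxn₁j' : x (n₁+1) ≤ x j' := hmono (n₁+1) j' (by omega) hj'1 hj'n
  have hxj'n : x j' ≤ x n := hmono j' n (by omega) hj'n le_rfl
  have hLnorm : Real.log (x j' - x (n₁+1) + U) - Real.log U ≤
      ∑ m ∈ Finset.Ioc 1 j', (x m - x (m - 1)) / (x j' - x (m - 1)) := by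
    have e1 := Finset.sum_Ioc_consecutive
      (fun m => (x m - x (m - 1)) / (x j' - x (m - 1)))
      (show (1:ℕ) ≤ n₁+1 by omega) (show n₁+1 ≤ j' from hj'1)
    have hnn : 0 ≤ ∑ m ∈ Finset.Ioc 1 (n₁+1), (x m - x (m - 1)) / (x j' - x (m - 1)) := by
      apply Finset.sum_nonneg
      intro m hm
      simp only [Finset.mem_Ioc] at hm
      apply div_nonneg
      · have := hmono (m-1) m (by omega) (by omega) (by omega); linarith
      · have := hmono (m-1) j' (by omega) (by omega) hj'n; linarith
    have hyp : ∀ m, n₁+1 ≤ m → m < j' →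
        0 ≤ x j' - x (m+1) ∧ x j' - x (m+1) < x j' - x m ∧
          x j' - x m ≤ x j' - x (m+1) + U := by
      intro m hm hmj
      refine ⟨?_, ?_, ?_⟩
      · have := hmono (m+1) j' (by omega) (by omega) hj'n; linarith
      · have := hx m (by omega) (by omega); linarith
      · have := (hgap2' m hm (by omega)).2; linarith
    have hsum := sum_low_left (fun m => x j' - x m) U hU (n₁+1) j' hj'1 hyp
    have heq : ∀ m ∈ Finset.Ioc (n₁+1) j',
        (x j' - x (m - 1) - (x j' - x m)) / (x j' - x (m - 1)) =
        (x m - x (m - 1)) / (x j' - x (m - 1)) := by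
      intro m hm; ring_nf
    rw [Finset.sum_congr rfl heq] at hsum
    have hzero : x j' - x j' + U = U := by ring
    rw [hzero] at hsum
    linarith [hsum, hnn, e1]
  have hRnorm : Real.log (x n - x j' + U) - Real.log U ≤
      ∑ m ∈ Finset.Ioc j' n, (x m - x (m - 1)) / (x m - x j') := by
    have hyp : ∀ m, j' ≤ m → m < n →
        0 ≤ x m - x j' ∧ x m - x j' < x (m+1) - x j' ∧
          x (m+1) - x j' ≤ x m - x j' + U := by
      intro m hm hmn
      refine ⟨?_, ?_, ?_⟩
      · have := hmono j' m (by omega) hm (by omega); linarith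
      · have := hx m (by omega) hmn; linarith
      · have := (hgap2' m (by omega) hmn).2; linarith
    have hsum := sum_low (fun m => x m - x j') U hU j' n hj'n hyp
    have heq : ∀ m ∈ Finset.Ioc j' n,
        (x m - x j' - (x (m - 1) - x j')) / (x m - x j') =
        (x m - x (m - 1)) / (x m - x j') := by
      intro m hm; ring_nf
    rw [Finset.sum_congr rfl heq] at hsum
    have hzero : x j' - x j' + U = U := by ring
    rw [hzero] at hsum
    exact hsum
  have hnorm : (Real.log (x j' - x (n₁+1) + U) - Real.log U) +
      (Real.log (x n - x j' + U) - Real.log U) ≤ hbar x n j' := by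
    simp only [hbar]
    rw [hIcc2 j', hIcc j' n]
    linarith [hLnorm, hRnorm]
  -- ===== final comparison =====
  have hKnum : (1:ℝ) ≤ (κ * (n₁:ℝ))^2 := by nlinarith [hκn₁]
  have hK0 : (0:ℝ) < (κ * (n₁:ℝ))^2 := by positivity
  have hGq : 42 * (κ * (n₁:ℝ))^2 * U ≤ x (n₁+1) - x j := by
    have e : 42 * (κ * (n₁:ℝ))^2 * U = 42 * κ^2 * (n₁:ℝ)^2 * U := by ring
    linarith [hGj, e.le, e.ge]
  have hGqpos : (0:ℝ) < 42 * (κ * (n₁:ℝ))^2 * U := by positivity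
  have hDq : 42 * (κ * (n₁:ℝ))^2 * U ≤ x n - x (n₁+1) := by
    have e : 42 * (κ * (n₁:ℝ))^2 * U = 42 * κ^2 * (n₁:ℝ)^2 * U := by ring
    linarith [hD42, e.le, e.ge]
  have hxnj : 0 < x n - x j := by
    have := hsmono j n hj1 (by omega) le_rfl; linarith
  -- step 1 : tail of anomaly vs reference
  have hstep1 : Real.log (x n - x j) - Real.log (x (n₁+1) - x j) ≤
      Real.log (42 * (κ * (n₁:ℝ))^2 * U + (x n - x (n₁+1))) -
        Real.log (42 * (κ * (n₁:ℝ))^2 * U) := by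
    rw [← Real.log_div (ne_of_gt hxnj) (ne_of_gt hGjpos),
        ← Real.log_div (ne_of_gt (by linarith : (0:ℝ) < 42 * (κ * (n₁:ℝ))^2 * U + (x n - x (n₁+1)))) (ne_of_gt hGqpos)]
    apply Real.log_le_log (by positivity)
    rw [div_le_div_iff₀ hGjpos hGqpos]
    have hxx : x n - x j = (x (n₁+1) - x j) + (x n - x (n₁+1)) := by ring
    nlinarith [mul_le_mul_of_nonneg_left hGq hDpos.le]
  -- step 2 : reference vs normal
  have hstep2 : Real.log ((x n - x (n₁+1)) + U) - Real.log U ≤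
      (Real.log (x j' - x (n₁+1) + U) - Real.log U) +
      (Real.log (x n - x j' + U) - Real.log U) := by
    have hA : 0 ≤ x j' - x (n₁+1) := by linarith
    have hB : 0 ≤ x n - x j' := by linarith
    have hAU : 0 < x j' - x (n₁+1) + U := by linarith
    have hBU : 0 < x n - x j' + U := by linarith
    have hDU : 0 < (x n - x (n₁+1)) + U := by linarith
    have hprod : ((x n - x (n₁+1)) + U) * U ≤ (x j' - x (n₁+1) + U) * (x n - x j' + U) := by
      nlinarith [mul_nonneg hA hB]
    have h1 : Real.log ((x j' - x (n₁+1) + U) * (x n - x j' + U)) =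
        Real.log (x j' - x (n₁+1) + U) + Real.log (x n - x j' + U) :=
      Real.log_mul (ne_of_gt hAU) (ne_of_gt hBU)
    have h2 : Real.log (((x n - x (n₁+1)) + U) * U) =
        Real.log ((x n - x (n₁+1)) + U) + Real.log U :=
      Real.log_mul (ne_of_gt hDU) (ne_of_gt hU)
    have h3 := Real.log_le_log (by positivity) hprod
    linarith [h1, h2, h3]
  -- step 3 : the strict numeric gap
  have haux : ∀ K d u : ℝ, 1 ≤ K → 0 < u → 42*K*u ≤ d →
      21*K*(42*K*u + d)*u ≤ (d + u)*(42*K*u) := by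
    intro K d u hK hu hd
    nlinarith [mul_nonneg (mul_nonneg (by linarith : (0:ℝ) ≤ K) hu.le)
        (by linarith : (0:ℝ) ≤ d - 42*K*u),
      mul_pos (mul_pos (show (0:ℝ) < K by linarith) hu) hu]
  have hineq := haux ((κ * (n₁:ℝ))^2) (x n - x (n₁+1)) U hKnum hU hDq
  have hstep3 : 3 + 2 * Real.log (κ * (n₁:ℝ)) +
      (Real.log (42 * (κ * (n₁:ℝ))^2 * U + (x n - x (n₁+1))) -
        Real.log (42 * (κ * (n₁:ℝ))^2 * U)) <
      Real.log ((x n - x (n₁+1)) + U) - Real.log U := by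
    have h21 := three_lt_log21
    have hlogsq : Real.log ((κ * (n₁:ℝ))^2) = 2 * Real.log (κ * (n₁:ℝ)) := by
      rw [Real.log_pow]; push_cast; ring
    have hGD : (0:ℝ) < 42 * (κ * (n₁:ℝ))^2 * U + (x n - x (n₁+1)) := by linarith
    have hc1 : Real.log (21 * ((κ * (n₁:ℝ))^2) *
        ((42 * (κ * (n₁:ℝ))^2 * U + (x n - x (n₁+1))) * U)) =
        Real.log 21 + Real.log ((κ * (n₁:ℝ))^2) +
          (Real.log (42 * (κ * (n₁:ℝ))^2 * U + (x n - x (n₁+1))) + Real.log U) := by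
      rw [Real.log_mul (by positivity) (by positivity),
          Real.log_mul (by norm_num) (by positivity),
          Real.log_mul (ne_of_gt hGD) (ne_of_gt hU)]
    have hc2 : Real.log (((x n - x (n₁+1)) + U) * (42 * (κ * (n₁:ℝ))^2 * U)) =
        Real.log ((x n - x (n₁+1)) + U) + Real.log (42 * (κ * (n₁:ℝ))^2 * U) := by
      rw [Real.log_mul (by positivity) (ne_of_gt hGqpos)]
    have hmain : Real.log (21 * ((κ * (n₁:ℝ))^2) *
        ((42 * (κ * (n₁:ℝ))^2 * U + (x n - x (n₁+1))) * U)) ≤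
        Real.log (((x n - x (n₁+1)) + U) * (42 * (κ * (n₁:ℝ))^2 * U)) := by
      apply Real.log_le_log (by positivity)
      nlinarith [hineq]
    linarith [h21, hlogsq, hc1, hc2, hmain]
  linarith [hanom, hnorm, hstep1, hstep2, hstep3]
end
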